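/- arXiv:0906.0139 — 8 statements merged into one kernel-verified Lean document; each statement's English description precedes it below -/
import Mathlib

section
/- The set of orthogonal projections in the 2n×2n complex matrices whose diagonal entries are all equal to 1/2 is path-connected. -/
/-!
Writing `p = (1 + X) / 2` identifies these projections with the Hermitian unitaries `X` with zero
diagonal. Fix a fixed-point-free involution `σ` of the indices; every such `X` can be joined to
the permutation matrix of `σ`, one pair of rows `r`, `σ r` at a time, by conjugating with
continuous unitary paths that keep the diagonal zero: diagonal phases, and real rotations in a
coordinate plane `(i, j)` once `X i j` is purely imaginary.

To resolve row `r`, its mass is pushed into column `c = σ r`. After a phase, a rotation in the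
plane `(c, k)` kills `X r k` as soon as `Re (X r c * X c k * X k r) = 0`. Rows `r` and `c` are
orthogonal, so these cycle products sum to zero over `k`; hence some `l` has a cycle product of
the opposite sign, and by the intermediate value theorem a rotation in the plane `(k, l)` first
makes the real part vanish. Once row `r` lives in column `c`, a phase makes that entry `1`, which
forces rows `r` and `c` to agree with the permutation matrix.
-/

open Complex Matrix

namespace HalfDiagonalProjection

lemma exists_sin_mul_add_cos_mul_eq_zero {x y : ℂ} (h : (y * star x).im = 0) :
    ∃ θ : ℝ, Real.sin θ * x + Real.cos θ * y = 0 := by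
  rcases eq_or_ne x 0 with rfl | hx
  · exact ⟨Real.pi / 2, by simp⟩
  set t : ℝ := (y * star x).re / Complex.normSq x
  have hy : y = t * x := by
    have hreal : y * star x = ((y * star x).re : ℂ) :=
      Complex.ext rfl (by rw [h, Complex.ofReal_im])
    have hnorm : (Complex.normSq x : ℂ) ≠ 0 := by exact_mod_cast (Complex.normSq_pos.mpr hx).ne'
    rw [Complex.ofReal_div, div_mul_eq_mul_div, eq_div_iff hnorm, ← hreal, ← Complex.mul_conj,
      ← Complex.star_def]
    ring
  refine ⟨Real.arctan (-t), ?_⟩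
  rw [hy, Real.sin_arctan, Real.cos_arctan]
  push_cast
  ring

lemma exists_norm_eq_one_re_mul_eq_zero_im_mul_eq_zero {a w : ℂ} (h : (w * star a).re = 0) :
    ∃ e : ℂ, ‖e‖ = 1 ∧ (e * a).re = 0 ∧ (e * w).im = 0 := by
  rcases eq_or_ne a 0 with rfl | ha
  · obtain ⟨e, he, hw⟩ := Complex.exists_norm_eq_mul_self w
    exact ⟨e, he, by simp, by rw [← hw, Complex.ofReal_im]⟩
  -- `e = conj a / ‖a‖`, so `I * e * w` is `I` times a real multiple of `w * conj a`
  obtain ⟨e, he, hae⟩ := Complex.exists_norm_eq_mul_self a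
  refine ⟨I * e, by simp [he], by rw [mul_assoc, ← hae]; simp, ?_⟩
  have key : e * w * (‖a‖ : ℂ) = w * star a := by
    have hconj : (‖a‖ : ℂ) = star e * star a := by
      rw [← star_mul', ← hae, Complex.star_def, Complex.conj_ofReal]
    have hee : e * star e = 1 := by
      rw [Complex.star_def, Complex.mul_conj', he]; norm_num
    rw [hconj]
    linear_combination (w * star a) * hee
  have hre : (e * w).re * ‖a‖ = 0 := by
    rw [← Complex.re_mul_ofReal, key, h]
  rw [mul_assoc, Complex.I_mul_im]
  exact (mul_eq_zero.mp hre).resolve_right (norm_ne_zero_iff.mpr ha)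

lemma exists_mem_Icc_eq_zero_of_mul_nonpos {f : ℝ → ℝ} {a b : ℝ} (hab : a ≤ b)
    (hf : ContinuousOn f (Set.Icc a b)) (h : f a * f b ≤ 0) : ∃ x ∈ Set.Icc a b, f x = 0 := by
  rcases mul_nonpos_iff.mp h with ⟨ha, hb⟩ | ⟨ha, hb⟩
  · exact intermediate_value_Icc' hab hf ⟨hb, ha⟩
  · exact intermediate_value_Icc hab hf ⟨ha, hb⟩

lemma exists_ne_mul_nonpos_of_sum_eq_zero {α : Type*} {s : Finset α} {f : α → ℝ}
    (hs : ∑ i ∈ s, f i = 0) {k : α} (hk : k ∈ s) (hfk : f k ≠ 0) :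
    ∃ l ∈ s, l ≠ k ∧ f k * f l ≤ 0 := by
  by_contra! h
  have hpos : 0 < ∑ l ∈ s, f k * f l := Finset.sum_pos (fun l hl => by
    rcases eq_or_ne l k with rfl | hlk
    · exact mul_self_pos.mpr hfk
    · exact h l hl hlk) ⟨k, hk⟩
  rw [← Finset.mul_sum, hs, mul_zero] at hpos
  exact lt_irrefl 0 hpos

section DecidableEq

variable {ι : Type*} [DecidableEq ι]

def EqOneOff (u : Matrix ι ι ℂ) (W : Finset ι) : Prop :=
  ∀ p q, (p ∉ W ∨ q ∉ W) → u p q = (1 : Matrix ι ι ℂ) p q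

lemma EqOneOff.one (W : Finset ι) : EqOneOff (1 : Matrix ι ι ℂ) W := fun _ _ _ => rfl

lemma EqOneOff.mono {u : Matrix ι ι ℂ} {W W' : Finset ι} (h : EqOneOff u W) (hW : W ⊆ W') :
    EqOneOff u W' :=
  fun p q hpq => h p q (hpq.imp (mt (@hW p)) (mt (@hW q)))

noncomputable def givens (i j : ι) (θ : ℝ) : Matrix ι ι ℂ := Matrix.of fun p q =>
  if p = i then (if q = i then (Real.cos θ : ℂ) else if q = j then -(Real.sin θ : ℂ) else 0)
  else if p = j then (if q = i then (Real.sin θ : ℂ) else if q = j then (Real.cos θ : ℂ) else 0)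
  else (1 : Matrix ι ι ℂ) p q

lemma givens_zero (i j : ι) : givens i j 0 = 1 := by
  ext p q
  simp only [givens, of_apply, Real.cos_zero, Real.sin_zero, one_apply]
  split_ifs <;> simp_all

lemma continuous_givens (i j : ι) : Continuous (givens i j) := by
  refine continuous_pi fun p => continuous_pi fun q => ?_
  simp only [givens, of_apply]
  split_ifs <;> fun_prop

lemma eqOneOff_givens (i j : ι) (θ : ℝ) : EqOneOff (givens i j θ) {i, j} := by
  intro p q hpq
  simp only [Finset.mem_insert, Finset.mem_singleton, not_or] at hpq
  rcases hpq with ⟨hpi, hpj⟩ | ⟨hqi, hqj⟩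
  · simp [givens, hpi, hpj]
  rcases eq_or_ne p i with rfl | hpi
  · simp [givens, hqi, hqj, one_apply_ne (Ne.symm hqi)]
  rcases eq_or_ne p j with rfl | hpj
  · simp [givens, hqi, hqj, hpi, one_apply_ne (Ne.symm hqj)]
  · simp [givens, hpi, hpj]

lemma norm_mulSingle_eq_one (c : ι) {e : ℂ} (he : ‖e‖ = 1) (i : ι) :
    ‖Pi.mulSingle (M := fun _ => ℂ) c e i‖ = 1 := by
  rcases eq_or_ne i c with rfl | h
  · rwa [Pi.mulSingle_eq_same]
  · rw [Pi.mulSingle_eq_of_ne h, norm_one]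

lemma permMatrix_apply_eq_ite (σ : Equiv.Perm ι) (p q : ι) :
    σ.permMatrix ℂ p q = if σ p = q then 1 else 0 := by
  simp [Equiv.Perm.permMatrix, PEquiv.toMatrix_apply]

end DecidableEq

variable {ι : Type*} [Fintype ι] [DecidableEq ι]

def zeroDiagSymmetries (ι : Type*) [Fintype ι] [DecidableEq ι] : Set (Matrix ι ι ℂ) :=
  {A | A.IsHermitian ∧ A * A = 1 ∧ ∀ i, A i i = 0}

lemma setOf_projection_diag_half_eq_image :
    {p : Matrix ι ι ℂ | p * p = p ∧ pᴴ = p ∧ ∀ i, p i i = 1 / 2} =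
      (fun X => (1 / 2 : ℂ) • (1 + X)) '' zeroDiagSymmetries ι := by
  ext P
  constructor
  · rintro ⟨hPP, hPH, hPd⟩
    refine ⟨P + P - 1, ⟨?_, ?_, fun i => ?_⟩, ?_⟩
    · rw [IsHermitian, conjTranspose_sub, conjTranspose_add, hPH, conjTranspose_one]
    · calc (P + P - 1) * (P + P - 1) = 4 • (P * P) - 4 • P + 1 := by noncomm_ring
        _ = 1 := by rw [hPP, sub_self, zero_add]
    · simp [hPd]
      norm_num
    · simp only [add_sub_cancel, ← two_smul ℂ P, smul_smul]
      norm_num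
  · rintro ⟨X, ⟨hXH, hXX, hXd⟩, rfl⟩
    refine ⟨?_, ?_, fun i => by simp [hXd]⟩
    · have hsq : (1 + X) * (1 + X) = (2 : ℂ) • (1 + X) := by
        calc (1 + X) * (1 + X) = 1 + X + X + X * X := by noncomm_ring
          _ = (2 : ℂ) • (1 + X) := by rw [hXX, two_smul]; abel
      rw [smul_mul_smul_comm, hsq, smul_smul]
      norm_num
    · rw [conjTranspose_smul, conjTranspose_add, conjTranspose_one, hXH.eq]
      norm_num

lemma conj_mem_zeroDiagSymmetries {A u : Matrix ι ι ℂ} (hA : A ∈ zeroDiagSymmetries ι)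
    (hu : u * uᴴ = 1) (hdiag : ∀ i, (u * A * uᴴ) i i = 0) :
    u * A * uᴴ ∈ zeroDiagSymmetries ι := by
  have hu' : uᴴ * u = 1 := mul_eq_one_comm.mp hu
  refine ⟨isHermitian_mul_mul_conjTranspose u hA.1, ?_, hdiag⟩
  calc u * A * uᴴ * (u * A * uᴴ) = u * (A * (uᴴ * u) * A) * uᴴ := by
        simp only [Matrix.mul_assoc]
    _ = 1 := by rw [hu', Matrix.mul_one, hA.2.1, Matrix.mul_one, hu]

lemma joinedIn_conj {A : Matrix ι ι ℂ} (hA : A ∈ zeroDiagSymmetries ι)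
    {u : ℝ → Matrix ι ι ℂ} (hcont : Continuous u) (hu0 : u 0 = 1)
    (hunit : ∀ t, u t * (u t)ᴴ = 1) (hdiag : ∀ t i, (u t * A * (u t)ᴴ) i i = 0) :
    JoinedIn (zeroDiagSymmetries ι) A (u 1 * A * (u 1)ᴴ) :=
  JoinedIn.ofLine (f := fun t => u t * A * (u t)ᴴ) (by fun_prop) (by simp [hu0]) rfl <| by
    rintro _ ⟨t, -, rfl⟩
    exact conj_mem_zeroDiagSymmetries hA (hunit t) (hdiag t)

namespace EqOneOff

variable {u v : Matrix ι ι ℂ} {W : Finset ι}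

lemma mul_apply_of_row (hu : EqOneOff u W) {p : ι} (hp : p ∉ W) (A : Matrix ι ι ℂ) (q : ι) :
    (u * A) p q = A p q := by
  rw [mul_apply]
  simp_rw [hu p _ (Or.inl hp)]
  rw [← mul_apply, Matrix.one_mul]

lemma mul_apply_of_col (hu : EqOneOff u W) {q : ι} (hq : q ∉ W) (A : Matrix ι ι ℂ) (p : ι) :
    (A * u) p q = A p q := by
  rw [mul_apply]
  simp_rw [hu _ q (Or.inr hq)]
  rw [← mul_apply, Matrix.mul_one]

lemma mul (hu : EqOneOff u W) (hv : EqOneOff v W) : EqOneOff (u * v) W := by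
  rintro p q (hp | hq)
  · rw [hu.mul_apply_of_row hp, hv p q (Or.inl hp)]
  · rw [hv.mul_apply_of_col hq, hu p q (Or.inr hq)]

lemma conj_apply_of_notMem (hu : EqOneOff u W) (A : Matrix ι ι ℂ) {p q : ι} (hp : p ∉ W)
    (hq : q ∉ W) : (u * A * uᴴ) p q = A p q := by
  have huH : EqOneOff uᴴ W := fun p q hpq => by
    rw [conjTranspose_apply, hu q p hpq.symm, ← conjTranspose_apply, conjTranspose_one]
  rw [huH.mul_apply_of_col hq, hu.mul_apply_of_row hp]

lemma conj_apply_of_row_eq_zero (hu : EqOneOff u W) {A : Matrix ι ι ℂ} {p : ι} (hp : p ∉ W)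
    (hrow : ∀ s ∈ W, A p s = 0) (q : ι) : (u * A * uᴴ) p q = A p q := by
  by_cases hq : q ∈ W
  · rw [mul_apply, hrow q hq]
    refine Finset.sum_eq_zero fun s _ => ?_
    by_cases hs : s ∈ W
    · rw [hu.mul_apply_of_row hp, hrow s hs, zero_mul]
    · rw [conjTranspose_apply, hu q s (Or.inr hs), one_apply_ne (by rintro rfl; exact hs hq),
        star_zero, mul_zero]
  · exact hu.conj_apply_of_notMem A hp hq

end EqOneOff

def ConjJoined (W : Finset ι) (A B : Matrix ι ι ℂ) : Prop :=
  JoinedIn (zeroDiagSymmetries ι) A B ∧ ∃ u, EqOneOff u W ∧ B = u * A * uᴴ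

namespace ConjJoined

variable {W W' : Finset ι} {A B C : Matrix ι ι ℂ}

lemma refl (hA : A ∈ zeroDiagSymmetries ι) (W : Finset ι) : ConjJoined W A A :=
  ⟨JoinedIn.refl hA, 1, EqOneOff.one W, by simp⟩

lemma trans (hAB : ConjJoined W A B) (hBC : ConjJoined W B C) : ConjJoined W A C := by
  obtain ⟨hAB, u, hu, rfl⟩ := hAB
  obtain ⟨hBC, v, hv, rfl⟩ := hBC
  refine ⟨hAB.trans hBC, v * u, hv.mul hu, ?_⟩
  simp only [conjTranspose_mul, Matrix.mul_assoc]

lemma mono (h : ConjJoined W A B) (hW : W ⊆ W') : ConjJoined W' A B :=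
  ⟨h.1, h.2.imp fun _ hu => ⟨hu.1.mono hW, hu.2⟩⟩

lemma target_mem (h : ConjJoined W A B) : B ∈ zeroDiagSymmetries ι := h.1.target_mem

lemma apply_of_notMem (h : ConjJoined W A B) {p q : ι} (hp : p ∉ W) (hq : q ∉ W) :
    B p q = A p q := by
  obtain ⟨-, u, hu, rfl⟩ := h
  exact hu.conj_apply_of_notMem A hp hq

lemma apply_of_row_eq_zero (h : ConjJoined W A B) {p : ι} (hp : p ∉ W)
    (hrow : ∀ s ∈ W, A p s = 0) (q : ι) : B p q = A p q := by
  obtain ⟨-, u, hu, rfl⟩ := h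
  exact hu.conj_apply_of_row_eq_zero hp hrow q

end ConjJoined

lemma diagonal_conj_apply (d : ι → ℂ) (A : Matrix ι ι ℂ) (p q : ι) :
    (diagonal d * A * (diagonal d)ᴴ) p q = d p * A p q * star (d q) := by
  simp [diagonal_conjTranspose, mul_diagonal, diagonal_mul]

lemma diagonal_mul_conjTranspose_self {d : ι → ℂ} (hd : ∀ i, ‖d i‖ = 1) :
    diagonal d * (diagonal d)ᴴ = 1 := by
  rw [diagonal_conjTranspose, diagonal_mul_diagonal, ← diagonal_one]
  congr 1
  ext i
  simp [Complex.mul_conj', hd i]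

lemma ConjJoined.diagonal_conj {A : Matrix ι ι ℂ} (hA : A ∈ zeroDiagSymmetries ι)
    {W : Finset ι} {d : ι → ℂ} (hd : ∀ i, ‖d i‖ = 1) (hdW : ∀ i ∉ W, d i = 1) :
    ConjJoined W A (diagonal d * A * (diagonal d)ᴴ) := by
  set u : ℝ → Matrix ι ι ℂ := fun t => diagonal fun i => exp ((t * arg (d i) : ℝ) * I)
  have hu1 : u 1 = diagonal d := by
    simp only [u, one_mul]
    congr 1
    ext i
    simpa [hd i] using norm_mul_exp_arg_mul_I (d i)
  refine ⟨hu1 ▸ joinedIn_conj hA (by fun_prop) (by simp [u]) ?_ ?_, diagonal d, ?_, rfl⟩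
  · exact fun t => diagonal_mul_conjTranspose_self fun i => norm_exp_ofReal_mul_I _
  · intro t i
    rw [diagonal_conj_apply, hA.2.2 i, mul_zero, zero_mul]
  · intro p q hpq
    by_cases h : p = q
    · subst h
      simp [hdW p (by tauto)]
    · simp [h]

lemma mulSingle_conj_apply (c : ι) (e : ℂ) (A : Matrix ι ι ℂ) (p q : ι) :
    (diagonal (Pi.mulSingle c e) * A * (diagonal (Pi.mulSingle c e))ᴴ) p q =
      (if p = c then e else 1) * A p q * star (if q = c then e else 1) := by
  rw [diagonal_conj_apply, Pi.mulSingle_apply, Pi.mulSingle_apply]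

lemma ConjJoined.mulSingle_conj {A : Matrix ι ι ℂ} (hA : A ∈ zeroDiagSymmetries ι) (c : ι)
    {e : ℂ} (he : ‖e‖ = 1) :
    ConjJoined {c} A (diagonal (Pi.mulSingle c e) * A * (diagonal (Pi.mulSingle c e))ᴴ) :=
  ConjJoined.diagonal_conj hA (norm_mulSingle_eq_one c he) fun i hi =>
    Pi.mulSingle_eq_of_ne (M := fun _ => ℂ) (by simpa using hi) e

section givens

variable {i j : ι} (θ : ℝ) (A : Matrix ι ι ℂ)

lemma givens_mul_apply (hij : i ≠ j) (p q : ι) :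
    (givens i j θ * A) p q =
      if p = i then Real.cos θ * A i q - Real.sin θ * A j q
      else if p = j then Real.sin θ * A i q + Real.cos θ * A j q
      else A p q := by
  rw [mul_apply]
  split_ifs with hi hj
  · rw [Fintype.sum_eq_add i j hij (by rintro x ⟨hxi, hxj⟩; simp [givens, hi, hxi, hxj])]
    simp [givens, hi, hij.symm, sub_eq_add_neg]
  · rw [Fintype.sum_eq_add i j hij (by rintro x ⟨hxi, hxj⟩; simp [givens, hj, hxi, hxj, hij.symm])]
    simp [givens, hj, hij.symm]
  · rw [Fintype.sum_eq_single p (fun x hx => by simp [givens, hi, hj, hx.symm])]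
    simp [givens, hi, hj]

lemma mul_givens_conjTranspose_apply (hij : i ≠ j) (p q : ι) :
    (A * (givens i j θ)ᴴ) p q =
      if q = i then Real.cos θ * A p i - Real.sin θ * A p j
      else if q = j then Real.sin θ * A p i + Real.cos θ * A p j
      else A p q := by
  have h := congrArg star (givens_mul_apply θ Aᴴ hij q p)
  rw [← conjTranspose_apply, conjTranspose_mul, conjTranspose_conjTranspose] at h
  rw [h]
  split_ifs <;>
    simp only [star_sub, star_add, star_mul', conjTranspose_apply, Complex.star_def,
      Complex.conj_ofReal, Complex.conj_conj, mul_comm]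

lemma givens_mul_conjTranspose_self (hij : i ≠ j) : givens i j θ * (givens i j θ)ᴴ = 1 := by
  ext p q
  rw [mul_givens_conjTranspose_apply θ _ hij]
  simp only [givens, of_apply, one_apply]
  split_ifs <;> simp_all <;>
    first | linear_combination | linear_combination Complex.cos_sq_add_sin_sq (θ : ℂ)

lemma givens_conj_apply_self_eq_zero {A : Matrix ι ι ℂ} (hA : A ∈ zeroDiagSymmetries ι)
    (hij : i ≠ j) (hre : (A i j).re = 0) (m : ι) :
    (givens i j θ * A * (givens i j θ)ᴴ) m m = 0 := by
  have hji : A j i = star (A i j) := (hA.1.apply j i).symm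
  have hsum : A i j + star (A i j) = 0 := by
    rw [Complex.star_def, Complex.add_conj, hre, mul_zero, Complex.ofReal_zero]
  by_cases hmi : m = i
  · subst hmi
    simp only [mul_givens_conjTranspose_apply θ _ hij, givens_mul_apply θ _ hij, if_true,
      hA.2.2, hji]
    linear_combination (-(Real.cos θ : ℂ) * Real.sin θ) * hsum
  by_cases hmj : m = j
  · subst hmj
    simp only [mul_givens_conjTranspose_apply θ _ hij, givens_mul_apply θ _ hij, if_true,
      hA.2.2, hji, hij.symm, if_false]
    linear_combination ((Real.cos θ : ℂ) * Real.sin θ) * hsum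
  · have hm : m ∉ ({i, j} : Finset ι) := by simp [hmi, hmj]
    rw [(eqOneOff_givens i j θ).conj_apply_of_notMem A hm hm, hA.2.2]

end givens

lemma ConjJoined.givens_conj {A : Matrix ι ι ℂ} (hA : A ∈ zeroDiagSymmetries ι) {i j : ι}
    (hij : i ≠ j) (hre : (A i j).re = 0) (θ : ℝ) :
    ConjJoined {i, j} A (givens i j θ * A * (givens i j θ)ᴴ) := by
  refine ⟨?_, givens i j θ, eqOneOff_givens i j θ, rfl⟩
  simpa using joinedIn_conj hA ((continuous_givens i j).comp (continuous_id.mul continuous_const))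
    (by simp [givens_zero]) (fun t => givens_mul_conjTranspose_self _ hij)
    (fun t => givens_conj_apply_self_eq_zero _ hA hij hre)

def cycleProd (A : Matrix ι ι ℂ) (r c k : ι) : ℂ := A r c * A c k * A k r

lemma cycleProd_diagonal_conj {d : ι → ℂ} (hd : ∀ i, ‖d i‖ = 1) (A : Matrix ι ι ℂ)
    (r c k : ι) : cycleProd (diagonal d * A * (diagonal d)ᴴ) r c k = cycleProd A r c k := by
  have hd' : ∀ i, star (d i) * d i = 1 := fun i => by
    rw [Complex.star_def, mul_comm, Complex.mul_conj', hd i]; norm_num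
  simp only [cycleProd, diagonal_conj_apply]
  calc _ = A r c * A c k * A k r * (star (d r) * d r) * (star (d c) * d c) *
        (star (d k) * d k) := by ring
    _ = _ := by rw [hd', hd', hd', mul_one, mul_one, mul_one]

lemma cycleProd_givens_conj {i j r c : ι} (hij : i ≠ j) (hri : r ≠ i) (hrj : r ≠ j)
    (hci : c ≠ i) (hcj : c ≠ j) (θ : ℝ) (A : Matrix ι ι ℂ) :
    cycleProd (givens i j θ * A * (givens i j θ)ᴴ) r c i =
      A r c * (Real.cos θ * A c i - Real.sin θ * A c j) *
        (Real.cos θ * A i r - Real.sin θ * A j r) := by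
  simp only [cycleProd, mul_givens_conjTranspose_apply θ _ hij, givens_mul_apply θ _ hij,
    ↓reduceIte, if_neg hri, if_neg hrj, if_neg hci, if_neg hcj]

section moves

variable {A : Matrix ι ι ℂ} {r c k l : ι}

lemma ConjJoined.exists_apply_eq_zero_of_re_eq_zero (hA : A ∈ zeroDiagSymmetries ι)
    (hrc : r ≠ c) (hrk : r ≠ k) (hck : c ≠ k) (hre : (A c k).re = 0)
    (him : (A r k * star (A r c)).im = 0) : ∃ B, ConjJoined {c, k} A B ∧ B r k = 0 := by
  obtain ⟨θ, hθ⟩ := exists_sin_mul_add_cos_mul_eq_zero him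
  refine ⟨_, ConjJoined.givens_conj hA hck hre θ, ?_⟩
  simpa only [mul_givens_conjTranspose_apply θ _ hck, givens_mul_apply θ _ hck, if_neg hck.symm,
    if_neg hrc, if_neg hrk, ↓reduceIte] using hθ

lemma ConjJoined.exists_apply_eq_zero (hA : A ∈ zeroDiagSymmetries ι) (hrc : r ≠ c)
    (hrk : r ≠ k) (hck : c ≠ k) (hT : (cycleProd A r c k).re = 0) :
    ∃ B, ConjJoined {c, k} A B ∧ B r k = 0 := by
  have hstar : A r k * star (A r c) * star (A c k) = star (cycleProd A r c k) := by
    rw [cycleProd, ← (hA.1.apply k r), star_mul', star_mul', star_star]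
    ring
  obtain ⟨e, he, hre, him⟩ := exists_norm_eq_one_re_mul_eq_zero_im_mul_eq_zero
    (a := A c k) (w := A r k * star (A r c)) (by rwa [hstar, Complex.star_def, Complex.conj_re])
  have hAB := (ConjJoined.mulSingle_conj hA c he).mono (W' := {c, k}) (by simp)
  obtain ⟨C, hBC, hC⟩ := ConjJoined.exists_apply_eq_zero_of_re_eq_zero hAB.target_mem hrc hrk
    hck (by simpa [mulSingle_conj_apply, hck.symm] using hre)
    (by simpa [mulSingle_conj_apply, hrc, hrk, hck.symm, mul_comm, mul_left_comm] using him)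
  exact ⟨C, hAB.trans hBC, hC⟩

lemma ConjJoined.exists_re_cycleProd_eq_zero_of_re_eq_zero (hA : A ∈ zeroDiagSymmetries ι)
    (hrk : r ≠ k) (hrl : r ≠ l) (hck : c ≠ k) (hcl : c ≠ l) (hkl : k ≠ l)
    (hre : (A k l).re = 0) (hsign : (cycleProd A r c k).re * (cycleProd A r c l).re ≤ 0) :
    ∃ B, ConjJoined {k, l} A B ∧ (cycleProd B r c k).re = 0 := by
  set f : ℝ → ℝ := fun θ => (cycleProd (givens k l θ * A * (givens k l θ)ᴴ) r c k).re
  have hf : ∀ θ, f θ = (A r c * (Real.cos θ * A c k - Real.sin θ * A c l) *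
      (Real.cos θ * A k r - Real.sin θ * A l r)).re := fun θ =>
    congrArg Complex.re (cycleProd_givens_conj hkl hrk hrl hck hcl θ A)
  have hcont : Continuous f := by
    rw [funext hf]
    fun_prop
  -- at `θ = π / 2` the rotation replaces coordinate `k` by `-l`
  have hf0 : f 0 = (cycleProd A r c k).re := by simp [hf, cycleProd]
  have hfπ : f (Real.pi / 2) = (cycleProd A r c l).re := by simp [hf, cycleProd]
  obtain ⟨θ, -, hθ⟩ := exists_mem_Icc_eq_zero_of_mul_nonpos (by positivity)
    hcont.continuousOn (hf0 ▸ hfπ ▸ hsign)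
  exact ⟨_, ConjJoined.givens_conj hA hkl hre θ, hθ⟩

lemma ConjJoined.exists_re_cycleProd_eq_zero (hA : A ∈ zeroDiagSymmetries ι)
    (hrk : r ≠ k) (hrl : r ≠ l) (hck : c ≠ k) (hcl : c ≠ l) (hkl : k ≠ l)
    (hsign : (cycleProd A r c k).re * (cycleProd A r c l).re ≤ 0) :
    ∃ B, ConjJoined {k, l} A B ∧ (cycleProd B r c k).re = 0 := by
  obtain ⟨e, he, hre, -⟩ :=
    exists_norm_eq_one_re_mul_eq_zero_im_mul_eq_zero (a := A k l) (w := 0) (by simp)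
  have he' : ‖star e‖ = 1 := by rwa [norm_star]
  have hAB := (ConjJoined.mulSingle_conj hA l he').mono (W' := {k, l}) (by simp)
  simp only [← cycleProd_diagonal_conj (norm_mulSingle_eq_one l he') A] at hsign
  obtain ⟨C, hBC, hC⟩ := ConjJoined.exists_re_cycleProd_eq_zero_of_re_eq_zero hAB.target_mem
    hrk hrl hck hcl hkl (by simpa [mulSingle_conj_apply, hkl, mul_comm] using hre) hsign
  exact ⟨C, hAB.trans hBC, hC⟩

end moves

lemma sum_norm_sq_row_eq_one {A : Matrix ι ι ℂ} (hA : A ∈ zeroDiagSymmetries ι) (r : ι) :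
    ∑ l, ‖A r l‖ ^ 2 = 1 := by
  have h := congrFun (congrFun hA.2.1 r) r
  have hterm : ∀ l, A r l * A l r = ((‖A r l‖ ^ 2 : ℝ) : ℂ) := fun l => by
    rw [← hA.1.apply l r, Complex.star_def, Complex.mul_conj', Complex.ofReal_pow]
  rw [mul_apply, one_apply_eq, Finset.sum_congr rfl fun l _ => hterm l] at h
  exact_mod_cast h

lemma apply_eq_zero_of_apply_eq_one {A : Matrix ι ι ℂ} (hA : A ∈ zeroDiagSymmetries ι)
    {r c l : ι} (h : A r c = 1) (hlc : l ≠ c) : A r l = 0 := by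
  have hle : ‖A r c‖ ^ 2 + ‖A r l‖ ^ 2 ≤ 1 := by
    rw [← sum_norm_sq_row_eq_one hA r, ← Finset.sum_pair (f := fun l => ‖A r l‖ ^ 2) hlc.symm]
    exact Finset.sum_le_sum_of_subset_of_nonneg (Finset.subset_univ _) fun _ _ _ => by positivity
  rw [h, norm_one] at hle
  exact norm_eq_zero.mp (pow_eq_zero_iff two_ne_zero |>.mp (by linarith [sq_nonneg ‖A r l‖]))

section row

variable {A : Matrix ι ι ℂ} {r c : ι} {G : Finset ι}

lemma sum_cycleProd_eq_zero (hA : A ∈ zeroDiagSymmetries ι) (hrc : r ≠ c)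
    (hrow : ∀ l ∉ insert c G, A r l = 0) : ∑ l ∈ G, cycleProd A r c l = 0 := by
  rw [Finset.sum_subset (Finset.subset_univ G) fun l _ hl => ?_]
  · simp_rw [cycleProd, mul_assoc, ← Finset.mul_sum, ← mul_apply, hA.2.1, one_apply_ne hrc.symm,
      mul_zero]
  · rcases eq_or_ne l c with rfl | hlc
    · rw [cycleProd, hA.2.2, mul_zero, zero_mul]
    · rw [cycleProd, ← hA.1.apply l r, hrow l (by simp [hlc, hl]), star_zero, mul_zero]

lemma ConjJoined.exists_re_cycleProd_eq_zero_of_mem (hA : A ∈ zeroDiagSymmetries ι)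
    (hrc : r ≠ c) (hrG : r ∉ G) (hcG : c ∉ G) (hrow : ∀ l ∉ insert c G, A r l = 0) {k : ι}
    (hkG : k ∈ G) : ∃ B, ConjJoined G A B ∧ (cycleProd B r c k).re = 0 := by
  by_cases h0 : (cycleProd A r c k).re = 0
  · exact ⟨A, ConjJoined.refl hA G, h0⟩
  have hsum : ∑ l ∈ G, (cycleProd A r c l).re = 0 := by
    rw [← Complex.re_sum, sum_cycleProd_eq_zero hA hrc hrow, Complex.zero_re]
  obtain ⟨l, hlG, hlk, hsign⟩ := exists_ne_mul_nonpos_of_sum_eq_zero hsum hkG h0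
  have hne : ∀ {x}, x ∈ G → r ≠ x ∧ c ≠ x := fun hx =>
    ⟨fun h => hrG (h ▸ hx), fun h => hcG (h ▸ hx)⟩
  obtain ⟨B, hAB, hB⟩ := ConjJoined.exists_re_cycleProd_eq_zero hA (hne hkG).1 (hne hlG).1
    (hne hkG).2 (hne hlG).2 hlk.symm hsign
  exact ⟨B, hAB.mono (by simp [Finset.insert_subset_iff, hkG, hlG]), hB⟩

lemma ConjJoined.exists_row_eq_zero_erase (hA : A ∈ zeroDiagSymmetries ι) (hrc : r ≠ c)
    (hrG : r ∉ G) (hcG : c ∉ G) (hrow : ∀ l ∉ insert c G, A r l = 0) {k : ι} (hkG : k ∈ G) :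
    ∃ B, ConjJoined (insert c G) A B ∧ ∀ l ∉ insert c (G.erase k), B r l = 0 := by
  have hrk : r ≠ k := fun h => hrG (h ▸ hkG)
  have hck : c ≠ k := fun h => hcG (h ▸ hkG)
  obtain ⟨B, hAB, hB⟩ := ConjJoined.exists_re_cycleProd_eq_zero_of_mem hA hrc hrG hcG hrow hkG
  obtain ⟨C, hBC, hC⟩ := ConjJoined.exists_apply_eq_zero hAB.target_mem hrc hrk hck hB
  refine ⟨C, (hAB.mono (Finset.subset_insert c G)).trans
    (hBC.mono (by simp [Finset.insert_subset_iff, hkG])), fun l hl => ?_⟩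
  rcases eq_or_ne l k with rfl | hlk
  · exact hC
  have hl' : l ∉ insert c G := by simpa [hlk] using hl
  have hlc : l ≠ c := fun h => hl' (h ▸ Finset.mem_insert_self c G)
  have hlG : l ∉ G := fun h => hl' (Finset.mem_insert_of_mem h)
  rw [hBC.apply_of_notMem (by simp [hrc, hrk]) (by simp [hlc, hlk]),
    hAB.apply_of_notMem hrG hlG, hrow l hl']

lemma ConjJoined.exists_row_eq_zero (hA : A ∈ zeroDiagSymmetries ι) (hrc : r ≠ c)
    (hrG : r ∉ G) (hcG : c ∉ G) (hrow : ∀ l ∉ insert c G, A r l = 0) :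
    ∃ B, ConjJoined (insert c G) A B ∧ ∀ l ≠ c, B r l = 0 := by
  induction G using Finset.strongInduction generalizing A with
  | H G ih =>
  rcases G.eq_empty_or_nonempty with rfl | ⟨k, hkG⟩
  · exact ⟨A, ConjJoined.refl hA _, fun l hl => hrow l (by simpa using hl)⟩
  obtain ⟨B, hAB, hB⟩ := ConjJoined.exists_row_eq_zero_erase hA hrc hrG hcG hrow hkG
  obtain ⟨C, hBC, hC⟩ := ih (G.erase k) (Finset.erase_ssubset hkG)
    hAB.target_mem (fun h => hrG (Finset.mem_of_mem_erase h))
    (fun h => hcG (Finset.mem_of_mem_erase h)) hB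
  exact ⟨C, hAB.trans (hBC.mono (Finset.insert_subset_insert c (Finset.erase_subset k G))), hC⟩

lemma ConjJoined.exists_apply_eq_one (hA : A ∈ zeroDiagSymmetries ι) (hrc : r ≠ c)
    (hrG : r ∉ G) (hcG : c ∉ G) (hrow : ∀ l ∉ insert c G, A r l = 0) :
    ∃ B, ConjJoined (insert c G) A B ∧ B r c = 1 := by
  obtain ⟨B, hAB, hB⟩ := ConjJoined.exists_row_eq_zero hA hrc hrG hcG hrow
  have hnorm : ‖B r c‖ = 1 := by
    have h := sum_norm_sq_row_eq_one hAB.target_mem r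
    rw [Fintype.sum_eq_single c fun l hl => by rw [hB l hl, norm_zero, sq, mul_zero]] at h
    exact (pow_eq_one_iff_of_nonneg (norm_nonneg _) two_ne_zero).mp h
  have hBC := (ConjJoined.mulSingle_conj hAB.target_mem c hnorm).mono
    (Finset.singleton_subset_iff.mpr (Finset.mem_insert_self c G))
  refine ⟨_, hAB.trans hBC, ?_⟩
  rw [mulSingle_conj_apply, if_neg hrc, if_pos rfl, one_mul, Complex.star_def,
    Complex.mul_conj', hnorm]
  norm_num

end row

section permMatrix

variable {σ : Equiv.Perm ι}

lemma permMatrix_mem_zeroDiagSymmetries (hσ : Function.Involutive σ) (hfix : ∀ i, σ i ≠ i) :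
    σ.permMatrix ℂ ∈ zeroDiagSymmetries ι := by
  have hσσ : σ * σ = 1 := Equiv.ext hσ
  refine ⟨?_, ?_, fun i => by rw [permMatrix_apply_eq_ite, if_neg (hfix i)]⟩
  · rw [IsHermitian, conjTranspose_permMatrix, inv_eq_of_mul_eq_one_left hσσ]
  · rw [← permMatrix_mul, hσσ, permMatrix_one]

lemma row_eq_permMatrix_of_apply_eq_one {B : Matrix ι ι ℂ} (hB : B ∈ zeroDiagSymmetries ι)
    {p : ι} (h : B p (σ p) = 1) (q : ι) : B p q = σ.permMatrix ℂ p q := by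
  rw [permMatrix_apply_eq_ite]
  split_ifs with hq
  · rw [← hq, h]
  · exact apply_eq_zero_of_apply_eq_one hB h (Ne.symm hq)

lemma exists_joinedIn_rows_eq_permMatrix (hσ : Function.Involutive σ) (hfix : ∀ i, σ i ≠ i)
    {T : Finset ι} (hT : ∀ i ∈ T, σ i ∈ T) {r : ι} (hr : r ∈ T) {A : Matrix ι ι ℂ}
    (hA : A ∈ zeroDiagSymmetries ι) (hres : ∀ p ∉ T, ∀ q, A p q = σ.permMatrix ℂ p q) :
    ∃ B, JoinedIn (zeroDiagSymmetries ι) A B ∧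
      ∀ p ∉ (T.erase r).erase (σ r), ∀ q, B p q = σ.permMatrix ℂ p q := by
  have hoff : ∀ p ∉ T, ∀ q ∈ T, A p q = 0 := fun p hp q hq => by
    rw [hres p hp, permMatrix_apply_eq_ite, if_neg]
    rintro rfl
    exact hp (hσ p ▸ hT _ hq)
  set G := (T.erase r).erase (σ r)
  have hWT : insert (σ r) G ⊆ T :=
    Finset.insert_subset (hT r hr) ((Finset.erase_subset _ _).trans (Finset.erase_subset _ _))
  have hrow : ∀ l ∉ insert (σ r) G, A r l = 0 := fun l hl => by
    rw [← hA.1.apply r l]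
    by_cases hlT : l ∈ T
    · obtain rfl : l = r := by simp [G] at hl; tauto
      rw [hA.2.2, star_zero]
    · rw [hoff l hlT r hr, star_zero]
  obtain ⟨B, hAB, hB⟩ :=
    ConjJoined.exists_apply_eq_one hA (hfix r).symm (by simp [G]) (by simp [G]) hrow
  refine ⟨B, hAB.1, fun p hp q => ?_⟩
  by_cases hpT : p ∈ T
  · obtain rfl | rfl : p = r ∨ p = σ r := by simp [G] at hp; tauto
    · exact row_eq_permMatrix_of_apply_eq_one hAB.target_mem hB q
    · refine row_eq_permMatrix_of_apply_eq_one hAB.target_mem ?_ q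
      rw [hσ, ← hAB.target_mem.1.apply, hB, star_one]
  · rw [hAB.apply_of_row_eq_zero (fun h => hpT (hWT h)) (fun s hs => hoff p hpT s (hWT hs)),
      hres p hpT]

lemma joinedIn_permMatrix_of_rows_eq (hσ : Function.Involutive σ) (hfix : ∀ i, σ i ≠ i)
    (T : Finset ι) (hT : ∀ i ∈ T, σ i ∈ T) {A : Matrix ι ι ℂ} (hA : A ∈ zeroDiagSymmetries ι)
    (hres : ∀ p ∉ T, ∀ q, A p q = σ.permMatrix ℂ p q) :
    JoinedIn (zeroDiagSymmetries ι) A (σ.permMatrix ℂ) := by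
  induction T using Finset.strongInduction generalizing A with
  | H T ih =>
  rcases T.eq_empty_or_nonempty with rfl | ⟨r, hr⟩
  · obtain rfl : A = σ.permMatrix ℂ := Matrix.ext fun p q => hres p (Finset.notMem_empty p) q
    exact JoinedIn.refl hA
  obtain ⟨B, hAB, hB⟩ := exists_joinedIn_rows_eq_permMatrix hσ hfix hT hr hA hres
  have hT' : ∀ i ∈ (T.erase r).erase (σ r), σ i ∈ (T.erase r).erase (σ r) := fun i hi => by
    simp only [Finset.mem_erase] at hi ⊢
    exact ⟨fun h => hi.2.1 (hσ.injective h), fun h => hi.1 (by rw [← h, hσ]), hT i hi.2.2⟩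
  exact hAB.trans (ih _ ((Finset.erase_subset _ _).trans_ssubset (Finset.erase_ssubset hr)) hT'
    hAB.target_mem hB)

theorem isPathConnected_zeroDiagSymmetries (hσ : Function.Involutive σ)
    (hfix : ∀ i, σ i ≠ i) : IsPathConnected (zeroDiagSymmetries ι) :=
  ⟨σ.permMatrix ℂ, permMatrix_mem_zeroDiagSymmetries hσ hfix, fun {_} hA =>
    (joinedIn_permMatrix_of_rows_eq hσ hfix Finset.univ (fun _ _ => Finset.mem_univ _) hA
      fun p hp => absurd (Finset.mem_univ p) hp).symm⟩

end permMatrix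

def finTwoMulSwap (n : ℕ) : Equiv.Perm (Fin (2 * n)) :=
  (finSumFinEquiv.trans (finCongr (two_mul n).symm)).permCongr (Equiv.sumComm (Fin n) (Fin n))

lemma finTwoMulSwap_involutive (n : ℕ) : Function.Involutive (finTwoMulSwap n) := by
  intro x
  simp [finTwoMulSwap, Equiv.permCongr_apply]

lemma finTwoMulSwap_ne (n : ℕ) (x : Fin (2 * n)) : finTwoMulSwap n x ≠ x := by
  obtain ⟨y, rfl⟩ := (finSumFinEquiv.trans (finCongr (two_mul n).symm)).surjective x
  rw [finTwoMulSwap, Equiv.permCongr_apply, Equiv.symm_apply_apply, Ne, Equiv.apply_eq_iff_eq]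
  cases y <;> simp

end HalfDiagonalProjection

theorem projections_half_diagonal_pathConnected_general (n : ℕ) :
    IsPathConnected {p : Matrix (Fin (2 * n)) (Fin (2 * n)) ℂ |
      p * p = p ∧ p.conjTranspose = p ∧ ∀ i, p i i = 1 / 2} := by
  open HalfDiagonalProjection in
  rw [setOf_projection_diag_half_eq_image]
  exact (isPathConnected_zeroDiagSymmetries (finTwoMulSwap_involutive n)
    (finTwoMulSwap_ne n)).image (by fun_prop)

/-- The set of orthogonal projections in `M_{2n}(ℂ)` with all diagonal entries
equal to `1/2` is path-connected. -/
theorem projections_half_diagonal_pathConnected (n : ℕ) (hn : 1 ≤ n) :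
    IsPathConnected {p : Matrix (Fin (2 * n)) (Fin (2 * n)) ℂ |
      p * p = p ∧ p.conjTranspose = p ∧ ∀ i, p i i = 1 / 2} :=
  projections_half_diagonal_pathConnected_general n
end

section
/- If p is an orthogonal projection on a Hilbert space H = K ⊕ L written as a 2×2 block matrix [[a, b],[b*, d]], then 0 ≤ a ≤ 1, 0 ≤ d ≤ 1, |b*| = √(a(1−a)), |b| = √(d(1−d)), and ab = b(1−d). -/
/-!
Writing `p² = p` in blocks gives `a² + bb* = a`, `ab + bd = b` and `b*b + d² = d`, and
`p* = p` makes `a` and `d` self-adjoint. A self-adjoint `a` with `a² + c*c = a` is positive,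
being a sum of two operators of the form `x*x`; since `(1 - a)² + c*c = 1 - a` as well, so is
`1 - a`. The identities for `|b*|`, `|b|` and `ab` are the block equations rearranged.
-/

open ContinuousLinearMap

section Positivity

variable {E F : Type*} [NormedAddCommGroup E] [InnerProductSpace ℂ E] [CompleteSpace E]
  [NormedAddCommGroup F] [InnerProductSpace ℂ F] [CompleteSpace F]

theorem ContinuousLinearMap.isPositive_of_comp_self_add_adjoint_comp_self_eq
    {a : E →L[ℂ] E} (c : E →L[ℂ] F) (ha : IsSelfAdjoint a)
    (h : a ∘L a + adjoint c ∘L c = a) : a.IsPositive := by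
  have hpos := (isPositive_adjoint_comp_self a).add (isPositive_adjoint_comp_self c)
  rwa [ha.adjoint_eq, h] at hpos

theorem ContinuousLinearMap.isPositive_and_isPositive_one_sub_of_comp_self_add_adjoint_comp_self_eq
    {a : E →L[ℂ] E} (c : E →L[ℂ] F) (ha : IsSelfAdjoint a)
    (h : a ∘L a + adjoint c ∘L c = a) : a.IsPositive ∧ (1 - a).IsPositive := by
  refine ⟨isPositive_of_comp_self_add_adjoint_comp_self_eq c ha h,
    isPositive_of_comp_self_add_adjoint_comp_self_eq c ((IsSelfAdjoint.one _).sub ha) ?_⟩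
  rw [← mul_def, eq_sub_of_add_eq' h, ← mul_def]
  noncomm_ring

end Positivity

section BlockOperator

variable {K L : Type*} [NormedAddCommGroup K] [InnerProductSpace ℂ K] [CompleteSpace K]
  [NormedAddCommGroup L] [InnerProductSpace ℂ L] [CompleteSpace L]
  {p : WithLp 2 (K × L) →L[ℂ] WithLp 2 (K × L)} {a : K →L[ℂ] K} {b : L →L[ℂ] K} {d : L →L[ℂ] L}

theorem block_identities_of_comp_self_eq
    (hblock : ∀ k l, p (WithLp.toLp 2 (k, l)) = WithLp.toLp 2 (a k + b l, adjoint b k + d l))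
    (hp2 : p ∘L p = p) :
    a ∘L a + b ∘L adjoint b = a ∧ a ∘L b + b ∘L d = b ∧ adjoint b ∘L b + d ∘L d = d := by
  have hblocks (k : K) (l : L) :
      a (a k + b l) + b (adjoint b k + d l) = a k + b l ∧
        adjoint b (a k + b l) + d (adjoint b k + d l) = adjoint b k + d l := by
    have h := congrArg (· (WithLp.toLp 2 (k, l))) hp2
    simp only [comp_apply, hblock] at h
    exact Prod.ext_iff.mp (WithLp.toLp_injective 2 h)
  refine ⟨ext fun k => ?_, ext fun l => ?_, ext fun l => ?_⟩
  · simpa using (hblocks k 0).1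
  · simpa using (hblocks 0 l).1
  · simpa using (hblocks 0 l).2

theorem isSelfAdjoint_diagonal_blocks_of_adjoint_eq
    (hblock : ∀ k l, p (WithLp.toLp 2 (k, l)) = WithLp.toLp 2 (a k + b l, adjoint b k + d l))
    (hps : adjoint p = p) :
    IsSelfAdjoint a ∧ IsSelfAdjoint d := by
  have hsymm (x y : WithLp 2 (K × L)) : inner ℂ (p x) y = inner ℂ x (p y) := by
    rw [← adjoint_inner_right, hps]
  constructor
  · refine isSelfAdjoint_iff_isSymmetric.mpr fun k k' => ?_
    simpa [hblock, WithLp.prod_inner_apply] using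
      hsymm (WithLp.toLp 2 (k, 0)) (WithLp.toLp 2 (k', 0))
  · refine isSelfAdjoint_iff_isSymmetric.mpr fun l l' => ?_
    simpa [hblock, WithLp.prod_inner_apply] using
      hsymm (WithLp.toLp 2 (0, l)) (WithLp.toLp 2 (0, l'))

end BlockOperator

open ContinuousLinearMap in
/-- If `p` is an orthogonal projection on a Hilbert space `H = K ⊕ L` (the ℓ²-sum),
written in block form `[[a, b], [b*, d]]`, then `0 ≤ a ≤ 1`, `0 ≤ d ≤ 1`,
`|b*| = √(a(1-a))`, `|b| = √(d(1-d))`, and `ab = b(1-d)`. -/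
theorem projection_block_structure
    {K L : Type*} [NormedAddCommGroup K] [InnerProductSpace ℂ K] [CompleteSpace K]
    [NormedAddCommGroup L] [InnerProductSpace ℂ L] [CompleteSpace L]
    (p : WithLp 2 (K × L) →L[ℂ] WithLp 2 (K × L))
    (a : K →L[ℂ] K) (b : L →L[ℂ] K) (d : L →L[ℂ] L)
    (hp2 : p ∘L p = p) (hps : adjoint p = p)
    (hblock : ∀ (k : K) (l : L),
      p ((WithLp.equiv 2 (K × L)).symm (k, l)) =
        (WithLp.equiv 2 (K × L)).symm (a k + b l, adjoint b k + d l)) :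
    a.IsPositive ∧ (1 - a).IsPositive ∧ d.IsPositive ∧ (1 - d).IsPositive ∧
    CFC.sqrt (b ∘L adjoint b) = CFC.sqrt (a ∘L (1 - a)) ∧
    CFC.sqrt (adjoint b ∘L b) = CFC.sqrt (d ∘L (1 - d)) ∧
    a ∘L b = b ∘L (1 - d) := by
  obtain ⟨haa, hab, hdd⟩ := block_identities_of_comp_self_eq hblock hp2
  obtain ⟨ha, hd⟩ := isSelfAdjoint_diagonal_blocks_of_adjoint_eq hblock hps
  obtain ⟨ha₀, ha₁⟩ := isPositive_and_isPositive_one_sub_of_comp_self_add_adjoint_comp_self_eq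
    (adjoint b) ha (by rwa [adjoint_adjoint])
  obtain ⟨hd₀, hd₁⟩ := isPositive_and_isPositive_one_sub_of_comp_self_add_adjoint_comp_self_eq
    b hd (by rwa [add_comm])
  refine ⟨ha₀, ha₁, hd₀, hd₁, congrArg CFC.sqrt ?_, congrArg CFC.sqrt ?_, ?_⟩
  · rw [eq_sub_of_add_eq' haa, comp_sub, one_def, comp_id]
  · rw [eq_sub_of_add_eq hdd, comp_sub, one_def, comp_id]
  · rw [eq_sub_of_add_eq hab, comp_sub, one_def, comp_id]
end

section
/- A diagonal matrix d ∈ M_n is the diagonal of an idempotent matrix if and only if d = 0, d = id, or the trace of d is an integer in {1, …, n−1}. -/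
/-!
An idempotent has trace equal to its rank, and it is `0` or `1` when its rank is `0` or full;
this gives the forward direction.

Conversely, let `∑ d = k` with `0 < k < n` and split the indices into blocks of sizes `k` and
`m = n - k`. For any `k × m` matrix `Z` and the all-ones `m × k` matrix `J`, the matrices
`A = [1; J]` and `B = [1 - Z J, Z]` satisfy `B A = 1`, so `A B` is idempotent. Its diagonal is
`1 - (row sums of Z)` on the first block and `column sums of Z` on the second, and a matrix with
prescribed row and column sums exists as soon as the two totals agree, which is `∑ d = k`.
-/

open Finset Matrix

namespace Matrix

section Field

variable {K ι : Type*} [Field K] [Fintype ι] [DecidableEq ι] {q : Matrix ι ι K}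

theorem trace_eq_rank_of_isIdempotentElem (hq : IsIdempotentElem q) : q.trace = q.rank := by
  have hlin : IsIdempotentElem q.mulVecLin := hq.map toLinAlgEquiv'
  rw [← trace_toLin'_eq, toLin'_apply']
  exact (LinearMap.IsIdempotentElem.isProj_range _ hlin).trace

theorem eq_zero_of_rank_eq_zero (hq : q.rank = 0) : q = 0 := by
  have : LinearMap.range q.mulVecLin = ⊥ := Submodule.finrank_eq_zero.mp hq
  rw [LinearMap.range_eq_bot, ← toLin'_apply', ← map_zero toLin'] at this
  exact toLin'.injective this

theorem eq_one_of_isIdempotentElem_of_rank_eq_card (hq : IsIdempotentElem q)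
    (hrank : q.rank = Fintype.card ι) : q = 1 := by
  have : LinearMap.range q.mulVecLin = ⊤ :=
    Submodule.eq_top_of_finrank_eq (by rw [Module.finrank_fintype_fun_eq_card]; exact hrank)
  have hunit : IsUnit q := mulVec_surjective_iff_isUnit.mp (LinearMap.range_eq_top.mp this)
  exact (IsIdempotentElem.iff_eq_one_of_isUnit hunit).mp hq

end Field

theorem exists_sum_row_eq_and_sum_col_eq {κ μ R : Type*} [Fintype κ] [Fintype μ]
    [AddCommGroup R] [Nonempty κ] [Nonempty μ]
    (r : κ → R) (c : μ → R) (h : ∑ i, r i = ∑ j, c j) :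
    ∃ Z : Matrix κ μ R, (∀ i, ∑ j, Z i j = r i) ∧ ∀ j, ∑ i, Z i j = c j := by
  classical
  obtain ⟨i₀⟩ := ‹Nonempty κ›
  obtain ⟨j₀⟩ := ‹Nonempty μ›
  refine ⟨of fun i j => (if j = j₀ then r i else 0) +
    (if i = i₀ then c j - (if j = j₀ then ∑ i, r i else 0) else 0), fun i => ?_, fun j => ?_⟩
  · simp [sum_add_distrib, sum_sub_distrib, h]
  · simp [sum_add_distrib]

theorem isIdempotentElem_mul_of_mul_eq_one {ι κ R : Type*} [Fintype ι] [Fintype κ]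
    [DecidableEq κ] [Semiring R] {A : Matrix ι κ R} {B : Matrix κ ι R}
    (h : B * A = 1) : IsIdempotentElem (A * B) := by
  rw [IsIdempotentElem, Matrix.mul_assoc, ← Matrix.mul_assoc B, h, Matrix.one_mul]

theorem exists_isIdempotentElem_diag_eq_of_sum_eq_card {κ μ R : Type*} [Fintype κ] [Fintype μ]
    [DecidableEq κ] [Ring R] [Nonempty κ] [Nonempty μ]
    (d : κ ⊕ μ → R) (hd : ∑ x, d x = Fintype.card κ) :
    ∃ q : Matrix (κ ⊕ μ) (κ ⊕ μ) R, IsIdempotentElem q ∧ q.diag = d := by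
  have htotal : ∑ i, (1 - d (.inl i)) = ∑ j, d (.inr j) := by
    rw [Fintype.sum_sum_type] at hd
    simp [sum_sub_distrib, ← hd]
  obtain ⟨Z, hrow, hcol⟩ := exists_sum_row_eq_and_sum_col_eq _ _ htotal
  let J : Matrix μ κ R := of fun _ _ => 1
  refine ⟨fromRows 1 J * fromCols (1 - Z * J) Z,
    isIdempotentElem_mul_of_mul_eq_one (by simp [fromCols_mul_fromRows]), ?_⟩
  ext (i | j)
  · simp [J, mul_apply, hrow]
  · simp [J, mul_apply, hcol]

theorem exists_isIdempotentElem_diag_eq_of_sum_eq_natCast {ι R : Type*} [Fintype ι]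
    [DecidableEq ι] [Ring R] (d : ι → R) {k : ℕ} (hk : 0 < k) (hkn : k < Fintype.card ι)
    (hd : ∑ i, d i = k) : ∃ q : Matrix ι ι R, IsIdempotentElem q ∧ q.diag = d := by
  let e : Fin k ⊕ Fin (Fintype.card ι - k) ≃ ι := Fintype.equivOfCardEq (by simp; omega)
  have : Nonempty (Fin k) := Fin.pos_iff_nonempty.mp hk
  have : Nonempty (Fin (Fintype.card ι - k)) := Fin.pos_iff_nonempty.mp (by omega)
  obtain ⟨q, hq, hdiag⟩ :=
    exists_isIdempotentElem_diag_eq_of_sum_eq_card (d ∘ e) (by simp [e.sum_comp, hd])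
  refine ⟨reindex e e q, hq.map (reindexRingEquiv R e), ?_⟩
  ext i
  simpa using congrFun hdiag (e.symm i)

end Matrix

open Finset in
/-- A diagonal matrix `d` is the diagonal of an idempotent in `M_n(ℂ)` iff `d = 0`,
`d = id`, or `Tr d` is an integer in `{1, …, n-1}`. -/
theorem diagonal_of_idempotent_iff (n : ℕ) (d : Fin n → ℂ) :
    (∃ q : Matrix (Fin n) (Fin n) ℂ, q * q = q ∧ ∀ i, q i i = d i) ↔
      (∀ i, d i = 0) ∨ (∀ i, d i = 1) ∨
        (∃ k : ℕ, 1 ≤ k ∧ k ≤ n - 1 ∧ ∑ i, d i = k) := by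
  constructor
  · rintro ⟨q, hq, hd⟩
    rcases Nat.eq_zero_or_pos q.rank with hzero | hpos
    · left
      intro i
      rw [← hd, eq_zero_of_rank_eq_zero hzero, Matrix.zero_apply]
    rcases q.rank_le_card_width.eq_or_lt with hfull | hlt
    · right; left
      intro i
      rw [← hd, eq_one_of_isIdempotentElem_of_rank_eq_card hq hfull, one_apply_eq]
    · right; right
      refine ⟨q.rank, hpos, by rw [Fintype.card_fin] at hlt; omega, ?_⟩
      rw [← trace_eq_rank_of_isIdempotentElem hq, trace]
      exact sum_congr rfl fun i _ => (hd i).symm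
  · rintro (hzero | hone | ⟨k, hk, hkn, hsum⟩)
    · exact ⟨0, mul_zero 0, fun i => (hzero i).symm⟩
    · exact ⟨1, mul_one 1, fun i => by rw [hone i, one_apply_eq]⟩
    · obtain ⟨q, hq, hdiag⟩ := exists_isIdempotentElem_diag_eq_of_sum_eq_natCast d hk
        (by rw [Fintype.card_fin]; omega) hsum
      exact ⟨q, hq, congrFun hdiag⟩
end

section
/- For every diagonal matrix d in D_n(ℂ), the set of idempotent matrices q in M_n(ℂ) with E(q) = d is path-connected (possibly empty). -/
/-!
Every idempotent `q` is conjugate, by a unipotent `1 + C`, to an idempotent `P + D`, where `P` is the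
coordinate projection onto some `T ⊆ ι`, `C` lives on the block `Tᶜ × T` and `D` on `T × Tᶜ`: it
suffices to choose `T` so that the range of `q` is complementary to the span of the `e j`, `j ∉ T`.
The diagonal of such a cell element depends only, and affinely, on the products `c i j * d j i`
(`i ∉ T`, `j ∈ T`). Every curve `x y = const` in `ℂ²` is path-connected, so inside one cell the
idempotents with a prescribed diagonal form a path-connected set. The trace fixes `|T|`, and for two
cells of the same size an explicit element, with all `c i j ∈ {1, 2}`, lies in both cells and
realises any prescribed products.
-/

open Matrix

namespace IdempotentCell

section Ring

variable {R : Type*} [Ring R]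

/-- In `Module.End`, `e` is the projection onto the range of `q` along the kernel of `p`. -/
structure IsRangeKerProj (e q p : R) : Prop where
  q_mul : q * e = e
  mul_q : e * q = q
  p_mul : p * e = p
  mul_p : e * p = e

theorem IsRangeKerProj.map {S F : Type*} [Ring S] [FunLike F R S] [RingHomClass F R S] (φ : F)
    {e q p : R} (h : IsRangeKerProj e q p) : IsRangeKerProj (φ e) (φ q) (φ p) := by
  refine ⟨?_, ?_, ?_, ?_⟩ <;> rw [← map_mul]
  exacts [congrArg φ h.q_mul, congrArg φ h.mul_q, congrArg φ h.p_mul, congrArg φ h.mul_p]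

/-- Since `((1 - p) * c * p) ^ 2 = 0`, this is the conjugate of the idempotent
`p + p * d * (1 - p)` by the unit `1 + (1 - p) * c * p`. -/
def cell (p c d : R) : R :=
  (1 + (1 - p) * c * p) * (p + p * d * (1 - p)) * (1 - (1 - p) * c * p)

variable {p p' q e : R}

theorem IsRangeKerProj.eq_cell (h : IsRangeKerProj e q p) (hp : IsIdempotentElem p) :
    q = cell p e q := by
  have hC : (1 - p) * e * p = e - p := by
    rw [sub_mul, one_mul, sub_mul, h.mul_p, h.p_mul, hp.eq]
  have hee : e * e = e := calc
    e * e = e * p * e := by rw [h.mul_p]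
    _ = e := by rw [mul_assoc, h.p_mul, h.mul_p]
  have hinv : (1 + (e - p)) * (1 - (e - p)) = 1 := by
    simp only [add_mul, mul_sub, sub_mul, mul_one, one_mul, hee, hp.eq, h.mul_p, h.p_mul]
    abel
  have hconj : q * (1 + (e - p)) = (1 + (e - p)) * (p + p * q * (1 - p)) := by
    simp only [mul_add, add_mul, mul_sub, sub_mul, mul_one, one_mul, ← mul_assoc, hp.eq, h.mul_p,
      h.q_mul, h.mul_q]
    abel
  rw [cell, hC, ← hconj, mul_assoc, hinv, mul_one]

theorem one_sub_corner_mul_one_add_corner (hp : IsIdempotentElem p) (c : R) :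
    (1 - (1 - p) * c * p) * (1 + (1 - p) * c * p) = 1 := by
  have hCC : (1 - p) * c * p * ((1 - p) * c * p) = 0 := by
    rw [mul_assoc _ p, ← mul_assoc p, ← mul_assoc p, hp.mul_one_sub_self, zero_mul, zero_mul,
      mul_zero]
  rw [sub_mul, one_mul, mul_add, mul_one, hCC]
  abel

theorem self_mul_add_corner (hp : IsIdempotentElem p) (d : R) :
    p * (p + p * d * (1 - p)) = p + p * d * (1 - p) := by
  simp only [mul_add, ← mul_assoc, hp.eq]

theorem add_corner_mul_self (hp : IsIdempotentElem p) (d : R) :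
    (p + p * d * (1 - p)) * p = p := by
  simp only [add_mul, mul_assoc, hp.one_sub_mul_self, mul_zero, add_zero, hp.eq]

theorem isIdempotentElem_cell (hp : IsIdempotentElem p) (c d : R) :
    IsIdempotentElem (cell p c d) := by
  have ha : IsIdempotentElem (p + p * d * (1 - p)) := calc
    _ = (p + p * d * (1 - p)) * p * (p + p * d * (1 - p)) := by
        rw [mul_assoc _ p, self_mul_add_corner hp]
    _ = _ := by rw [add_corner_mul_self hp, self_mul_add_corner hp]
  rw [IsIdempotentElem, cell]
  generalize p + p * d * (1 - p) = a at ha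
  calc _ = (1 + (1 - p) * c * p) * a * ((1 - (1 - p) * c * p) * (1 + (1 - p) * c * p)) * a *
        (1 - (1 - p) * c * p) := by simp only [mul_assoc]
    _ = _ := by rw [one_sub_corner_mul_one_add_corner hp, mul_one, mul_assoc _ a a, ha.eq]

theorem cell_eq_add (hp : IsIdempotentElem p) (c d : R) :
    cell p c d = p + p * d * (1 - p) + (1 - p) * c * p + (1 - p) * c * p * (p * d * (1 - p))
      - p * d * (1 - p) * ((1 - p) * c * p)
      - (1 - p) * c * p * (p * d * (1 - p)) * ((1 - p) * c * p) := by
  have hpC : p * ((1 - p) * c * p) = 0 := by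
    rw [← mul_assoc, ← mul_assoc, hp.mul_one_sub_self, zero_mul, zero_mul]
  have hCp : (1 - p) * c * p * p = (1 - p) * c * p := by rw [mul_assoc _ p p, hp.eq]
  have hCC : (1 - p) * c * p * ((1 - p) * c * p) = 0 := by
    rw [mul_assoc _ p, ← mul_assoc p, ← mul_assoc p, hp.mul_one_sub_self, zero_mul, zero_mul,
      mul_zero]
  rw [cell]
  generalize (1 - p) * c * p = C at *
  generalize p * d * (1 - p) = D
  simp only [mul_add, add_mul, mul_sub, one_mul, mul_one, hpC, hCp, hCC]
  abel

theorem mul_add_one_sub_mul_mul (hp' : IsIdempotentElem p') (x y : R) :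
    p' * (p' * x * p + (1 - p') * y * (1 - p)) = p' * x * p := by
  rw [mul_add, ← mul_assoc, ← mul_assoc, ← mul_assoc, ← mul_assoc, hp'.eq, hp'.mul_one_sub_self,
    zero_mul, zero_mul, add_zero]

theorem one_sub_mul_add_mul_mul (hp' : IsIdempotentElem p') (x y : R) :
    (1 - p') * (p' * x * p + (1 - p') * y * (1 - p)) = (1 - p') * y * (1 - p) := by
  have := mul_add_one_sub_mul_mul (p := 1 - p) hp'.one_sub y x
  rwa [sub_sub_cancel, sub_sub_cancel, add_comm] at this

theorem exists_isRangeKerProj_cell_of_isUnit (hp : IsIdempotentElem p)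
    (hp' : IsIdempotentElem p') (c d y : R)
    (hg : IsUnit (p' * (1 + (1 - p) * c * p) * p + (1 - p') * y * (1 - p))) :
    ∃ e, IsRangeKerProj e (cell p c d) p' := by
  obtain ⟨g, hg⟩ := hg
  set v := 1 + (1 - p) * c * p
  set w := 1 - (1 - p) * c * p
  set a := p + p * d * (1 - p)
  have hwv : w * v = 1 := one_sub_corner_mul_one_add_corner hp c
  have hpa : p * a = a := self_mul_add_corner hp d
  have hap : a * p = p := add_corner_mul_self hp d
  have hleft : p' * g = p' * v * p := by rw [hg, mul_add_one_sub_mul_mul hp']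
  have hright : g * p = p' * v * p := by
    rw [hg, add_mul, mul_assoc _ p p, hp.eq, mul_assoc _ (1 - p) p, hp.one_sub_mul_self, mul_zero,
      add_zero]
  set h : R := ↑g⁻¹
  have hgh : ↑g * h = 1 := g.mul_inv
  have hhg : h * ↑g = 1 := g.inv_mul
  -- `p * h * p'` inverts `p' * v * p` between the ranges of `p'` and `p`.
  refine ⟨v * p * h * p', ⟨?_, ?_, ?_, ?_⟩⟩
  · calc v * a * w * (v * p * h * p') = v * (a * p) * h * p' := by
          simp only [← mul_assoc, mul_assoc _ w v, hwv, mul_one]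
      _ = v * p * h * p' := by rw [hap]
  · calc v * p * h * p' * (v * a * w) = v * p * h * p' * (v * (p * a) * w) := by rw [hpa]
      _ = v * p * (h * (p' * v * p)) * a * w := by simp only [mul_assoc]
      _ = v * a * w := by
          rw [← hright, ← mul_assoc h, hhg, one_mul, mul_assoc v p p, hp.eq, mul_assoc v p a, hpa]
  · calc p' * (v * p * h * p') = p' * v * p * h * p' := by simp only [mul_assoc]
      _ = p' := by rw [← hleft, mul_assoc p' _ h, hgh, mul_one, hp'.eq]
  · rw [mul_assoc, hp'.eq]

end Ring

section CoordProj

variable {ι K : Type*} [Fintype ι] [DecidableEq ι] [CommRing K]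

def coordProj (T : Finset ι) : Matrix ι ι K := diagonal fun i => if i ∈ T then 1 else 0

variable (T : Finset ι)

theorem isIdempotentElem_coordProj : IsIdempotentElem (coordProj T : Matrix ι ι K) := by
  rw [IsIdempotentElem, coordProj, diagonal_mul_diagonal]
  congr 1; ext i; split_ifs <;> simp

theorem one_sub_coordProj : 1 - coordProj T = (coordProj Tᶜ : Matrix ι ι K) := by
  ext i j
  by_cases h : i = j
  · subst h; by_cases hi : i ∈ T <;> simp [coordProj, hi]
  · simp [coordProj, h]

theorem coordProj_mulVec (x : ι → K) (i : ι) :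
    (coordProj T *ᵥ x) i = if i ∈ T then x i else 0 := by
  rw [coordProj, mulVec_diagonal]; split_ifs <;> simp

theorem coordProj_mul_mul_coordProj_apply (S : Finset ι) (X : Matrix ι ι K) (i j : ι) :
    (coordProj S * X * coordProj T : Matrix ι ι K) i j =
      if i ∈ S ∧ j ∈ T then X i j else 0 := by
  rw [coordProj, coordProj, mul_diagonal, diagonal_mul]
  by_cases hi : i ∈ S <;> by_cases hj : j ∈ T <;> simp [hi, hj]

def cellProd (c d : Matrix ι ι K) (i j : ι) : K := if i ∉ T ∧ j ∈ T then c i j * d j i else 0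

theorem cell_coordProj_apply_self (c d : Matrix ι ι K) (i : ι) :
    cell (coordProj T) c d i i =
      (if i ∈ T then 1 else 0) + ∑ j, (cellProd T c d i j - cellProd T c d j i) := by
  have hCDC : coordProj Tᶜ * c * coordProj T * (coordProj T * d * coordProj Tᶜ) *
      (coordProj Tᶜ * c * coordProj T) = coordProj Tᶜ *
      (c * coordProj T * (coordProj T * d * coordProj Tᶜ) * coordProj Tᶜ * c) * coordProj T := by
    simp only [Matrix.mul_assoc]
  have hprod : ∀ j k, (if j ∈ Tᶜ ∧ k ∈ T then c j k else 0) *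
      (if k ∈ T ∧ j ∈ Tᶜ then d k j else 0) = cellProd T c d j k := by
    intro j k
    by_cases hj : j ∈ T <;> by_cases hk : k ∈ T <;> simp [cellProd, hj, hk]
  rw [cell_eq_add (isIdempotentElem_coordProj T), one_sub_coordProj, hCDC]
  simp only [Matrix.add_apply, Matrix.sub_apply, mul_apply (M := coordProj Tᶜ * c * coordProj T),
    mul_apply (M := coordProj T * d * coordProj Tᶜ), coordProj_mul_mul_coordProj_apply, hprod,
    mul_comm (ite (i ∈ T ∧ _ ∈ Tᶜ) _ _)]
  rw [coordProj, diagonal_apply_eq]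
  simp only [Finset.mem_compl, and_not_self, not_and_self, if_false, add_zero, sub_zero,
    Finset.sum_sub_distrib]
  ring

variable {T}

theorem cell_coordProj_apply_self_congr {c d c' d' : Matrix ι ι K}
    (h : ∀ i j, i ∉ T → j ∈ T → c i j * d j i = c' i j * d' j i) (i : ι) :
    cell (coordProj T) c d i i = cell (coordProj T) c' d' i i := by
  have : cellProd T c d = cellProd T c' d' := by
    ext j k
    simp only [cellProd]
    split_ifs with hjk
    exacts [h j k hjk.1 hjk.2, rfl]
  rw [cell_coordProj_apply_self, cell_coordProj_apply_self, this]

theorem card_eq_sum_cell_coordProj_apply_self (c d : Matrix ι ι K) :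
    (T.card : K) = ∑ i, cell (coordProj T) c d i i := by
  simp only [cell_coordProj_apply_self, Finset.sum_add_distrib, Finset.sum_sub_distrib,
    Finset.sum_comm (γ := ι) (f := fun i j => cellProd T c d j i), sub_self, add_zero,
    Finset.sum_boole, Finset.filter_mem_eq_inter, Finset.univ_inter]

end CoordProj

section Existence

theorem exists_isRangeKerProj_of_isCompl {R V : Type*} [Ring R] [AddCommGroup V] [Module R V]
    {f g : Module.End R V} (hf : IsIdempotentElem f) (hg : IsIdempotentElem g)
    (h : IsCompl (LinearMap.range f) (LinearMap.ker g)) : ∃ e, IsRangeKerProj e f g := by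
  let e := (LinearMap.range f).projection (LinearMap.ker g) h
  have he : IsIdempotentElem e := Submodule.isIdempotentElem_projection h
  open LinearMap in
  exact ⟨e, (IsIdempotentElem.comp_eq_right_iff hf e).2 (Submodule.range_projection h).le,
    (IsIdempotentElem.comp_eq_right_iff he f).2 (Submodule.range_projection h).ge,
    (IsIdempotentElem.comp_eq_left_iff he g).2 (Submodule.ker_projection h).le,
    (IsIdempotentElem.comp_eq_left_iff hg e).2 (Submodule.ker_projection h).ge⟩

variable {ι K : Type*} [Fintype ι] [DecidableEq ι] [Field K]

theorem mem_ker_toLinAlgEquiv'_coordProj {T : Finset ι} {x : ι → K} :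
    x ∈ LinearMap.ker (toLinAlgEquiv' (coordProj T : Matrix ι ι K)) ↔ ∀ i ∈ T, x i = 0 := by
  simp [LinearMap.mem_ker, toLinAlgEquiv'_apply, funext_iff, coordProj_mulVec]

theorem exists_isCompl_ker_coordProj (F : Submodule K (ι → K)) :
    ∃ T : Finset ι, IsCompl F (LinearMap.ker (toLinAlgEquiv' (coordProj T : Matrix ι ι K))) := by
  classical
  -- A `T` of minimal size with `F` disjoint from `ker (coordProj T)` works: otherwise some
  -- `Pi.single j 1` lies outside `F ⊔ ker (coordProj T)`, and `T.erase j` would do.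
  obtain ⟨T, hT, hmin⟩ := Finset.exists_min_image
    (Finset.univ.filter fun T : Finset ι =>
      Disjoint F (LinearMap.ker (toLinAlgEquiv' (coordProj T : Matrix ι ι K))))
    Finset.card ⟨Finset.univ, Finset.mem_filter.2 ⟨Finset.mem_univ _, Submodule.disjoint_def.2
      fun x _ hx => funext fun i => mem_ker_toLinAlgEquiv'_coordProj.1 hx i (Finset.mem_univ i)⟩⟩
  rw [Finset.mem_filter] at hT
  refine ⟨T, hT.2, codisjoint_iff.2 (eq_top_iff.2 ?_)⟩
  by_contra htop
  obtain ⟨j, hj⟩ : ∃ j, Pi.single j (1 : K) ∉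
      F ⊔ LinearMap.ker (toLinAlgEquiv' (coordProj T : Matrix ι ι K)) := by
    by_contra! hall
    refine htop ?_
    rw [← (Pi.basisFun K ι).span_eq, Submodule.span_le]
    rintro _ ⟨j, rfl⟩
    rw [Pi.basisFun_apply]
    exact hall j
  have hjT : j ∈ T := by
    by_contra hjT
    refine hj (Submodule.mem_sup_right (mem_ker_toLinAlgEquiv'_coordProj.2 fun i hi => ?_))
    exact Pi.single_eq_of_ne (ne_of_mem_of_not_mem hi hjT) _
  have hsub : LinearMap.ker (toLinAlgEquiv' (coordProj (T.erase j) : Matrix ι ι K)) ≤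
      LinearMap.ker (toLinAlgEquiv' (coordProj T)) ⊔ K ∙ Pi.single j 1 := by
    intro x hx
    refine Submodule.mem_sup.2 ⟨x - x j • Pi.single j 1, ?_, x j • Pi.single j 1,
      Submodule.smul_mem _ _ (Submodule.mem_span_singleton_self _), sub_add_cancel _ _⟩
    refine mem_ker_toLinAlgEquiv'_coordProj.2 fun i hi => ?_
    rcases eq_or_ne i j with rfl | hij
    · simp
    · simp [hij, mem_ker_toLinAlgEquiv'_coordProj.1 hx i (Finset.mem_erase.2 ⟨hij, hi⟩)]
  have hdisj := (hT.2.disjoint_sup_right_of_disjoint_sup_left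
    ((Submodule.disjoint_span_singleton' (Pi.single_ne_zero_iff.2 one_ne_zero)).2 hj)).mono_right
    hsub
  exact (hmin _ (Finset.mem_filter.2 ⟨Finset.mem_univ _, hdisj⟩)).not_gt
    (Finset.card_erase_lt_of_mem hjT)

theorem exists_eq_cell_coordProj {q : Matrix ι ι K} (hq : IsIdempotentElem q) :
    ∃ (T : Finset ι) (c d : Matrix ι ι K), q = cell (coordProj T) c d := by
  obtain ⟨T, hT⟩ := exists_isCompl_ker_coordProj (LinearMap.range (toLinAlgEquiv' q))
  obtain ⟨e, he⟩ := exists_isRangeKerProj_of_isCompl (hq.map toLinAlgEquiv')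
    ((isIdempotentElem_coordProj T).map toLinAlgEquiv') hT
  have he' := he.map (toLinAlgEquiv' (R := K) (n := ι)).symm
  simp only [AlgEquiv.symm_apply_apply] at he'
  exact ⟨T, _, q, he'.eq_cell (isIdempotentElem_coordProj T)⟩

end Existence

section Paths

theorem continuous_cell {R X : Type*} [Ring R] [TopologicalSpace R] [IsTopologicalRing R]
    [TopologicalSpace X] (p : R) {f g : X → R} (hf : Continuous f) (hg : Continuous g) :
    Continuous fun x => cell p (f x) (g x) := by
  unfold cell; fun_prop

theorem joinedIn_mul_eq (a b : ℂ) :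
    JoinedIn {z : ℂ × ℂ | z.1 * z.2 = a * b} (a, b) (1, a * b) := by
  rcases eq_or_ne a 0 with rfl | ha
  · have hline : ∀ x y : ℂ, JoinedIn Set.univ x y := fun x y =>
      joinedIn_univ.2 (PathConnectedSpace.joined x y)
    have h₁ := ((hline b 0).map (f := fun t : ℂ => ((0 : ℂ), t)) (by fun_prop)).mono
      (show _ ⊆ {z : ℂ × ℂ | z.1 * z.2 = 0 * b} by rintro _ ⟨t, -, rfl⟩; simp)
    have h₂ := ((hline 0 1).map (f := fun t : ℂ => (t, (0 : ℂ))) (by fun_prop)).mono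
      (show _ ⊆ {z : ℂ × ℂ | z.1 * z.2 = 0 * b} by rintro _ ⟨t, -, rfl⟩; simp)
    simpa using h₁.trans h₂
  · have hne : IsPathConnected ({0}ᶜ : Set ℂ) :=
      isPathConnected_compl_singleton_of_one_lt_rank (by simp [Complex.rank_real_complex]) 0
    have hcont : ContinuousOn (fun t : ℂ => (t, a * b / t)) {0}ᶜ :=
      continuousOn_id.prodMk (continuousOn_const.div continuousOn_id fun _ ht => ht)
    have h := ((hne.joinedIn a ha 1 one_ne_zero).map_continuousOn hcont).mono
      (show _ ⊆ {z : ℂ × ℂ | z.1 * z.2 = a * b} by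
        rintro _ ⟨t, ht, rfl⟩; exact mul_div_cancel₀ _ ht)
    simpa [mul_div_cancel_left₀ b ha] using h

variable {ι : Type*} [Fintype ι] [DecidableEq ι] {T : Finset ι} {δ : ι → ℂ}

theorem joinedIn_cell_coordProj_ones_hadamard {c d : Matrix ι ι ℂ}
    (h : ∀ i, cell (coordProj T) c d i i = δ i) :
    JoinedIn {q | q * q = q ∧ ∀ i, q i i = δ i} (cell (coordProj T) c d)
      (cell (coordProj T) (of fun _ _ => 1) (cᵀ ⊙ d)) := by
  let Ψ : (ι → ι → ℂ × ℂ) → Matrix ι ι ℂ := fun x =>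
    cell (coordProj T) (of fun i j => (x i j).1) (of fun j i => (x i j).2)
  have hΨ : Continuous Ψ := continuous_cell _ (by fun_prop) (by fun_prop)
  have hpath := JoinedIn.pi fun i => JoinedIn.pi fun j => joinedIn_mul_eq (c i j) (d j i)
  refine (hpath.map hΨ).mono ?_
  rintro _ ⟨x, hx, rfl⟩
  refine ⟨isIdempotentElem_cell (isIdempotentElem_coordProj T) _ _, fun i => ?_⟩
  rw [← h i]
  exact cell_coordProj_apply_self_congr (fun i j _ _ => hx i trivial j trivial) i

theorem joinedIn_cell_coordProj_ones {d₀ d₁ : Matrix ι ι ℂ}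
    (h₀ : ∀ i, cell (coordProj T) (of fun _ _ => 1) d₀ i i = δ i)
    (h₁ : ∀ i, cell (coordProj T) (of fun _ _ => 1) d₁ i i = δ i) :
    JoinedIn {q | q * q = q ∧ ∀ i, q i i = δ i} (cell (coordProj T) (of fun _ _ => 1) d₀)
      (cell (coordProj T) (of fun _ _ => 1) d₁) := by
  let D := {d : Matrix ι ι ℂ | ∀ i, cell (coordProj T) (of fun _ _ => 1) d i i = δ i}
  have hD : Convex ℝ D := by
    intro x hx y hy a b _ _ hab i
    have hlin : ∀ j k, cellProd T (of fun _ _ => 1) (a • x + b • y) j k =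
        a * cellProd T (of fun _ _ => 1) x j k + b * cellProd T (of fun _ _ => 1) y j k := by
      intro j k
      simp only [cellProd, Matrix.add_apply, Matrix.smul_apply, Complex.real_smul]
      split_ifs <;> ring
    have hx' := hx i
    have hy' := hy i
    rw [cell_coordProj_apply_self] at hx' hy' ⊢
    simp only [hlin, Finset.sum_sub_distrib, Finset.sum_add_distrib, ← Finset.mul_sum] at hx' hy' ⊢
    have hab' : (a : ℂ) + b = 1 := by exact_mod_cast hab
    linear_combination (a : ℂ) * hx' + (b : ℂ) * hy' + (δ i - (if i ∈ T then 1 else 0)) * hab'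
  have hd₀ : d₀ ∈ D := h₀
  have hd₁ : d₁ ∈ D := h₁
  have hjoin : JoinedIn D d₀ d₁ := (hD.isPathConnected ⟨d₀, hd₀⟩).joinedIn d₀ hd₀ d₁ hd₁
  refine (hjoin.map (continuous_cell _ continuous_const continuous_id)).mono ?_
  rintro _ ⟨d, hd, rfl⟩
  exact ⟨isIdempotentElem_cell (isIdempotentElem_coordProj T) _ _, hd⟩

theorem joinedIn_cell_coordProj {c d c' d' : Matrix ι ι ℂ}
    (h : ∀ i, cell (coordProj T) c d i i = δ i) (h' : ∀ i, cell (coordProj T) c' d' i i = δ i) :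
    JoinedIn {q | q * q = q ∧ ∀ i, q i i = δ i} (cell (coordProj T) c d)
      (cell (coordProj T) c' d') := by
  have h₀ := joinedIn_cell_coordProj_ones_hadamard h
  have h₁ := joinedIn_cell_coordProj_ones_hadamard h'
  exact h₀.trans ((joinedIn_cell_coordProj_ones h₀.target_mem.2 h₁.target_mem.2).trans h₁.symm)

end Paths

section Bridge

variable {ι K : Type*} [Fintype ι] [DecidableEq ι] [Field K] {T T' : Finset ι}

theorem exists_perm_sdiff (hT : T.card = T'.card) :
    ∃ σ : Equiv.Perm ι, ∀ j, j ∈ T \ T' ↔ σ j ∈ T' \ T := by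
  let e := Finset.equivOfCardEq (Finset.card_sdiff_comm hT)
  exact ⟨e.extendSubtype, fun j => ⟨e.extendSubtype_mem j,
    fun h => by_contra fun hj => e.extendSubtype_not_mem j hj h⟩⟩

def bridgeMatrix (σ : Equiv.Perm ι) : Matrix ι ι K := of fun i j => if σ j = i then 2 else 1

theorem bridgeMatrix_mulVec (σ : Equiv.Perm ι) (w : ι → K) (i : ι) :
    (bridgeMatrix σ *ᵥ w) i = ∑ j, w j + w (σ.symm i) := by
  have : ∀ j, (if σ j = i then (2 : K) else 1) * w j = w j + if j = σ.symm i then w j else 0 := by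
    intro j
    by_cases h : σ j = i
    · rw [if_pos h, if_pos ((Equiv.eq_symm_apply σ).2 h)]; ring
    · rw [if_neg h, if_neg (mt (Equiv.eq_symm_apply σ).1 h)]; ring
  simp only [bridgeMatrix, mulVec, dotProduct, of_apply, this, Finset.sum_add_distrib,
    Finset.sum_ite_eq', Finset.mem_univ, if_true]

theorem eq_zero_of_add_sum_add_eq_zero [CharZero K] {σ : Equiv.Perm ι}
    (hσ : ∀ j, j ∈ T \ T' ↔ σ j ∈ T' \ T) {w : ι → K} (hwT : ∀ j ∉ T, w j = 0)
    (heq : ∀ i ∈ T', w i + (if i ∈ T then 0 else ∑ j, w j + w (σ.symm i)) = 0) : w = 0 := by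
  set s := ∑ j, w j
  -- The equations at `i ∈ T ∩ T'` and at `i = σ j` force `w = -s` on `T \ T'` and `w = 0`
  -- elsewhere, so `s = -|T \ T'| s`.
  have hwj : ∀ j, w j = if j ∈ T \ T' then -s else 0 := by
    intro j
    by_cases hjT : j ∈ T
    · by_cases hjT' : j ∈ T'
      · have := heq j hjT'
        rw [if_pos hjT, add_zero] at this
        rw [this, if_neg fun h => (Finset.mem_sdiff.1 h).2 hjT']
      · have hj : j ∈ T \ T' := Finset.mem_sdiff.2 ⟨hjT, hjT'⟩
        have hσj := Finset.mem_sdiff.1 ((hσ j).1 hj)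
        have := heq (σ j) hσj.1
        rw [if_neg hσj.2, hwT _ hσj.2, Equiv.symm_apply_apply] at this
        rw [if_pos hj]
        linear_combination this
    · rw [hwT j hjT, if_neg fun h => hjT (Finset.mem_sdiff.1 h).1]
  have hs : s * ((T \ T').card + 1) = 0 := by
    have : s = -s * (T \ T').card := by
      calc s = ∑ j, if j ∈ T \ T' then -s else 0 := Finset.sum_congr rfl fun j _ => hwj j
      _ = _ := by
        rw [Finset.sum_ite_mem, Finset.univ_inter, Finset.sum_const, nsmul_eq_mul, mul_comm]
    linear_combination this
  have hs0 : s = 0 := (mul_eq_zero.1 hs).resolve_right (Nat.cast_add_one_ne_zero _)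
  funext j
  rw [hwj j, hs0, neg_zero, ite_self]
  rfl

theorem coordProj_mulVec_eq_zero_of_bridge [CharZero K] {σ : Equiv.Perm ι}
    (hσ : ∀ j, j ∈ T \ T' ↔ σ j ∈ T' \ T) {u : ι → K}
    (hu : (coordProj T' * (1 + (1 - coordProj T) * bridgeMatrix σ * coordProj T) *
      coordProj T) *ᵥ u = 0) :
    coordProj T *ᵥ u = 0 := by
  set w := coordProj T *ᵥ u with hw
  have hPw : coordProj T *ᵥ w = w := by rw [hw, mulVec_mulVec, (isIdempotentElem_coordProj T).eq]
  refine eq_zero_of_add_sum_add_eq_zero hσ (fun j hj => by rw [hw, coordProj_mulVec, if_neg hj])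
    fun i hi => ?_
  have := congrFun hu i
  rw [← mulVec_mulVec, ← mulVec_mulVec, ← hw, add_mulVec, one_mulVec, ← mulVec_mulVec,
    ← mulVec_mulVec, hPw, one_sub_coordProj, coordProj_mulVec, if_pos hi, Pi.add_apply,
    coordProj_mulVec, bridgeMatrix_mulVec] at this
  simpa only [Finset.mem_compl, ite_not, Pi.zero_apply] using this

theorem isUnit_bridge [CharZero K] {σ : Equiv.Perm ι} (hσ : ∀ j, j ∈ T \ T' ↔ σ j ∈ T' \ T) :
    IsUnit (coordProj T' * (1 + (1 - coordProj T) * bridgeMatrix σ * coordProj T) * coordProj T +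
      (1 - coordProj T') * (1 + coordProj T * bridgeMatrix σ.symm * (1 - coordProj T)) *
        (1 - coordProj T) : Matrix ι ι K) := by
  have hP' := isIdempotentElem_coordProj (K := K) T'
  set g : Matrix ι ι K :=
    coordProj T' * (1 + (1 - coordProj T) * bridgeMatrix σ * coordProj T) * coordProj T +
      (1 - coordProj T') * (1 + coordProj T * bridgeMatrix σ.symm * (1 - coordProj T)) *
        (1 - coordProj T) with hg
  have hσc : ∀ j, j ∈ Tᶜ \ T'ᶜ ↔ σ.symm j ∈ T'ᶜ \ Tᶜ := by
    intro j
    have := hσ (σ.symm j)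
    simp only [Equiv.apply_symm_apply, Finset.mem_sdiff, Finset.mem_compl, not_not] at this ⊢
    tauto
  have hker : ∀ u, g *ᵥ u = 0 → u = 0 := by
    intro u hu
    have h₁ : coordProj T *ᵥ u = 0 := by
      refine coordProj_mulVec_eq_zero_of_bridge hσ ?_
      rw [← mul_add_one_sub_mul_mul hP' _
          (1 + coordProj T * bridgeMatrix σ.symm * (1 - coordProj T)),
        ← mulVec_mulVec, ← hg, hu, mulVec_zero]
    have h₂ : coordProj Tᶜ *ᵥ u = 0 := by
      refine coordProj_mulVec_eq_zero_of_bridge hσc ?_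
      rw [← one_sub_coordProj, ← one_sub_coordProj, sub_sub_cancel,
        ← one_sub_mul_add_mul_mul hP' (1 + (1 - coordProj T) * bridgeMatrix σ * coordProj T),
        ← mulVec_mulVec, ← hg, hu, mulVec_zero]
    calc u = (coordProj T + coordProj Tᶜ) *ᵥ u := by
          rw [← one_sub_coordProj, add_sub_cancel, one_mulVec]
      _ = 0 := by rw [add_mulVec, h₁, h₂, add_zero]
  rw [← mulVec_injective_iff_isUnit]
  intro x y hxy
  exact sub_eq_zero.1 (hker _ (by rw [mulVec_sub, hxy, sub_self]))

theorem exists_cell_coordProj_eq [CharZero K] (hT : T.card = T'.card) (c d : Matrix ι ι K) :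
    ∃ c₁ d₁ c₂ d₂ : Matrix ι ι K, cell (coordProj T) c₁ d₁ = cell (coordProj T') c₂ d₂ ∧
      ∀ i, cell (coordProj T) c₁ d₁ i i = cell (coordProj T) c d i i := by
  obtain ⟨σ, hσ⟩ := exists_perm_sdiff hT
  have hB : ∀ i j, bridgeMatrix σ i j ≠ (0 : K) := by
    intro i j
    simp only [bridgeMatrix, of_apply]
    split_ifs <;> norm_num
  let d₁ : Matrix ι ι K := of fun j i => c i j * d j i / bridgeMatrix σ i j
  obtain ⟨e, he⟩ := exists_isRangeKerProj_cell_of_isUnit (isIdempotentElem_coordProj T)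
    (isIdempotentElem_coordProj T') (bridgeMatrix σ) d₁ _ (isUnit_bridge hσ)
  exact ⟨bridgeMatrix σ, d₁, e, _, he.eq_cell (isIdempotentElem_coordProj T'),
    cell_coordProj_apply_self_congr fun i j _ _ => mul_div_cancel₀ _ (hB i j)⟩

end Bridge

end IdempotentCell

open IdempotentCell

/-- For every prescribed diagonal `d`, the set of idempotents `q` in `M_n(ℂ)`
with diagonal `d` is path-connected (possibly empty): any two of its points
are joined by a path inside it. -/
theorem idempotents_fixed_diagonal_pathConnected (n : ℕ) (d : Fin n → ℂ) :
    ∀ q ∈ {q : Matrix (Fin n) (Fin n) ℂ | q * q = q ∧ ∀ i, q i i = d i},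
      ∀ r ∈ {q : Matrix (Fin n) (Fin n) ℂ | q * q = q ∧ ∀ i, q i i = d i},
        JoinedIn {q : Matrix (Fin n) (Fin n) ℂ | q * q = q ∧ ∀ i, q i i = d i} q r := by
  intro q hq r hr
  obtain ⟨T, c, e, rfl⟩ := exists_eq_cell_coordProj hq.1
  obtain ⟨T', c', e', rfl⟩ := exists_eq_cell_coordProj hr.1
  have hT : T.card = T'.card := by
    have h : (T.card : ℂ) = T'.card := by
      rw [card_eq_sum_cell_coordProj_apply_self c e, card_eq_sum_cell_coordProj_apply_self c' e']
      exact Finset.sum_congr rfl fun i _ => (hq.2 i).trans (hr.2 i).symm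
    exact_mod_cast h
  obtain ⟨c₁, d₁, c₂, d₂, hbridge, hdiag⟩ := exists_cell_coordProj_eq hT c e
  have hb : ∀ i, cell (coordProj T) c₁ d₁ i i = d i := fun i => (hdiag i).trans (hq.2 i)
  refine (joinedIn_cell_coordProj hq.2 hb).trans ?_
  rw [hbridge] at hb ⊢
  exact joinedIn_cell_coordProj hb hr.2
end

section
/- Let p be an orthogonal projection in M_n with minimal block decomposition p = Σ_{j=1}^s p f_j. Then the image E(p M_n p^⊥) equals the set of diagonal matrices d with Tr(d f_j) = 0 for all j = 1, …, s; equivalently, E(p M_n p^⊥) is the orthogonal complement of {p}′ ∩ D_n inside D_n with respect to the Hilbert–Schmidt inner product. -/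
/-!
Identify `D_n` with `EuclideanSpace ℂ (Fin n)`. In finite dimension a subspace is the orthogonal
complement of its orthogonal complement, so it suffices to show that the diagonals `u` orthogonal
to every `E(p x p^⊥)` are exactly those commuting with `p`. Such `u` satisfy `Tr(p^⊥ u* p x) = 0`
for all `x`, i.e. `p u p^⊥ = 0`. Since `u` is normal, the corners `p^⊥ u p` and `p u p^⊥` have
the same Hilbert–Schmidt norm, so `p^⊥ u p = 0` as well, and `u` commutes with `p`.
-/

/-- The diagonal conditional expectation `E : M_n → D_n`, erasing off-diagonal entries. -/
def diagExp {n : ℕ} (x : Matrix (Fin n) (Fin n) ℂ) : Matrix (Fin n) (Fin n) ℂ :=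
  Matrix.of fun i j => if i = j then x i j else 0

open scoped InnerProductSpace ComplexOrder

namespace Matrix

section Corner

variable {R n : Type*} [Fintype n]

theorem conjTranspose_mul_mul_of_isSelfAdjoint [Semiring R] [StarRing R] {p q : Matrix n n R}
    (hp : IsSelfAdjoint p) (hq : IsSelfAdjoint q) (a : Matrix n n R) :
    (p * a * q)ᴴ = q * aᴴ * p := by
  have hp' : pᴴ = p := hp
  have hq' : qᴴ = q := hq
  rw [conjTranspose_mul, conjTranspose_mul, hp', hq', Matrix.mul_assoc]

variable [CommRing R] [StarRing R] [DecidableEq n] {p : Matrix n n R}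

theorem trace_conjTranspose_mul_self_corner (hp : IsStarProjection p) (a : Matrix n n R) :
    (((1 - p) * a * p)ᴴ * ((1 - p) * a * p)).trace =
      (aᴴ * a * p).trace - (aᴴ * p * a * p).trace := by
  have hq : (1 - p) * (1 - p) = 1 - p := hp.one_sub.isIdempotentElem
  calc (((1 - p) * a * p)ᴴ * ((1 - p) * a * p)).trace
      = (p * (aᴴ * ((1 - p) * (1 - p)) * a * p)).trace := by
        rw [conjTranspose_mul_mul_of_isSelfAdjoint hp.one_sub.isSelfAdjoint hp.isSelfAdjoint]
        simp only [Matrix.mul_assoc]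
    _ = (aᴴ * (1 - p) * a * (p * p)).trace := by
        rw [trace_mul_comm, hq]
        simp only [Matrix.mul_assoc]
    _ = (aᴴ * a * p).trace - (aᴴ * p * a * p).trace := by
        rw [hp.isIdempotentElem.eq, ← trace_sub]
        congr 1
        noncomm_ring

theorem trace_conjTranspose_mul_self_corner_eq (hp : IsStarProjection p) {a : Matrix n n R}
    [ha : IsStarNormal a] :
    (((1 - p) * a * p)ᴴ * ((1 - p) * a * p)).trace =
      (((1 - p) * aᴴ * p)ᴴ * ((1 - p) * aᴴ * p)).trace := by
  have hnormal : aᴴ * a = a * aᴴ := ha.star_comm_self.eq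
  have hcycle : (aᴴ * p * a * p).trace = (a * p * aᴴ * p).trace := by
    rw [Matrix.mul_assoc (aᴴ * p), trace_mul_comm, ← Matrix.mul_assoc]
  rw [trace_conjTranspose_mul_self_corner hp, trace_conjTranspose_mul_self_corner hp,
    conjTranspose_conjTranspose, hnormal, hcycle]

theorem commute_of_mul_mul_one_sub_eq_zero [PartialOrder R] [StarOrderedRing R] [NoZeroDivisors R]
    (hp : IsStarProjection p) {a : Matrix n n R} [IsStarNormal a] (h : p * a * (1 - p) = 0) :
    Commute a p := by
  have hupper : (1 - p) * aᴴ * p = 0 := by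
    rw [← conjTranspose_mul_mul_of_isSelfAdjoint hp.isSelfAdjoint hp.one_sub.isSelfAdjoint, h,
      conjTranspose_zero]
  have hlower : (1 - p) * a * p = 0 := by
    rw [← trace_conjTranspose_mul_self_eq_zero_iff, trace_conjTranspose_mul_self_corner_eq hp,
      hupper, Matrix.mul_zero, trace_zero]
  have hright : a * p = p * a * p := by
    rw [← sub_eq_zero, ← hlower]
    noncomm_ring
  have hleft : p * a = p * a * p := by
    rw [← sub_eq_zero, ← h]
    noncomm_ring
  exact hright.trans hleft.symm

end Corner

section Diagonal

variable {𝕜 ι : Type*} [RCLike 𝕜] [Fintype ι] [DecidableEq ι]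

def cornerDiag (p : Matrix ι ι 𝕜) : Matrix ι ι 𝕜 →ₗ[𝕜] EuclideanSpace 𝕜 ι :=
  (WithLp.linearEquiv 2 𝕜 (ι → 𝕜)).symm.toLinearMap ∘ₗ diagLinearMap ι 𝕜 𝕜 ∘ₗ
    (LinearMap.mulRight 𝕜 (1 - p) ∘ₗ LinearMap.mulLeft 𝕜 p)

theorem cornerDiag_apply (p x : Matrix ι ι 𝕜) :
    cornerDiag p x = WithLp.toLp 2 (p * x * (1 - p)).diag :=
  rfl

def diagCommutant (p : Matrix ι ι 𝕜) : Submodule 𝕜 (EuclideanSpace 𝕜 ι) :=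
  (Subalgebra.centralizer 𝕜 {p}).toSubmodule.comap
    (diagonalLinearMap ι 𝕜 𝕜 ∘ₗ (WithLp.linearEquiv 2 𝕜 (ι → 𝕜)).toLinearMap)

theorem mem_diagCommutant {p : Matrix ι ι 𝕜} {u : EuclideanSpace 𝕜 ι} :
    u ∈ diagCommutant p ↔ Commute (diagonal u) p := by
  simp [diagCommutant, Subalgebra.mem_centralizer_iff, commute_iff_eq, eq_comm]

theorem inner_toLp_diag (u : EuclideanSpace 𝕜 ι) (d : Matrix ι ι 𝕜) :
    ⟪u, WithLp.toLp 2 d.diag⟫_𝕜 = ((diagonal u)ᴴ * d).trace := by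
  simp [EuclideanSpace.inner_eq_star_dotProduct, trace, dotProduct, diagonal_conjTranspose,
    mul_comm]

theorem orthogonal_range_cornerDiag {p : Matrix ι ι 𝕜} (hp : IsStarProjection p) :
    (LinearMap.range (cornerDiag p))ᗮ = diagCommutant p := by
  ext u
  have : IsStarNormal (diagonal u) :=
    ⟨by rw [star_eq_conjTranspose, diagonal_conjTranspose]; exact commute_diagonal _ _⟩
  calc u ∈ (LinearMap.range (cornerDiag p))ᗮ
      ↔ ∀ x : Matrix ι ι 𝕜, ((1 - p) * (diagonal u)ᴴ * p * x).trace = 0 := by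
        simp only [Submodule.mem_orthogonal', LinearMap.mem_range, forall_exists_index,
          forall_apply_eq_imp_iff, cornerDiag_apply, inner_toLp_diag]
        refine forall_congr' fun x => ?_
        rw [← Matrix.mul_assoc, trace_mul_cycle]
        simp only [Matrix.mul_assoc]
    _ ↔ (1 - p) * (diagonal u)ᴴ * p = 0 := by
        simp only [ext_iff_trace_mul_right (B := 0), Matrix.zero_mul, trace_zero]
    _ ↔ p * diagonal u * (1 - p) = 0 := by
        rw [← conjTranspose_mul_mul_of_isSelfAdjoint hp.isSelfAdjoint hp.one_sub.isSelfAdjoint,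
          conjTranspose_eq_zero]
    _ ↔ Commute (diagonal u) p := by
        refine ⟨commute_of_mul_mul_one_sub_eq_zero hp, fun h => ?_⟩
        rw [← h.eq, Matrix.mul_assoc, hp.mul_one_sub_self, Matrix.mul_zero]
    _ ↔ u ∈ diagCommutant p := mem_diagCommutant.symm

theorem toLp_diag_mem_orthogonal_diagCommutant_iff {p d : Matrix ι ι 𝕜} :
    WithLp.toLp 2 d.diag ∈ (diagCommutant p)ᗮ ↔
      ∀ c : Matrix ι ι 𝕜, c.IsDiag → c * p = p * c → (cᴴ * d).trace = 0 := by
  simp only [Submodule.mem_orthogonal, inner_toLp_diag]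
  constructor
  · intro h c hc hcp
    rw [← hc.diagonal_diag]
    refine h (WithLp.toLp 2 c.diag) (mem_diagCommutant.2 ?_)
    rwa [WithLp.ofLp_toLp, hc.diagonal_diag]
  · intro h u hu
    exact h _ (isDiag_diagonal _) (mem_diagCommutant.1 hu)

end Diagonal

end Matrix

open Matrix

theorem diagExp_eq_diagonal_diag {n : ℕ} (x : Matrix (Fin n) (Fin n) ℂ) :
    diagExp x = diagonal x.diag := by
  ext i j
  by_cases h : i = j <;> simp [diagExp, h]

theorem exists_eq_diagExp_corner_iff {n : ℕ} {p d : Matrix (Fin n) (Fin n) ℂ} :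
    (∃ x, d = diagExp (p * x * (1 - p))) ↔
      d.IsDiag ∧ WithLp.toLp 2 d.diag ∈ LinearMap.range (cornerDiag p) := by
  simp only [diagExp_eq_diagonal_diag, LinearMap.mem_range, cornerDiag_apply,
    (WithLp.toLp_injective 2).eq_iff]
  constructor
  · rintro ⟨x, rfl⟩
    exact ⟨isDiag_diagonal _, x, by rw [diag_diagonal]⟩
  · rintro ⟨hd, x, hx⟩
    exact ⟨x, by rw [hx, hd.diagonal_diag]⟩

/-- For a projection `p`, the image `E(p M_n p^⊥)` is exactly the orthogonal complement
of `{p}′ ∩ D_n` inside `D_n` with respect to the Hilbert–Schmidt inner product, i.e. the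
set of diagonal matrices `d` with `Tr(c* d) = 0` for every diagonal `c` commuting with `p`. -/
theorem image_of_corner_under_diagonal_expectation (n : ℕ)
    (p : Matrix (Fin n) (Fin n) ℂ) (hp : p * p = p) (hps : p.conjTranspose = p) :
    {d : Matrix (Fin n) (Fin n) ℂ | ∃ x, d = diagExp (p * x * (1 - p))} =
      {d : Matrix (Fin n) (Fin n) ℂ | d.IsDiag ∧
        ∀ c : Matrix (Fin n) (Fin n) ℂ, c.IsDiag → c * p = p * c →
          (c.conjTranspose * d).trace = 0} := by
  have hP : IsStarProjection p := ⟨hp, hps⟩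
  ext d
  rw [Set.mem_ofPred, Set.mem_ofPred, exists_eq_diagExp_corner_iff,
    ← toLp_diag_mem_orthogonal_diagCommutant_iff, ← orthogonal_range_cornerDiag hP,
    Submodule.orthogonal_orthogonal]
end

section
/- Let p be an orthogonal projection in M_n with minimal block decomposition p = Σ_{j=1}^s p f_j, and let d be diagonal. Then d is the diagonal of some idempotent with the same range as p if and only if Tr(d f_j) = rank(p f_j) for j = 1, …, s. -/
/-!
Every idempotent with the range of `p` has the form `q = p + p x (1 - p)`, so the question is
whether `diag d - diag p` lies in the range of the linear map `x ↦ diag (p x (1 - p))`. A linear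
functional vanishing on that range has the form `diag M ↦ tr (M C)` for a diagonal `C` with
`(1 - p) C p = 0`. As `C` is normal, this forces `C` to commute with `p`; then `C` is a linear
combination of its level-set projections, which are diagonal projections commuting with `p`, and
the trace condition on those says that the functional kills `diag d - diag p`.
Conversely, for a diagonal `f` commuting with `p`, `tr (d f) = tr (q f) = tr (p f) = rank (p f)`.
-/

open Matrix

namespace IsIdempotentElem

variable {R : Type*} [Ring R] {p : R}

theorem add_mul_mul_one_sub (hp : IsIdempotentElem p) (x : R) :
    IsIdempotentElem (p + p * x * (1 - p)) := by
  have h := hp.one_sub_mul_self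
  unfold IsIdempotentElem at *
  calc (p + p * x * (1 - p)) * (p + p * x * (1 - p))
      = p * p + p * p * x * (1 - p) + p * x * ((1 - p) * p)
        + p * x * ((1 - p) * p) * x * (1 - p) := by noncomm_ring
    _ = p + p * x * (1 - p) := by rw [h, hp]; noncomm_ring

theorem add_mul_mul_one_sub_mul_self (hp : IsIdempotentElem p) (x : R) :
    (p + p * x * (1 - p)) * p = p := by
  rw [add_mul, hp.eq, mul_assoc, hp.one_sub_mul_self, mul_zero, add_zero]

theorem mul_add_mul_mul_one_sub (hp : IsIdempotentElem p) (x : R) :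
    p * (p + p * x * (1 - p)) = p + p * x * (1 - p) := by
  rw [mul_add, hp.eq, ← mul_assoc, ← mul_assoc, hp.eq]

end IsIdempotentElem

namespace Matrix

variable {n : Type*}

section Trace

variable [Fintype n]

theorem trace_mul_of_isDiag {R : Type*} [NonUnitalNonAssocSemiring R] (M : Matrix n n R)
    {f : Matrix n n R} (hf : f.IsDiag) : (M * f).trace = ∑ i, M i i * f i i :=
  Finset.sum_congr rfl fun i _ =>
    Finset.sum_eq_single i (fun k _ hk => by simp [hf hk]) (by simp)

theorem trace_mul_eq_of_mul_eq {R : Type*} [CommSemiring R] {p q f : Matrix n n R}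
    (hqp : q * p = p) (hpq : p * q = q) (hfp : Commute f p) :
    (q * f).trace = (p * f).trace :=
  calc (q * f).trace = (p * q * f).trace := by rw [hpq]
    _ = (q * (f * p)).trace := by rw [mul_assoc, trace_mul_comm, mul_assoc]
    _ = (q * p * f).trace := by rw [hfp.eq, mul_assoc]
    _ = (p * f).trace := by rw [hqp]

theorem rank_eq_trace_of_isIdempotentElem [DecidableEq n] {K : Type*} [Field K]
    {e : Matrix n n K} (he : IsIdempotentElem e) : (e.rank : K) = e.trace := by
  have hlin : IsIdempotentElem (toLin' e) := he.map toLinAlgEquiv'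
  rw [← trace_toLin'_eq, (LinearMap.IsIdempotentElem.isProj_range _ hlin).trace, rank,
    toLin'_apply']

end Trace

section LevelSet

variable [DecidableEq n] {R : Type*} [CommRing R] [DecidableEq R]

def levelSetProj (γ : n → R) (a : R) : Matrix n n R :=
  diagonal fun i => if γ i = a then 1 else 0

variable (γ : n → R) (a : R)

theorem isDiag_levelSetProj : (levelSetProj γ a).IsDiag := isDiag_diagonal _

theorem isIdempotentElem_levelSetProj [Fintype n] : IsIdempotentElem (levelSetProj γ a) := by
  unfold IsIdempotentElem levelSetProj
  rw [diagonal_mul_diagonal]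
  congr 1
  ext i
  split_ifs <;> simp

theorem conjTranspose_levelSetProj [StarRing R] : (levelSetProj γ a)ᴴ = levelSetProj γ a := by
  unfold levelSetProj
  rw [diagonal_conjTranspose]
  congr 1
  ext i
  split_ifs <;> simp [*]

theorem diagonal_eq_sum_levelSetProj [Fintype n] :
    diagonal γ = ∑ a ∈ Finset.univ.image γ, a • levelSetProj γ a := by
  ext i j
  by_cases hij : i = j
  · subst hij
    simp [levelSetProj, Matrix.sum_apply]
  · simp [levelSetProj, Matrix.sum_apply, hij]

variable {γ}

theorem commute_levelSetProj [Fintype n] [NoZeroDivisors R] {p : Matrix n n R}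
    (hγ : Commute (diagonal γ) p) (a : R) : Commute (levelSetProj γ a) p := by
  ext i j
  have hij : γ i * p i j = p i j * γ j := by
    simpa [diagonal_mul, mul_diagonal] using congrFun (congrFun hγ.eq i) j
  by_cases hp : p i j = 0
  · simp [levelSetProj, diagonal_mul, mul_diagonal, hp]
  · have hγij : γ i = γ j := mul_right_cancel₀ hp (hij.trans (mul_comm _ _))
    simp [levelSetProj, diagonal_mul, mul_diagonal, hγij]

theorem trace_mul_diagonal_eq_of_commute [Fintype n] [NoZeroDivisors R] [StarRing R]
    {p d : Matrix n n R}
    (h : ∀ f : Matrix n n R, f.IsDiag → IsIdempotentElem f → fᴴ = f → Commute f p →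
      (d * f).trace = (p * f).trace)
    (hγ : Commute (diagonal γ) p) :
    (d * diagonal γ).trace = (p * diagonal γ).trace := by
  simp only [diagonal_eq_sum_levelSetProj γ, Finset.mul_sum, mul_smul_comm, trace_sum,
    trace_smul]
  refine Finset.sum_congr rfl fun a _ => ?_
  rw [h _ (isDiag_levelSetProj γ a) (isIdempotentElem_levelSetProj γ a)
    (conjTranspose_levelSetProj γ a) (commute_levelSetProj hγ a)]

end LevelSet

variable [Fintype n] [DecidableEq n]

theorem commute_of_one_sub_mul_mul_eq_zero {R : Type*} [CommRing R] [PartialOrder R]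
    [StarRing R] [StarOrderedRing R] [NoZeroDivisors R] {p C : Matrix n n R}
    (hp : IsIdempotentElem p) (hps : pᴴ = p) (hC : Commute C Cᴴ) (hinv : (1 - p) * C * p = 0) :
    Commute C p := by
  have hinv' : p * Cᴴ * (1 - p) = 0 := by
    simpa [conjTranspose_mul, hps, mul_assoc] using congrArg conjTranspose hinv
  set A := p * C * (1 - p) with hA
  -- Normality turns `A Aᴴ` into a commutator of `p Cᴴ p` and `p C p`, so its trace vanishes.
  have hAA : A * Aᴴ = p * Cᴴ * p * (C * p) - p * C * p * Cᴴ * p :=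
    calc A * Aᴴ = p * C * ((1 - p) * (1 - p)) * Cᴴ * p := by
          simp only [hA, conjTranspose_mul, hps, conjTranspose_sub, conjTranspose_one]
          noncomm_ring
      _ = p * (C * Cᴴ) * p - p * C * p * Cᴴ * p := by rw [hp.one_sub.eq]; noncomm_ring
      _ = p * Cᴴ * (1 - p) * C * p + p * Cᴴ * p * (C * p) - p * C * p * Cᴴ * p := by
          rw [hC.eq]; noncomm_ring
      _ = p * Cᴴ * p * (C * p) - p * C * p * Cᴴ * p := by rw [hinv']; noncomm_ring
  have hA0 : A = 0 := by
    rw [← trace_mul_conjTranspose_self_eq_zero_iff, hAA, trace_sub, sub_eq_zero, trace_mul_comm]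
    calc (C * p * (p * Cᴴ * p)).trace = (C * p * Cᴴ * p).trace := by
          rw [show C * p * (p * Cᴴ * p) = C * (p * p) * Cᴴ * p by noncomm_ring, hp.eq]
      _ = (p * (C * p * Cᴴ)).trace := trace_mul_comm _ _
      _ = (p * C * p * Cᴴ * p).trace := by
          rw [trace_mul_comm (p * C * p * Cᴴ) p,
            show p * (p * C * p * Cᴴ) = p * p * (C * p * Cᴴ) by noncomm_ring, hp.eq]
  have hCp : C * p = p * C * p := by rw [← sub_eq_zero, ← hinv]; noncomm_ring
  have hpC : p * C = p * C * p := by rw [← sub_eq_zero, ← hA0, hA]; noncomm_ring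
  exact hCp.trans hpC.symm

theorem exists_diag_mul_mul_one_sub_eq {K : Type*} [Field K] [DecidableEq K] [PartialOrder K]
    [StarRing K] [StarOrderedRing K] {p d : Matrix n n K} (hp : IsIdempotentElem p)
    (hps : pᴴ = p)
    (h : ∀ f : Matrix n n K, f.IsDiag → IsIdempotentElem f → fᴴ = f → Commute f p →
      (d * f).trace = (p * f).trace) :
    ∃ x : Matrix n n K, (p * x * (1 - p)).diag = d.diag - p.diag := by
  let T : Matrix n n K →ₗ[K] n → K :=
    diagLinearMap n K K ∘ₗ LinearMap.mulRight K (1 - p) ∘ₗ LinearMap.mulLeft K p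
  suffices d.diag - p.diag ∈ LinearMap.range T from this
  by_contra hv
  obtain ⟨φ, hφv, hφT⟩ := Submodule.exists_dual_map_eq_bot_of_notMem hv inferInstance
  set γ : n → K := fun i => φ (Pi.single i 1)
  have hφ : ∀ M : Matrix n n K, φ M.diag = (M * diagonal γ).trace := fun M => by
    rw [LinearMap.pi_apply_eq_sum_univ φ, trace_mul_of_isDiag _ (isDiag_diagonal γ)]
    refine Finset.sum_congr rfl fun i _ => ?_
    simp only [diag_apply, diagonal_apply_eq, smul_eq_mul, γ]
    congr 2
    ext j
    simp [Pi.single_apply, eq_comm]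
  have hinv : (1 - p) * diagonal γ * p = 0 := by
    refine ext_iff_trace_mul_left.2 fun x => ?_
    have hφx : φ (p * x * (1 - p)).diag = 0 :=
      LinearMap.le_ker_iff_map.2 hφT (LinearMap.mem_range_self T x)
    rw [hφ] at hφx
    rw [mul_zero, trace_zero, ← hφx, ← mul_assoc, ← mul_assoc, trace_mul_comm, ← mul_assoc,
      ← mul_assoc]
  have hnormal : Commute (diagonal γ) (diagonal γ)ᴴ := by
    rw [diagonal_conjTranspose]
    exact commute_diagonal _ _
  have hcomm := commute_of_one_sub_mul_mul_eq_zero hp hps hnormal hinv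
  exact hφv (by rw [map_sub, hφ, hφ, trace_mul_diagonal_eq_of_commute h hcomm, sub_self])

end Matrix

theorem diagonal_of_idempotent_with_prescribed_range_general (n : ℕ)
    (p d : Matrix (Fin n) (Fin n) ℂ) (hp : p * p = p) (hps : p.conjTranspose = p) :
    (∃ q : Matrix (Fin n) (Fin n) ℂ, q * q = q ∧ q * p = p ∧ p * q = q ∧
        ∀ i, q i i = d i i) ↔
      ∀ f : Matrix (Fin n) (Fin n) ℂ, f.IsDiag → f * f = f → f.conjTranspose = f →
        f * p = p * f → (d * f).trace = ((p * f).rank : ℂ) := by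
  have hrank : ∀ f : Matrix (Fin n) (Fin n) ℂ, IsIdempotentElem f → Commute f p →
      ((p * f).rank : ℂ) = (p * f).trace := fun f hf hfp =>
    rank_eq_trace_of_isIdempotentElem (IsIdempotentElem.mul_of_commute hfp.symm hp hf)
  constructor
  · rintro ⟨q, -, hqp, hpq, hdiag⟩ f hfd hff - hfp
    rw [hrank f hff hfp, ← trace_mul_eq_of_mul_eq hqp hpq hfp, trace_mul_of_isDiag _ hfd,
      trace_mul_of_isDiag _ hfd]
    simp only [hdiag]
  · intro h
    obtain ⟨x, hx⟩ := open ComplexOrder in exists_diag_mul_mul_one_sub_eq hp hps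
      fun f hfd hff hfs hfp => (h f hfd hff hfs hfp).trans (hrank f hff hfp)
    refine ⟨p + p * x * (1 - p), IsIdempotentElem.add_mul_mul_one_sub hp x,
      IsIdempotentElem.add_mul_mul_one_sub_mul_self hp x,
      IsIdempotentElem.mul_add_mul_mul_one_sub hp x, fun i => ?_⟩
    simp [show (p * x * (1 - p)) i i = d i i - p i i from congrFun hx i]

/-- A diagonal `d` is the diagonal of an idempotent with the same range as the
projection `p` if and only if `Tr(d f) = rank(p f)` for every diagonal projection `f`
commuting with `p` (equivalently, for each minimal block projection of `p`). -/
theorem diagonal_of_idempotent_with_prescribed_range (n : ℕ)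
    (p d : Matrix (Fin n) (Fin n) ℂ) (hp : p * p = p) (hps : p.conjTranspose = p)
    (hd : d.IsDiag) :
    (∃ q : Matrix (Fin n) (Fin n) ℂ, q * q = q ∧ q * p = p ∧ p * q = q ∧
        ∀ i, q i i = d i i) ↔
      ∀ f : Matrix (Fin n) (Fin n) ℂ, f.IsDiag → f * f = f → f.conjTranspose = f →
        f * p = p * f → (d * f).trace = ((p * f).rank : ℂ) :=
  diagonal_of_idempotent_with_prescribed_range_general n p d hp hps
end

section
/- Let q be a nontrivial idempotent in M_n(ℂ) with dim({[q]}′ ∩ D_n) > 1. Then there exists an idempotent r in M_n(ℂ) with E(r) = E(q), with {[r]}′ ∩ D_n strictly contained in {[q]}′ ∩ D_n, and connected to q by a piecewise affine path of at most two segments lying in the set of idempotents with diagonal E(q). -/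
/-!
Let `P = [q]`. A non-scalar diagonal matrix commuting with `P` yields a diagonal projection `d`
commuting with `P`; replacing `d` by `1 - d` if necessary, `d P ≠ 0` and `(1 - d) (1 - P) ≠ 0`.
The pinching `m = d q d + (1 - d) q (1 - d)` has the diagonal of `q` and satisfies `P m = m`,
`m P = P`, so `q` and `m` have the same range and the segment from `q` to `m` consists of
idempotents. Take a unit vector `w ∈ ran (d P)` and a nonzero `ζ ∈ ker d ∩ ker m` with
`(1 - P) ζ ≠ 0`. The shear `r = (1 + ε ζ w*) m` has the same kernel as `m`, so the segment from
`m` to `r` consists of idempotents too, and it has the same diagonal, since `ζ (w* m)` lies in an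
off-diagonal block of `d`. Its range projection is `P` with the line `ℂ w` replaced by
`ℂ (w + ε (1 - P) ζ)`: for small `ε ≠ 0` it keeps every nonzero entry of `P`, and it has a nonzero
entry in a block where `P` vanishes because it commutes with `d`. Since a diagonal matrix commutes
with `A` exactly when its diagonal is constant along the nonzero entries of `A`, it follows that
`{[r]}′ ∩ D_n ⊆ {[q]}′ ∩ D_n`, and `d` lies only in the latter.
-/

/-- The range projection `[q] = q (q + q* - id)⁻¹` of an idempotent `q`. -/
noncomputable def rangeProj {n : ℕ} (q : Matrix (Fin n) (Fin n) ℂ) :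
    Matrix (Fin n) (Fin n) ℂ :=
  q * (q + q.conjTranspose - 1)⁻¹

open Matrix Filter Topology
open scoped ComplexOrder

theorem Matrix.IsHermitian.star_vecMul {ι K : Type*} [Fintype ι] [NonUnitalSemiring K]
    [StarRing K] {A : Matrix ι ι K} (hA : A.IsHermitian) (v : ι → K) :
    star v ᵥ* A = star (A *ᵥ v) := by
  rw [star_mulVec, hA.eq]

section RangeProj

variable {n : ℕ} {x : Matrix (Fin n) (Fin n) ℂ}

theorem isUnit_add_conjTranspose_sub_one (hx : IsIdempotentElem x) : IsUnit (x + xᴴ - 1) := by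
  have hxH : xᴴ * xᴴ = xᴴ := by rw [← conjTranspose_mul, hx.eq]
  have hsq : (x + xᴴ - 1) * (x + xᴴ - 1) = 1 + (x - xᴴ) * (x - xᴴ)ᴴ := by
    simp only [conjTranspose_sub, conjTranspose_conjTranspose, sub_mul, mul_sub, add_mul,
      mul_add, one_mul, mul_one, hx.eq, hxH]
    abel
  apply isUnit_of_mul_isUnit_left (y := x + xᴴ - 1)
  rw [hsq]
  exact (PosDef.one.add_posSemidef (posSemidef_self_mul_conjTranspose _)).isUnit

theorem inv_mul_eq_mul_inv_of_mul_eq {ι R : Type*} [Fintype ι] [DecidableEq ι] [CommRing R]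
    {a b c : Matrix ι ι R} (ha : IsUnit a) (h : b * a = a * c) : a⁻¹ * b = c * a⁻¹ := by
  have ha' := (isUnit_iff_isUnit_det a).mp ha
  calc a⁻¹ * b = a⁻¹ * (b * a * a⁻¹) := by rw [mul_nonsing_inv_cancel_right _ _ ha']
    _ = c * a⁻¹ := by rw [h, Matrix.mul_assoc, nonsing_inv_mul_cancel_left _ _ ha']

-- With `a = x + xᴴ - 1` one has `x a = x xᴴ = a xᴴ` and `xᴴ a = xᴴ x = a x`.
theorem inv_mul_eq_conjTranspose_mul_inv (hx : IsIdempotentElem x) :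
    (x + xᴴ - 1)⁻¹ * x = xᴴ * (x + xᴴ - 1)⁻¹ ∧ (x + xᴴ - 1)⁻¹ * xᴴ = x * (x + xᴴ - 1)⁻¹ := by
  have hxH : xᴴ * xᴴ = xᴴ := by rw [← conjTranspose_mul, hx.eq]
  have ha := isUnit_add_conjTranspose_sub_one hx
  constructor <;> refine inv_mul_eq_mul_inv_of_mul_eq ha ?_ <;>
    simp only [mul_sub, sub_mul, mul_add, add_mul, mul_one, one_mul, hx.eq, hxH] <;> abel

theorem mul_rangeProj (hx : IsIdempotentElem x) : x * rangeProj x = rangeProj x := by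
  rw [rangeProj, ← Matrix.mul_assoc, hx.eq]

theorem rangeProj_mul (hx : IsIdempotentElem x) : rangeProj x * x = x := by
  have ha := (isUnit_iff_isUnit_det _).mp (isUnit_add_conjTranspose_sub_one hx)
  have hxa : x * xᴴ = x * (x + xᴴ - 1) := by
    simp only [mul_sub, mul_add, mul_one, hx.eq]; abel
  rw [rangeProj, Matrix.mul_assoc, (inv_mul_eq_conjTranspose_mul_inv hx).1, ← Matrix.mul_assoc,
    hxa, mul_nonsing_inv_cancel_right _ _ ha]

theorem isHermitian_rangeProj (hx : IsIdempotentElem x) : (rangeProj x).IsHermitian := by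
  have haH : (x + xᴴ - 1)ᴴ = x + xᴴ - 1 := by
    simp only [conjTranspose_sub, conjTranspose_add, conjTranspose_conjTranspose,
      conjTranspose_one]; abel
  rw [IsHermitian, rangeProj, conjTranspose_mul, conjTranspose_nonsing_inv, haH,
    (inv_mul_eq_conjTranspose_mul_inv hx).2]

theorem isIdempotentElem_rangeProj (hx : IsIdempotentElem x) : IsIdempotentElem (rangeProj x) := by
  calc rangeProj x * rangeProj x = rangeProj x * (x * rangeProj x) := by rw [mul_rangeProj hx]
    _ = rangeProj x := by rw [← Matrix.mul_assoc, rangeProj_mul hx, mul_rangeProj hx]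

theorem rangeProj_eq_of {M : Matrix (Fin n) (Fin n) ℂ} (hx : IsIdempotentElem x)
    (hM : M.IsHermitian) (hMx : M * x = x) (hxM : x * M = M) : rangeProj x = M := by
  have key : ∀ {A B : Matrix (Fin n) (Fin n) ℂ}, A * x = x → x * B = B → A * B = B :=
    fun hA hB => by rw [← hB, ← Matrix.mul_assoc, hA]
  calc rangeProj x = M * rangeProj x := (key hMx (mul_rangeProj hx)).symm
    _ = ((rangeProj x) * M)ᴴ := by rw [conjTranspose_mul, hM.eq, (isHermitian_rangeProj hx).eq]
    _ = M := by rw [key (rangeProj_mul hx) hxM, hM.eq]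

end RangeProj

section Ring

variable {R : Type*} [Ring R]

theorem isIdempotentElem_of_mul_eq_of_mul_eq {a b : R} (hab : a * b = b) (hba : b * a = a) :
    IsIdempotentElem a := by
  rw [IsIdempotentElem]; nth_rw 2 [← hba]; rw [← mul_assoc, hab, hba]

theorem isIdempotentElem_of_mul_eq_self_of_mul_eq_self {a b : R} (hab : a * b = a)
    (hba : b * a = b) : IsIdempotentElem a := by
  rw [IsIdempotentElem]; nth_rw 1 [← hab]; rw [mul_assoc, hba, hab]

theorem isIdempotentElem_smul_add_smul_of_mul_eq_right {S : Type*} [CommSemiring S]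
    [Algebra S R] {a b : R} (hab : a * b = b) (hba : b * a = a) {s t : S} (hst : s + t = 1) :
    IsIdempotentElem (s • a + t • b) := by
  have hleft : ∀ c, c * a = a → c * b = b → c * (s • a + t • b) = s • a + t • b := by
    intro c hca hcb; rw [mul_add, mul_smul_comm, mul_smul_comm, hca, hcb]
  rw [IsIdempotentElem, add_mul, smul_mul_assoc, smul_mul_assoc,
    hleft a (isIdempotentElem_of_mul_eq_of_mul_eq hab hba).eq hab,
    hleft b hba (isIdempotentElem_of_mul_eq_of_mul_eq hba hab).eq, ← add_smul, hst, one_smul]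

theorem isIdempotentElem_smul_add_smul_of_mul_eq_left {S : Type*} [CommSemiring S]
    [Algebra S R] {a b : R} (hab : a * b = a) (hba : b * a = b) {s t : S} (hst : s + t = 1) :
    IsIdempotentElem (s • a + t • b) := by
  have hleft : ∀ c, c * a = c → c * b = c → c * (s • a + t • b) = c := by
    intro c hca hcb; rw [mul_add, mul_smul_comm, mul_smul_comm, hca, hcb, ← add_smul, hst, one_smul]
  rw [IsIdempotentElem, add_mul, smul_mul_assoc, smul_mul_assoc,
    hleft a (isIdempotentElem_of_mul_eq_self_of_mul_eq_self hab hba).eq hab,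
    hleft b hba (isIdempotentElem_of_mul_eq_self_of_mul_eq_self hba hab).eq]

theorem mul_ne_zero_and_one_sub_mul_one_sub_ne_zero_or {d p : R} (hd0 : d ≠ 0) (hd1 : d ≠ 1)
    (hp0 : p ≠ 0) (hp1 : p ≠ 1) :
    (d * p ≠ 0 ∧ (1 - d) * (1 - p) ≠ 0) ∨ ((1 - d) * p ≠ 0 ∧ d * (1 - p) ≠ 0) := by
  by_cases hdp : d * p = 0
  · right
    rw [sub_mul, mul_sub, hdp, one_mul, mul_one, sub_zero, sub_zero]
    exact ⟨hp0, hd0⟩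
  by_cases hdp' : (1 - d) * (1 - p) = 0
  · right
    constructor
    · intro h
      apply hd1
      rw [eq_comm, ← sub_eq_zero]
      calc 1 - d = (1 - d) * p + (1 - d) * (1 - p) := by noncomm_ring
        _ = 0 := by rw [h, hdp', add_zero]
    · intro h
      apply hp1
      rw [eq_comm, ← sub_eq_zero]
      calc 1 - p = d * (1 - p) + (1 - d) * (1 - p) := by noncomm_ring
        _ = 0 := by rw [h, hdp', add_zero]
  · exact Or.inl ⟨hdp, hdp'⟩

def pinch (d a : R) : R := d * a * d + (1 - d) * a * (1 - d)

theorem commute_pinch {d : R} (hd : IsIdempotentElem d) (a : R) : Commute d (pinch d a) := by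
  have h1 : d * (1 - d) = 0 := by rw [mul_sub, mul_one, hd.eq, sub_self]
  have h2 : (1 - d) * d = 0 := by rw [sub_mul, one_mul, hd.eq, sub_self]
  simp only [Commute, SemiconjBy, pinch, mul_add, add_mul, ← mul_assoc, hd.eq, h1, zero_mul]
  simp only [mul_assoc, h2, hd.eq, mul_zero]

theorem mul_pinch {d p a : R} (hdp : Commute d p) (hpa : p * a = a) :
    p * pinch d a = pinch d a := by
  have hdp' : Commute (1 - d) p := (Commute.one_left p).sub_left hdp
  simp only [pinch, mul_add, ← mul_assoc, ← hdp.eq, ← hdp'.eq]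
  simp only [mul_assoc, hpa]

theorem pinch_mul {d p a : R} (hd : IsIdempotentElem d) (hdp : Commute d p) (hap : a * p = p) :
    pinch d a * p = p := by
  have hdp' : Commute (1 - d) p := (Commute.one_left p).sub_left hdp
  simp only [pinch, add_mul, mul_assoc, hdp.eq, hdp'.eq]
  simp only [← mul_assoc, hap, hdp.eq, hdp'.eq]
  rw [mul_assoc, hd.eq, mul_assoc, hd.one_sub.eq, ← mul_add, add_sub_cancel, mul_one]

end Ring

theorem pinch_apply_self {ι K : Type*} [Fintype ι] [DecidableEq ι] [CommRing K]
    {d : Matrix ι ι K} (hd : d.IsDiag) (hdd : IsIdempotentElem d) (a : Matrix ι ι K) (i : ι) :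
    pinch d a i i = a i i := by
  obtain ⟨e, rfl⟩ : ∃ e, d = diagonal e := ⟨_, hd.diagonal_diag.symm⟩
  have hii : e i * e i = e i := by simpa using congrFun (congrFun hdd.eq i) i
  simp only [pinch, Matrix.add_apply, sub_mul, mul_sub, Matrix.one_mul, Matrix.mul_one,
    Matrix.sub_apply, diagonal_mul, mul_diagonal]
  linear_combination (2 * a i i) * hii

namespace Matrix.IsDiag

variable {ι K : Type*} [DecidableEq ι]

theorem mulVec_apply [Fintype ι] [NonUnitalNonAssocSemiring K] {d : Matrix ι ι K}
    (hd : d.IsDiag) (v : ι → K) (i : ι) : (d *ᵥ v) i = d i i * v i := by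
  conv_lhs => rw [← hd.diagonal_diag]
  exact mulVec_diagonal _ _ _

theorem commute_iff [Fintype ι] [CommRing K] [NoZeroDivisors K] {c A : Matrix ι ι K}
    (hc : c.IsDiag) :
    Commute c A ↔ ∀ i j, A i j ≠ 0 → c i i = c j j := by
  obtain ⟨e, rfl⟩ : ∃ e, c = diagonal e := ⟨_, hc.diagonal_diag.symm⟩
  simp only [Commute, SemiconjBy, ← Matrix.ext_iff, diagonal_mul, mul_diagonal, diagonal_apply_eq]
  refine forall₂_congr fun i j => ?_
  rw [mul_comm (A i j), ← sub_eq_zero, ← sub_mul, mul_eq_zero, sub_eq_zero, or_iff_not_imp_right]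

theorem commute_of_apply_ne_zero [Fintype ι] [CommRing K] [NoZeroDivisors K] {c A B : Matrix ι ι K}
    (hc : c.IsDiag) (hAB : ∀ i j, A i j ≠ 0 → B i j ≠ 0) (h : Commute c B) : Commute c A :=
  hc.commute_iff.2 fun i j hA => hc.commute_iff.1 h i j (hAB i j hA)

theorem exists_apply_ne_of_ne_smul_one [Semiring K] {c : Matrix ι ι K} (hc : c.IsDiag)
    (h : ¬∃ z : K, c = z • 1) : ∃ i j, c i i ≠ c j j := by
  by_contra! hall
  apply h
  rcases isEmpty_or_nonempty ι with hι | ⟨⟨i₀⟩⟩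
  · exact ⟨0, Subsingleton.elim _ _⟩
  · refine ⟨c i₀ i₀, ?_⟩
    conv_lhs => rw [← hc.diagonal_diag]
    rw [smul_one_eq_diagonal]
    exact congrArg diagonal (funext fun i => hall i i₀)

-- The spectral projection of `c` for one of its eigenvalues.
theorem exists_projection_commute [Fintype ι] [Field K] [StarRing K] {c A : Matrix ι ι K}
    (hc : c.IsDiag) (hcA : Commute c A) (h : ¬∃ z : K, c = z • 1) :
    ∃ d : Matrix ι ι K, d.IsDiag ∧ d.IsHermitian ∧ IsIdempotentElem d ∧ Commute d A ∧
      d ≠ 0 ∧ d ≠ 1 := by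
  classical
  obtain ⟨i₀, j₀, hne⟩ := hc.exists_apply_ne_of_ne_smul_one h
  let e : ι → K := fun i => if c i i = c i₀ i₀ then 1 else 0
  refine ⟨diagonal e, isDiag_diagonal e, ?_, ?_, ?_, ?_, ?_⟩
  · rw [IsHermitian, diagonal_conjTranspose]
    exact congrArg diagonal (funext fun i => by by_cases h : c i i = c i₀ i₀ <;> simp [e, h])
  · rw [IsIdempotentElem, diagonal_mul_diagonal]
    exact congrArg diagonal (funext fun i => by by_cases h : c i i = c i₀ i₀ <;> simp [e, h])
  · exact (isDiag_diagonal e).commute_iff.2 fun i j hA => by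
      simp [e, hc.commute_iff.1 hcA i j hA]
  · intro h
    simpa [e] using congrFun (congrFun h i₀) i₀
  · intro h
    exact hne (by simpa [e, eq_comm] using congrFun (congrFun h j₀) j₀)

theorem exists_projection_mul_ne_zero [Fintype ι] [Field K] [StarRing K] {c P : Matrix ι ι K}
    (hc : c.IsDiag) (hcP : Commute c P) (h : ¬∃ z : K, c = z • 1) (hP0 : P ≠ 0) (hP1 : P ≠ 1) :
    ∃ d : Matrix ι ι K, d.IsDiag ∧ d.IsHermitian ∧ IsIdempotentElem d ∧ Commute d P ∧
      d * P ≠ 0 ∧ (1 - d) * (1 - P) ≠ 0 := by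
  obtain ⟨d, hd, hdH, hdd, hdP, hd0, hd1⟩ := hc.exists_projection_commute hcP h
  rcases mul_ne_zero_and_one_sub_mul_one_sub_ne_zero_or hd0 hd1 hP0 hP1 with h | ⟨h₁, h₂⟩
  · exact ⟨d, hd, hdH, hdd, hdP, h⟩
  · exact ⟨1 - d, isDiag_one.sub hd, isHermitian_one.sub hdH, hdd.one_sub,
      (Commute.one_left _).sub_left hdP, h₁, by rwa [sub_sub_cancel]⟩

end Matrix.IsDiag

theorem exists_smul_star_dotProduct_self_eq_one {ι : Type*} [Fintype ι] {v : ι → ℂ}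
    (hv : v ≠ 0) : ∃ c : ℂ, star (c • v) ⬝ᵥ (c • v) = 1 := by
  obtain ⟨hre, him⟩ := Complex.pos_iff.1 (dotProduct_star_self_pos_iff.2 hv)
  set s := star v ⬝ᵥ v
  have hs : (s.re : ℂ) = s := Complex.ext (by simp) (by simpa using him)
  refine ⟨((√s.re)⁻¹ : ℝ), ?_⟩
  rw [star_smul, smul_dotProduct, dotProduct_smul, smul_eq_mul, smul_eq_mul, ← mul_assoc,
    Complex.star_def, Complex.conj_ofReal, ← Complex.ofReal_mul, ← mul_inv,
    Real.mul_self_sqrt hre.le, Complex.ofReal_inv, hs, inv_mul_cancel₀]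
  exact fun h => by simp [h] at hre

section LineSwap

variable {ι K : Type*} [Fintype ι] [Field K] [StarRing K]

-- For a unit vector `w` in the range of the orthogonal projection `P` and `u ⟂ ran P ⊖ ℂ w`,
-- the orthogonal projection onto `(ran P ⊖ ℂ w) ⊕ ℂ u`.
def lineSwap (P : Matrix ι ι K) (w u : ι → K) : Matrix ι ι K :=
  P - vecMulVec w (star w) + (star u ⬝ᵥ u)⁻¹ • vecMulVec u (star u)

theorem isIdempotentElem_sub_vecMulVec {P : Matrix ι ι K} {w : ι → K} (hP : IsIdempotentElem P)
    (hPw : P *ᵥ w = w) (hwP : star w ᵥ* P = star w) (hw : star w ⬝ᵥ w = 1) :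
    IsIdempotentElem (P - vecMulVec w (star w)) := by
  simp only [IsIdempotentElem, sub_mul, mul_sub, hP.eq, mul_vecMulVec, vecMulVec_mul, hPw, hwP,
    vecMulVec_mulVec, hw, op_smul_eq_smul, one_smul]
  abel

theorem lineSwap_apply (P : Matrix ι ι K) (w u : ι → K) (i j : ι) :
    lineSwap P w u i j = P i j - w i * star (w j) + (star u ⬝ᵥ u)⁻¹ * (u i * star (u j)) := by
  simp [lineSwap, vecMulVec_apply]

theorem lineSwap_self (P : Matrix ι ι K) {w : ι → K} (hw : star w ⬝ᵥ w = 1) :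
    lineSwap P w w = P := by
  rw [lineSwap, hw, inv_one, one_smul, sub_add_cancel]

variable {Q : Matrix ι ι K} {u : ι → K}

theorem isHermitian_add_inv_smul_vecMulVec (hQ : Q.IsHermitian) (u : ι → K) :
    (Q + (star u ⬝ᵥ u)⁻¹ • vecMulVec u (star u)).IsHermitian := by
  rw [IsHermitian, conjTranspose_add, hQ.eq, conjTranspose_smul, conjTranspose_vecMulVec,
    star_star, star_inv₀, ← star_dotProduct_star, star_star]

theorem add_inv_smul_vecMulVec_mul_self (hQ : Q.IsHermitian) (hQQ : IsIdempotentElem Q)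
    (hQu : Q *ᵥ u = 0) : (Q + (star u ⬝ᵥ u)⁻¹ • vecMulVec u (star u)) * Q = Q := by
  rw [add_mul, hQQ.eq, smul_mul_assoc, vecMulVec_mul, hQ.star_vecMul, hQu, star_zero,
    vecMulVec_zero, smul_zero, add_zero]

theorem add_inv_smul_vecMulVec_mulVec (hQu : Q *ᵥ u = 0) (hu : star u ⬝ᵥ u ≠ 0) :
    (Q + (star u ⬝ᵥ u)⁻¹ • vecMulVec u (star u)) *ᵥ u = u := by
  rw [add_mulVec, hQu, zero_add, smul_mulVec, vecMulVec_mulVec, op_smul_eq_smul,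
    inv_smul_smul₀ hu]

end LineSwap

-- Witness: an entry `(i, j)` with `w i ≠ 0` (so `d i i = 1`) and `b j ≠ 0` (so `d j j = 0`).
theorem not_commute_lineSwap {ι : Type*} [Fintype ι] [DecidableEq ι]
    {P d : Matrix ι ι ℂ} {w b : ι → ℂ} (hd : d.IsDiag) (hdP : Commute d P) (hdw : d *ᵥ w = w)
    (hdb : d *ᵥ b = 0) (hw : w ≠ 0) (hb : b ≠ 0) {ε : ℂ} (hε : ε ≠ 0) :
    ¬Commute d (lineSwap P w (w + ε • b)) := by
  obtain ⟨i, hi⟩ := Function.ne_iff.1 hw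
  obtain ⟨j, hj⟩ := Function.ne_iff.1 hb
  have hwi := congrFun hdw i
  have hwj := congrFun hdw j
  have hbi := congrFun hdb i
  have hbj := congrFun hdb j
  simp only [hd.mulVec_apply, Pi.zero_apply, mul_eq_zero] at hwi hwj hbi hbj hi hj
  have hdi : d i i = 1 := (mul_eq_right₀ hi).1 hwi
  have hdj : d j j = 0 := hbj.resolve_right hj
  have hdij : d i i ≠ d j j := by rw [hdi, hdj]; exact one_ne_zero
  have hwj : w j = 0 := by rw [← hwj, hdj, zero_mul]
  have hbi : b i = 0 := hbi.resolve_left (by rw [hdi]; exact one_ne_zero)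
  have hPij : P i j = 0 := by_contra fun h => hdij (hd.commute_iff.1 hdP i j h)
  have hu : star (w + ε • b) ⬝ᵥ (w + ε • b) ≠ 0 := by
    rw [Ne, dotProduct_star_self_eq_zero, funext_iff, not_forall]
    exact ⟨i, by simp [hbi, hi]⟩
  intro h
  refine hdij (hd.commute_iff.1 h i j ?_)
  rw [lineSwap_apply, hPij, hwj, star_zero, mul_zero, sub_zero, zero_add]
  simp only [Pi.add_apply, Pi.smul_apply, smul_eq_mul, hbi, hwj, mul_zero, add_zero, zero_add]
  exact mul_ne_zero (inv_ne_zero hu) (mul_ne_zero hi (star_ne_zero.2 (mul_ne_zero hε hj)))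

section Shear

variable {ι R : Type*} [Fintype ι] [CommRing R]

-- `(1 + ε ζ vᵀ) m`
def shear (ε : R) (ζ v : ι → R) (m : Matrix ι ι R) : Matrix ι ι R :=
  m + ε • vecMulVec ζ (v ᵥ* m)

variable {m : Matrix ι ι R} {ζ v : ι → R}

theorem mul_shear (hm : IsIdempotentElem m) (hmζ : m *ᵥ ζ = 0) (ε : R) (v : ι → R) :
    m * shear ε ζ v m = m := by
  rw [shear, mul_add, hm.eq, mul_smul_comm, mul_vecMulVec, hmζ, zero_vecMulVec, smul_zero,
    add_zero]

theorem shear_mul (hm : IsIdempotentElem m) (ε : R) (ζ v : ι → R) :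
    shear ε ζ v m * m = shear ε ζ v m := by
  rw [shear, add_mul, hm.eq, smul_mul_assoc, vecMulVec_mul, vecMul_vecMul, hm.eq]

theorem shear_apply_self [DecidableEq ι] {d : Matrix ι ι R} (hd : d.IsDiag) (hdζ : d *ᵥ ζ = 0)
    (hvd : (v ᵥ* m) ᵥ* d = v ᵥ* m) (ε : R) (i : ι) : shear ε ζ v m i i = m i i := by
  obtain ⟨e, rfl⟩ : ∃ e, d = diagonal e := ⟨_, hd.diagonal_diag.symm⟩
  have hζ := congrFun hdζ i
  have hv := congrFun hvd i
  rw [mulVec_diagonal, Pi.zero_apply] at hζ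
  rw [vecMul_diagonal] at hv
  rw [shear, Matrix.add_apply, Matrix.smul_apply, vecMulVec_apply, ← hv, smul_eq_mul]
  linear_combination ε * (v ᵥ* m) i * hζ

end Shear

section ShearRangeProj

variable {n : ℕ} {P m : Matrix (Fin n) (Fin n) ℂ} {w ζ : Fin n → ℂ}

theorem shear_mul_lineSwap (hP : P.IsHermitian) (hmP : m * P = P) (hPw : P *ᵥ w = w)
    (hw : star w ⬝ᵥ w = 1) (hmζ : m *ᵥ ζ = 0) (hwζ : star w ⬝ᵥ ζ = 0) (ε : ℂ) :
    shear ε ζ (star w) m * lineSwap P w (w + ε • (ζ - P *ᵥ ζ)) =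
      lineSwap P w (w + ε • (ζ - P *ᵥ ζ)) := by
  set u := w + ε • (ζ - P *ᵥ ζ) with hu
  have hmw : m *ᵥ w = w := by rw [← hPw, mulVec_mulVec, hmP]
  have hwPζ : star w ⬝ᵥ (P *ᵥ ζ) = 0 := by rw [dotProduct_mulVec, hP.star_vecMul, hPw, hwζ]
  have hwQ : star w ᵥ* (P - vecMulVec w (star w)) = 0 := by
    rw [vecMul_sub, hP.star_vecMul, hPw, vecMul_vecMulVec, hw, one_smul, sub_self]
  have hrQ : shear ε ζ (star w) m * (P - vecMulVec w (star w)) = P - vecMulVec w (star w) := by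
    rw [shear, add_mul, smul_mul_assoc, vecMulVec_mul, vecMul_vecMul, mul_sub, hmP,
      mul_vecMulVec, hmw, hwQ, vecMulVec_zero, smul_zero, add_zero]
  have hmu : m *ᵥ u = w - ε • (P *ᵥ ζ) := by
    rw [hu, mulVec_add, mulVec_smul, mulVec_sub, mulVec_mulVec, hmP, hmζ, hmw, zero_sub,
      smul_neg, sub_eq_add_neg]
  have hru : shear ε ζ (star w) m *ᵥ u = u := by
    rw [shear, add_mulVec, smul_mulVec, vecMulVec_mulVec, op_smul_eq_smul, ← dotProduct_mulVec,
      hmu, dotProduct_sub, dotProduct_smul, hw, hwPζ, smul_zero, sub_zero, one_smul, hu,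
      smul_sub]
    abel
  rw [lineSwap, mul_add, hrQ, mul_smul_comm, mul_vecMulVec, hru]

-- With `Q = P - w w*`, the shear is `(Q + (u + ε Q ζ) w*) m`, and `lineSwap P w u` fixes `Q`
-- and `u`.
theorem rangeProj_shear (hP : P.IsHermitian) (hPm : P * m = m) (hmP : m * P = P)
    (hPw : P *ᵥ w = w) (hw : star w ⬝ᵥ w = 1) (hmζ : m *ᵥ ζ = 0) (hwζ : star w ⬝ᵥ ζ = 0)
    (ε : ℂ) : rangeProj (shear ε ζ (star w) m) = lineSwap P w (w + ε • (ζ - P *ᵥ ζ)) := by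
  have hm : IsIdempotentElem m := isIdempotentElem_of_mul_eq_of_mul_eq hmP hPm
  have hPP : IsIdempotentElem P := isIdempotentElem_of_mul_eq_of_mul_eq hPm hmP
  set Q := P - vecMulVec w (star w)
  set u := w + ε • (ζ - P *ᵥ ζ) with hu
  have hQ : Q.IsHermitian := hP.sub (by simp [IsHermitian])
  have hQQ : IsIdempotentElem Q :=
    isIdempotentElem_sub_vecMulVec hPP hPw (by rw [hP.star_vecMul, hPw]) hw
  have hQ_apply : ∀ v, Q *ᵥ v = P *ᵥ v - (star w ⬝ᵥ v) • w := fun v => by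
    rw [sub_mulVec, vecMulVec_mulVec, op_smul_eq_smul]
  have hPu : P *ᵥ u = w := by
    rw [hu, mulVec_add, mulVec_smul, mulVec_sub, mulVec_mulVec, hPP.eq, sub_self, smul_zero,
      add_zero, hPw]
  have hQu : Q *ᵥ u = 0 := by
    have hwu : star w ⬝ᵥ u = 1 := by
      rw [← hPw, ← hP.star_vecMul, ← dotProduct_mulVec, hPu, hw]
    rw [hQ_apply, hPu, hwu, one_smul, sub_self]
  have hu0 : star u ⬝ᵥ u ≠ 0 := by
    rw [Ne, dotProduct_star_self_eq_zero]
    rintro hu0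
    rw [hu0, mulVec_zero] at hPu
    simp [← hPu] at hw
  have hMQ : lineSwap P w u * Q = Q := add_inv_smul_vecMulVec_mul_self hQ hQQ hQu
  have hMu : lineSwap P w u *ᵥ u = u := add_inv_smul_vecMulVec_mulVec hQu hu0
  have hr : shear ε ζ (star w) m = (Q + vecMulVec (u + ε • Q *ᵥ ζ) (star w)) * m := by
    rw [hQ_apply, hwζ, zero_smul, sub_zero, hu, smul_sub, add_assoc, sub_add_cancel]
    simp only [shear, Q, add_mul, sub_mul, hPm, smul_mul_assoc, vecMulVec_mul, add_vecMulVec,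
      smul_vecMulVec]
    abel
  refine rangeProj_eq_of (isIdempotentElem_of_mul_eq_self_of_mul_eq_self (shear_mul hm ε ζ _)
    (mul_shear hm hmζ ε _)) (isHermitian_add_inv_smul_vecMulVec hQ u) ?_
    (shear_mul_lineSwap hP hmP hPw hw hmζ hwζ ε)
  rw [hr, ← mul_assoc, mul_add, hMQ, mul_vecMulVec, mulVec_add, hMu, mulVec_smul, mulVec_mulVec,
    hMQ]

end ShearRangeProj

theorem exists_ne_forall_apply_ne_zero {X Y ι : Type*} [TopologicalSpace X] [TopologicalSpace Y]
    [T1Space Y] [Zero Y] [Finite ι] {x₀ : X} [(𝓝[{x₀}ᶜ] x₀).NeBot] {f : ι → X → Y}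
    (hf : ∀ k, ContinuousAt (f k) x₀) :
    ∃ x ≠ x₀, ∀ k, f k x₀ ≠ 0 → f k x ≠ 0 := by
  have hev : ∀ᶠ x in 𝓝 x₀, ∀ k, f k x₀ ≠ 0 → f k x ≠ 0 :=
    eventually_all.2 fun k => by
      by_cases hk : f k x₀ = 0
      · exact Eventually.of_forall fun _ h => absurd hk h
      · exact ((hf k).eventually_ne hk).mono fun _ h _ => h
  have hev' : ∀ᶠ x in 𝓝[{x₀}ᶜ] x₀, (∀ k, f k x₀ ≠ 0 → f k x ≠ 0) ∧ x ∈ ({x₀}ᶜ : Set X) :=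
    (eventually_nhdsWithin_of_eventually_nhds hev).and self_mem_nhdsWithin
  obtain ⟨x, hx, hx₀⟩ := hev'.exists
  exact ⟨x, hx₀, hx⟩

section Construction

variable {n : ℕ} {P m d : Matrix (Fin n) (Fin n) ℂ} {w x : Fin n → ℂ}

theorem exists_shear_rangeProj (hP : P.IsHermitian) (hPm : P * m = m) (hmP : m * P = P)
    (hd : d.IsDiag) (hdH : d.IsHermitian) (hdP : Commute d P) (hdm : Commute d m)
    (hdw : d *ᵥ w = w) (hPw : P *ᵥ w = w) (hw : star w ⬝ᵥ w = 1)
    (hdx : d *ᵥ x = 0) (hPx : P *ᵥ x ≠ x) :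
    ∃ r, m * r = m ∧ r * m = r ∧ (∀ i, r i i = m i i) ∧
      (∀ i j, P i j ≠ 0 → rangeProj r i j ≠ 0) ∧ ¬Commute d (rangeProj r) := by
  have hm : IsIdempotentElem m := isIdempotentElem_of_mul_eq_of_mul_eq hmP hPm
  set ζ := x - m *ᵥ x with hζ
  have hmζ : m *ᵥ ζ = 0 := by rw [hζ, mulVec_sub, mulVec_mulVec, hm.eq, sub_self]
  have hdζ : d *ᵥ ζ = 0 := by
    rw [hζ, mulVec_sub, mulVec_mulVec, hdm.eq, ← mulVec_mulVec, hdx, mulVec_zero, sub_zero]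
  have hwd : star w ᵥ* d = star w := by rw [hdH.star_vecMul, hdw]
  have hwζ : star w ⬝ᵥ ζ = 0 := by rw [← hwd, ← dotProduct_mulVec, hdζ, dotProduct_zero]
  have hb : ζ - P *ᵥ ζ = x - P *ᵥ x := by
    rw [hζ, mulVec_sub, mulVec_mulVec, hPm]; abel
  have hb0 : x - P *ᵥ x ≠ 0 := by rwa [Ne, sub_eq_zero, eq_comm]
  have hdb : d *ᵥ (x - P *ᵥ x) = 0 := by
    rw [mulVec_sub, mulVec_mulVec, hdP.eq, ← mulVec_mulVec, hdx, mulVec_zero, sub_self]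
  have hF : ∀ ε, rangeProj (shear ε ζ (star w) m) = lineSwap P w (w + ε • (x - P *ᵥ x)) :=
    fun ε => by rw [rangeProj_shear hP hPm hmP hPw hw hmζ hwζ ε, hb]
  -- Small perturbations keep the nonzero entries of `lineSwap P w w = P` nonzero.
  obtain ⟨ε, hε0, hε⟩ := exists_ne_forall_apply_ne_zero (x₀ := (0 : ℂ))
    (f := fun ij : Fin n × Fin n => fun ε => lineSwap P w (w + ε • (x - P *ᵥ x)) ij.1 ij.2)
    fun ij => by
      simp only [lineSwap_apply]
      fun_prop (disch := simp [hw])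
  refine ⟨shear ε ζ (star w) m, mul_shear hm hmζ ε _, shear_mul hm ε ζ _,
    shear_apply_self hd hdζ ?_ ε, fun i j hPij => ?_, ?_⟩
  · rw [vecMul_vecMul, ← hdm.eq, ← vecMul_vecMul, hwd]
  · simpa [hF, lineSwap_self P hw] using hε (i, j) (by simpa [lineSwap_self P hw] using hPij)
  · rw [hF]
    exact not_commute_lineSwap hd hdP hdw hdb (fun h => by simp [h] at hw) hb0 hε0

theorem exists_pinch_shear {q : Matrix (Fin n) (Fin n) ℂ} (hq : IsIdempotentElem q)
    (hd : d.IsDiag) (hdH : d.IsHermitian) (hdd : IsIdempotentElem d)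
    (hdP : Commute d (rangeProj q)) (h₁ : d * rangeProj q ≠ 0)
    (h₂ : (1 - d) * (1 - rangeProj q) ≠ 0) :
    ∃ r m : Matrix (Fin n) (Fin n) ℂ, q * m = m ∧ m * q = q ∧ m * r = m ∧ r * m = r ∧
      (∀ i, m i i = q i i) ∧ (∀ i, r i i = m i i) ∧
      (∀ i j, rangeProj q i j ≠ 0 → rangeProj r i j ≠ 0) ∧ ¬Commute d (rangeProj r) := by
  set P := rangeProj q
  have hPH : P.IsHermitian := isHermitian_rangeProj hq
  have hPq : P * q = q := rangeProj_mul hq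
  have hqP : q * P = P := mul_rangeProj hq
  have hPm : P * pinch d q = pinch d q := mul_pinch hdP hPq
  have hmP : pinch d q * P = P := pinch_mul hdd hdP hqP
  obtain ⟨v, hv⟩ : ∃ v, (d * P) *ᵥ v ≠ 0 := by simpa [ext_iff_mulVec] using h₁
  obtain ⟨c, hw⟩ := exists_smul_star_dotProduct_self_eq_one hv
  have hdw : d *ᵥ (c • (d * P) *ᵥ v) = c • (d * P) *ᵥ v := by
    rw [mulVec_smul, mulVec_mulVec, ← mul_assoc, hdd.eq]
  have hPw : P *ᵥ (c • (d * P) *ᵥ v) = c • (d * P) *ᵥ v := by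
    rw [mulVec_smul, mulVec_mulVec, ← mul_assoc, ← hdP.eq, mul_assoc,
      (isIdempotentElem_rangeProj hq).eq]
  obtain ⟨y, hy⟩ : ∃ y, ((1 - P) * (1 - d)) *ᵥ y ≠ 0 := by
    have h : (1 - P) * (1 - d) ≠ 0 := fun h => h₂ <| by
      rw [← conjTranspose_conjTranspose ((1 - d) * (1 - P)), conjTranspose_mul, conjTranspose_sub,
        conjTranspose_sub, conjTranspose_one, hdH.eq, hPH.eq, h, conjTranspose_zero]
    simpa [ext_iff_mulVec] using h
  have hdx : d *ᵥ ((1 - d) *ᵥ y) = 0 := by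
    rw [mulVec_mulVec, mul_sub, mul_one, hdd.eq, sub_self, zero_mulVec]
  have hPx : P *ᵥ ((1 - d) *ᵥ y) ≠ (1 - d) *ᵥ y := fun h => hy <| by
    rw [← mulVec_mulVec, sub_mulVec, one_mulVec, h, sub_self]
  obtain ⟨r, hmr, hrm, hrdiag, hsupp, hnc⟩ :=
    exists_shear_rangeProj hPH hPm hmP hd hdH hdP (commute_pinch hdd q) hdw hPw hw hdx hPx
  have hqm : q * pinch d q = pinch d q := by rw [← hPm, ← mul_assoc, hqP]
  have hmq : pinch d q * q = q := by nth_rw 2 [← hPq]; rw [← mul_assoc, hmP, hPq]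
  exact ⟨r, pinch d q, hqm, hmq, hmr, hrm, pinch_apply_self hd hdd q, hrdiag, hsupp, hnc⟩

end Construction

/-- If `q` is a nontrivial idempotent whose range projection commutes with some
non-scalar diagonal matrix (i.e. `dim({[q]}′ ∩ D_n) > 1`), then there is an idempotent
`r` with the same diagonal as `q`, with `{[r]}′ ∩ D_n` strictly contained in
`{[q]}′ ∩ D_n`, joined to `q` by a piecewise affine path of at most two segments inside
the set of idempotents with the diagonal of `q`. -/
theorem reduction_step (n : ℕ) (q : Matrix (Fin n) (Fin n) ℂ)
    (hq : q * q = q) (h0 : q ≠ 0) (h1 : q ≠ 1)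
    (hdim : ∃ c : Matrix (Fin n) (Fin n) ℂ, c.IsDiag ∧
      c * rangeProj q = rangeProj q * c ∧ ¬∃ z : ℂ, c = z • 1) :
    ∃ r m : Matrix (Fin n) (Fin n) ℂ,
      r * r = r ∧ (∀ i, r i i = q i i) ∧
      (∀ c : Matrix (Fin n) (Fin n) ℂ, c.IsDiag →
        c * rangeProj r = rangeProj r * c → c * rangeProj q = rangeProj q * c) ∧
      (∃ c : Matrix (Fin n) (Fin n) ℂ, c.IsDiag ∧
        c * rangeProj q = rangeProj q * c ∧ c * rangeProj r ≠ rangeProj r * c) ∧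
      (∀ t : ℝ, 0 ≤ t → t ≤ 1 →
        (((1 - t : ℂ) • q + (t : ℂ) • m) * ((1 - t : ℂ) • q + (t : ℂ) • m) =
            (1 - t : ℂ) • q + (t : ℂ) • m ∧
          (∀ i, ((1 - t : ℂ) • q + (t : ℂ) • m) i i = q i i)) ∧
        (((1 - t : ℂ) • m + (t : ℂ) • r) * ((1 - t : ℂ) • m + (t : ℂ) • r) =
            (1 - t : ℂ) • m + (t : ℂ) • r ∧
          (∀ i, ((1 - t : ℂ) • m + (t : ℂ) • r) i i = q i i))) := by
  obtain ⟨c, hc, hcP, hcs⟩ := hdim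
  have hP0 : rangeProj q ≠ 0 := fun h => h0 (by rw [← rangeProj_mul hq, h, zero_mul])
  have hP1 : rangeProj q ≠ 1 := fun h => h1 (by rw [← mul_one q, ← h]; exact mul_rangeProj hq)
  obtain ⟨d, hd, hdH, hdd, hdP, h₁, h₂⟩ := hc.exists_projection_mul_ne_zero hcP hcs hP0 hP1
  obtain ⟨r, m, hqm, hmq, hmr, hrm, hmdiag, hrdiag, hsupp, hnc⟩ :=
    exists_pinch_shear hq hd hdH hdd hdP h₁ h₂
  refine ⟨r, m, isIdempotentElem_of_mul_eq_self_of_mul_eq_self hrm hmr,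
    fun i => (hrdiag i).trans (hmdiag i), fun c hc h => hc.commute_of_apply_ne_zero hsupp h,
    ⟨d, hd, hdP, hnc⟩, fun t _ _ => ?_⟩
  have hst : (1 - t : ℂ) + t = 1 := sub_add_cancel 1 _
  refine ⟨⟨(isIdempotentElem_smul_add_smul_of_mul_eq_right hqm hmq hst).eq, fun i => ?_⟩,
    (isIdempotentElem_smul_add_smul_of_mul_eq_left hmr hrm hst).eq, fun i => ?_⟩ <;>
  simp only [Matrix.add_apply, Matrix.smul_apply, smul_eq_mul, hrdiag, hmdiag, ← add_mul, hst,
    one_mul]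
end

section
/- Let d = cos²θ · e + sin²θ · e^⊥ where e is a diagonal rank-n projection in M_{2n}(ℂ) and θ ∈ [0, π/2]. Then the set of orthogonal projections p in M_{2n}(ℂ) with E(p) = d is path-connected. -/
/-!
Write a projection as `p = (1 + x) / 2` and reorder the coordinates so that `e = 1 ⊕ 0`. The set
becomes the set of self-adjoint unitaries `x = [[a, b], [b*, -d]]` in which `a` and `d` have
constant diagonal `γ = cos 2θ`. The relations `x² = 1` say that `b` intertwines `a` and `d` and that
`b b* = 1 - a²`, `b* b = 1 - d²`. As in Halmos' two-subspace theorem there is then a unitary `W`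
with `d = W* a W` and `b = √(1 - a²) W`: the polar part of `b` matches the spectra of `a` and `d`
away from `±1`, and the eigenvalues `±1` have the same multiplicities in `a` and `d` because
`tr a = tr d`. Deforming `a` affinely to `γ` fixes both diagonals and moves `x` to
`[[γ, √(1 - γ²) W], [√(1 - γ²) W*, -γ]]`. Since the unitary group is path-connected, `W` can then be
moved to `1`.
-/

open Matrix

namespace TwoValuedDiagonal

variable {m : Type*} [Fintype m] [DecidableEq m]

lemma conjTranspose_mul_self_of_mem_unitary {v : Matrix m m ℂ}
    (hv : v ∈ unitary (Matrix m m ℂ)) : vᴴ * v = 1 :=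
  Unitary.star_mul_self_of_mem hv

lemma mul_conjTranspose_self_of_mem_unitary {v : Matrix m m ℂ}
    (hv : v ∈ unitary (Matrix m m ℂ)) : v * vᴴ = 1 :=
  Unitary.mul_star_self_of_mem hv

/-! ### The unitary group is path-connected -/

lemma mem_unitary_of_norm_eq_one {z : ℂ} (hz : ‖z‖ = 1) : z ∈ unitary ℂ := by
  rw [Unitary.mem_iff, mul_comm, and_self, RCLike.star_def, Complex.mul_conj', hz]
  simp

lemma isPathConnected_sphere_zero_one : IsPathConnected (Metric.sphere (0 : ℂ) 1) :=
  isPathConnected_sphere (by simp [Complex.rank_real_complex]) 0 zero_le_one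

open scoped Matrix.Norms.L2Operator in
lemma joinedIn_unitary_one_of_neg_one_notMem_spectrum {U : Matrix m m ℂ}
    (hU : U ∈ unitary (Matrix m m ℂ)) (h : -1 ∉ spectrum ℂ U) :
    JoinedIn (unitary (Matrix m m ℂ) : Set (Matrix m m ℂ)) 1 U := by
  rw [joinedIn_iff_joined (one_mem _) hU]
  exact Unitary.joined 1 ⟨U, hU⟩ ((Unitary.norm_sub_one_lt_two_iff hU).2 h)

/-- The spectrum of `U` is finite, so some phase `z` puts `-1` outside the spectrum of `z • U`,
which is then joined to `1` by an exponential path. -/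
theorem isPathConnected_unitary :
    IsPathConnected (unitary (Matrix m m ℂ) : Set (Matrix m m ℂ)) := by
  refine ⟨1, one_mem _, fun {U} hU => ?_⟩
  obtain ⟨w, hw, hwU⟩ := (isPathConnected_sphere_zero_one.isConnected.isPreconnected
    |>.infinite_of_nontrivial ⟨1, by simp, -1, by simp, by norm_num⟩).exists_notMem_finite
    (Matrix.finite_spectrum U)
  rw [mem_sphere_zero_iff_norm] at hw
  have hw₀ : w ≠ 0 := by rintro rfl; simp at hw
  have hphase : JoinedIn (unitary (Matrix m m ℂ) : Set (Matrix m m ℂ)) ((-w⁻¹) • U) U := by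
    have := (isPathConnected_sphere_zero_one.joinedIn (-w⁻¹) (by simpa using hw) 1
      (by simp)).map (f := fun z : ℂ => z • U) (by fun_prop)
    rw [one_smul] at this
    refine this.mono ?_
    rintro _ ⟨z, hz, rfl⟩
    exact Unitary.smul_mem_of_mem (mem_unitary_of_norm_eq_one (by simpa using hz)) hU
  refine (joinedIn_unitary_one_of_neg_one_notMem_spectrum
    (Unitary.smul_mem_of_mem (mem_unitary_of_norm_eq_one (by simpa using hw)) hU) ?_).trans hphase
  have hu : IsUnit (-w⁻¹) := by simpa using hw₀
  rw [show (-w⁻¹) • U = hu.unit • U from rfl, spectrum.unit_smul_eq_smul, Set.mem_smul_set]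
  rintro ⟨z, hz, hzw⟩
  obtain rfl : z = w := by
    have : -w⁻¹ * z = -1 := hzw
    field_simp at this
    linear_combination -this
  exact hwU hz

/-! ### Block symmetries -/

def conjDiag (v : Matrix m m ℂ) (f : m → ℝ) : Matrix m m ℂ :=
  v * diagonal (fun i => (f i : ℂ)) * vᴴ

section conjDiag

variable {v : Matrix m m ℂ}

lemma conjDiag_conjTranspose (f : m → ℝ) : (conjDiag v f)ᴴ = conjDiag v f := by
  simp only [conjDiag, conjTranspose_mul, conjTranspose_conjTranspose, diagonal_conjTranspose,
    Matrix.mul_assoc]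
  congr 3
  ext i
  simp

lemma conjDiag_add (f g : m → ℝ) : conjDiag v (f + g) = conjDiag v f + conjDiag v g := by
  simp [conjDiag, ← diagonal_add, Matrix.mul_add, Matrix.add_mul]

lemma conjDiag_mul (hv : v ∈ unitary (Matrix m m ℂ)) (f g : m → ℝ) :
    conjDiag v f * conjDiag v g = conjDiag v (f * g) := by
  simp only [conjDiag, Matrix.mul_assoc]
  rw [← Matrix.mul_assoc vᴴ, conjTranspose_mul_self_of_mem_unitary hv, Matrix.one_mul,
    ← Matrix.mul_assoc (diagonal _), diagonal_mul_diagonal]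
  simp

lemma conjDiag_affine (hv : v ∈ unitary (Matrix m m ℂ)) (f : m → ℝ) (s c : ℝ) :
    conjDiag v (fun i => s * f i + c) = (s : ℂ) • conjDiag v f + (c : ℂ) • 1 := by
  have : diagonal (fun i => ((s * f i + c : ℝ) : ℂ)) =
      (s : ℂ) • diagonal (fun i => (f i : ℂ)) + (c : ℂ) • 1 := by
    ext i j
    rcases eq_or_ne i j with rfl | h <;> simp [diagonal_apply_ne, one_apply_ne, *]
  rw [conjDiag, this, Matrix.mul_add, Matrix.add_mul, Matrix.mul_smul, Matrix.smul_mul,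
    Matrix.mul_smul, Matrix.smul_mul, Matrix.mul_one, mul_conjTranspose_self_of_mem_unitary hv,
    conjDiag]

lemma conjDiag_const (hv : v ∈ unitary (Matrix m m ℂ)) (c : ℝ) :
    conjDiag v (fun _ => c) = (c : ℂ) • 1 := by
  simpa using conjDiag_affine hv 0 0 c

lemma one_sub_conjDiag_mul_self (hv : v ∈ unitary (Matrix m m ℂ)) (f : m → ℝ) :
    1 - conjDiag v f * conjDiag v f = conjDiag v (fun i => 1 - f i ^ 2) := by
  have := conjDiag_affine hv (f * f) (-1) 1
  simp only [Pi.mul_apply, Complex.ofReal_neg, Complex.ofReal_one, neg_smul, one_smul] at this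
  rw [conjDiag_mul hv, show (fun i => 1 - f i ^ 2) = fun i => -1 * (f i * f i) + 1 by
    ext i; ring, this]
  abel

lemma conjTranspose_mul_conjDiag_mul (hv : v ∈ unitary (Matrix m m ℂ)) (f : m → ℝ) :
    vᴴ * conjDiag v f * v = diagonal (fun i => (f i : ℂ)) := by
  simp only [conjDiag, ← Matrix.mul_assoc, conjTranspose_mul_self_of_mem_unitary hv,
    Matrix.one_mul]
  rw [Matrix.mul_assoc, conjTranspose_mul_self_of_mem_unitary hv, Matrix.mul_one]

lemma trace_conjDiag (hv : v ∈ unitary (Matrix m m ℂ)) (f : m → ℝ) :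
    (conjDiag v f).trace = ∑ i, (f i : ℂ) := by
  rw [conjDiag, trace_mul_cycle, conjTranspose_mul_self_of_mem_unitary hv, Matrix.one_mul,
    trace_diagonal]

lemma continuous_conjDiag {X : Type*} [TopologicalSpace X] {f : X → m → ℝ}
    (hf : Continuous f) : Continuous fun x => conjDiag v (f x) := by
  unfold conjDiag
  fun_prop

end conjDiag

lemma exists_eq_conjDiag {a : Matrix m m ℂ} (ha : a.IsHermitian) :
    ∃ v ∈ unitary (Matrix m m ℂ), ∃ f : m → ℝ, a = conjDiag v f := by
  refine ⟨ha.eigenvectorUnitary, ha.eigenvectorUnitary.2, ha.eigenvalues, ?_⟩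
  conv_lhs => rw [ha.spectral_theorem]
  rfl

def blockSymm (A S W : Matrix m m ℂ) : Matrix (m ⊕ m) (m ⊕ m) ℂ :=
  fromBlocks A (S * W) (Wᴴ * S) (-(Wᴴ * A * W))

variable (m) in
def symmetriesWithDiag (γ : ℝ) : Set (Matrix (m ⊕ m) (m ⊕ m) ℂ) :=
  {x | x * x = 1 ∧ xᴴ = x ∧ (∀ i, x (.inl i) (.inl i) = γ) ∧ ∀ i, x (.inr i) (.inr i) = -γ}

section blockSymm

variable {A S W : Matrix m m ℂ}

omit [DecidableEq m] in
lemma blockSymm_conjTranspose (hA : Aᴴ = A) (hS : Sᴴ = S) :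
    (blockSymm A S W)ᴴ = blockSymm A S W := by
  simp [blockSymm, fromBlocks_conjTranspose, hA, hS, Matrix.mul_assoc]

lemma blockSymm_mul_self (hAS : A * S = S * A) (hsq : A * A + S * S = 1)
    (hW : W ∈ unitary (Matrix m m ℂ)) : blockSymm A S W * blockSymm A S W = 1 := by
  have hWW := mul_conjTranspose_self_of_mem_unitary hW
  have hWW' := conjTranspose_mul_self_of_mem_unitary hW
  rw [blockSymm, fromBlocks_multiply, ← fromBlocks_one]
  congr 1
  · simp only [Matrix.mul_assoc, ← Matrix.mul_assoc W, hWW, Matrix.one_mul, hsq]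
  · simp only [Matrix.mul_neg, Matrix.mul_assoc, ← Matrix.mul_assoc W, hWW, Matrix.one_mul]
    rw [← Matrix.mul_assoc, hAS, Matrix.mul_assoc, add_neg_cancel]
  · simp only [Matrix.neg_mul, Matrix.mul_assoc, ← Matrix.mul_assoc W, hWW, Matrix.one_mul, hAS,
      add_neg_cancel]
  · calc Wᴴ * S * (S * W) + -(Wᴴ * A * W) * -(Wᴴ * A * W)
        = Wᴴ * (S * S + A * (W * Wᴴ) * A) * W := by noncomm_ring
      _ = 1 := by rw [hWW, Matrix.mul_one, add_comm, hsq, Matrix.mul_one, hWW']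

lemma blockSymm_mem_symmetriesWithDiag {γ : ℝ} (hA : Aᴴ = A) (hS : Sᴴ = S)
    (hAS : A * S = S * A) (hsq : A * A + S * S = 1) (hW : W ∈ unitary (Matrix m m ℂ))
    (hAdiag : ∀ i, A i i = γ) (hDdiag : ∀ i, (Wᴴ * A * W) i i = γ) :
    blockSymm A S W ∈ symmetriesWithDiag m γ :=
  ⟨blockSymm_mul_self hAS hsq hW, blockSymm_conjTranspose hA hS, hAdiag,
    by simp [blockSymm, hDdiag]⟩

end blockSymm

noncomputable def spectralBlockSymm (v : Matrix m m ℂ) (f : m → ℝ) (W : Matrix m m ℂ) :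
    Matrix (m ⊕ m) (m ⊕ m) ℂ :=
  blockSymm (conjDiag v f) (conjDiag v fun i => √(1 - f i ^ 2)) W

section spectralBlockSymm

variable {v W : Matrix m m ℂ} {f : m → ℝ} {γ : ℝ}

lemma spectralBlockSymm_mem_symmetriesWithDiag (hv : v ∈ unitary (Matrix m m ℂ))
    (hW : W ∈ unitary (Matrix m m ℂ)) (hf : ∀ i, f i ^ 2 ≤ 1)
    (hAdiag : ∀ i, conjDiag v f i i = γ) (hDdiag : ∀ i, (Wᴴ * conjDiag v f * W) i i = γ) :
    spectralBlockSymm v f W ∈ symmetriesWithDiag m γ := by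
  refine blockSymm_mem_symmetriesWithDiag (conjDiag_conjTranspose f) (conjDiag_conjTranspose _)
    (by rw [conjDiag_mul hv, conjDiag_mul hv, mul_comm]) ?_ hW hAdiag hDdiag
  have hsq : f * f + (fun i => √(1 - f i ^ 2)) * (fun i => √(1 - f i ^ 2)) = fun _ => 1 := by
    ext i
    rw [Pi.add_apply, Pi.mul_apply, Pi.mul_apply, Real.mul_self_sqrt (sub_nonneg.2 (hf i))]
    ring
  rw [conjDiag_mul hv, conjDiag_mul hv, ← conjDiag_add, hsq, conjDiag_const hv,
    Complex.ofReal_one, one_smul]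

lemma spectralBlockSymm_const (hv : v ∈ unitary (Matrix m m ℂ)) (c : ℝ) :
    spectralBlockSymm v (fun _ => c) W = spectralBlockSymm 1 (fun _ => c) W := by
  simp only [spectralBlockSymm, conjDiag_const hv, conjDiag_const (one_mem _)]

lemma continuous_spectralBlockSymm_left {X : Type*} [TopologicalSpace X] {f : X → m → ℝ}
    (hf : Continuous f) : Continuous fun x => spectralBlockSymm v (f x) W := by
  have hA := continuous_conjDiag (v := v) hf
  have hS := continuous_conjDiag (v := v) (f := fun x i => √(1 - f x i ^ 2)) (by fun_prop)
  unfold spectralBlockSymm blockSymm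
  fun_prop

lemma continuous_spectralBlockSymm_right : Continuous fun W => spectralBlockSymm v f W := by
  unfold spectralBlockSymm blockSymm
  fun_prop

lemma convexComb_sq_le_one {x y t : ℝ} (hx : x ^ 2 ≤ 1) (hy : y ^ 2 ≤ 1) (ht₀ : 0 ≤ t)
    (ht₁ : t ≤ 1) : ((1 - t) * x + t * y) ^ 2 ≤ 1 := by
  rw [sq_le_one_iff_abs_le_one] at *
  calc |(1 - t) * x + t * y| ≤ (1 - t) * |x| + t * |y| := by
        simpa [abs_mul, abs_of_nonneg ht₀, abs_of_nonneg (sub_nonneg.2 ht₁)] using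
          abs_add_le ((1 - t) * x) (t * y)
    _ ≤ (1 - t) * 1 + t * 1 := by gcongr
    _ = 1 := by ring

/-- Moving the eigenvalues of the corner `a` affinely towards `γ` keeps the diagonals of both
`a` and `W* a W` equal to `γ`. -/
lemma joinedIn_spectralBlockSymm_const (hγ : γ ^ 2 ≤ 1) (hv : v ∈ unitary (Matrix m m ℂ))
    (hW : W ∈ unitary (Matrix m m ℂ)) (hf : ∀ i, f i ^ 2 ≤ 1)
    (hx : spectralBlockSymm v f W ∈ symmetriesWithDiag m γ) :
    JoinedIn (symmetriesWithDiag m γ) (spectralBlockSymm v f W)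
      (spectralBlockSymm 1 (fun _ => γ) W) := by
  have hAdiag (i : m) : conjDiag v f i i = γ := hx.2.2.1 i
  have hDdiag (i : m) : (Wᴴ * conjDiag v f * W) i i = γ := by
    simpa [spectralBlockSymm, blockSymm] using hx.2.2.2 i
  refine JoinedIn.ofLine
    (f := fun t : ℝ => spectralBlockSymm v (fun i => (1 - t) * f i + t * γ) W)
    (continuous_spectralBlockSymm_left (by fun_prop)).continuousOn (by simp)
    (by simp [spectralBlockSymm_const hv]) ?_
  rintro _ ⟨t, ⟨ht₀, ht₁⟩, rfl⟩
  have hAt := conjDiag_affine hv f (1 - t) (t * γ)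
  refine spectralBlockSymm_mem_symmetriesWithDiag hv hW
    (fun i => convexComb_sq_le_one (hf i) hγ ht₀ ht₁) (fun i => ?_) (fun i => ?_)
  · rw [hAt, Matrix.add_apply, Matrix.smul_apply, Matrix.smul_apply, hAdiag, one_apply_eq,
      smul_eq_mul, smul_eq_mul]
    push_cast
    ring
  · rw [hAt, Matrix.mul_add, Matrix.add_mul, Matrix.mul_smul, Matrix.smul_mul, Matrix.mul_smul,
      Matrix.smul_mul, Matrix.mul_one, conjTranspose_mul_self_of_mem_unitary hW,
      Matrix.add_apply, Matrix.smul_apply, Matrix.smul_apply, hDdiag, one_apply_eq, smul_eq_mul,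
      smul_eq_mul]
    push_cast
    ring

lemma joinedIn_spectralBlockSymm_one (hγ : γ ^ 2 ≤ 1) (hW : W ∈ unitary (Matrix m m ℂ)) :
    JoinedIn (symmetriesWithDiag m γ) (spectralBlockSymm 1 (fun _ => γ) W)
      (spectralBlockSymm 1 (fun _ => γ) 1) := by
  refine ((isPathConnected_unitary.joinedIn W hW 1 (one_mem _)).map
    continuous_spectralBlockSymm_right).mono ?_
  rintro _ ⟨U, hU, rfl⟩
  refine spectralBlockSymm_mem_symmetriesWithDiag (one_mem _) hU (fun _ => hγ) (fun i => ?_)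
    (fun i => ?_)
  · simp [conjDiag_const (one_mem _)]
  · simp [conjDiag_const (one_mem _), conjTranspose_mul_self_of_mem_unitary hU]

end spectralBlockSymm

/-! ### Intertwiners between real diagonal matrices -/

section intertwiner

variable {μ ν : m → ℝ} {M : Matrix m m ℂ}

lemma eq_of_diagonal_mul_eq_mul_diagonal
    (hM : diagonal (fun i => (μ i : ℂ)) * M = M * diagonal (fun j => (ν j : ℂ))) {i j : m}
    (hij : M i j ≠ 0) : μ i = ν j := by
  have h := congr_fun₂ hM i j
  simp only [diagonal_mul, mul_diagonal, mul_comm (M i j), mul_eq_mul_right_iff,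
    Complex.ofReal_inj] at h
  exact h.resolve_right hij

lemma diagonal_comp_mul_eq_mul_diagonal_comp (hM : ∀ i j, M i j ≠ 0 → μ i = ν j) (g : ℝ → ℂ) :
    diagonal (fun i => g (μ i)) * M = M * diagonal (fun j => g (ν j)) := by
  ext i j
  rw [diagonal_mul, mul_diagonal]
  by_cases h : M i j = 0
  · simp [h]
  · rw [hM i j h, mul_comm]

lemma sum_normSq_eq_of_mul_conjTranspose_eq_diagonal {r : m → ℝ}
    (hM : M * Mᴴ = diagonal (fun i => (r i : ℂ))) (i : m) :
    ∑ j, Complex.normSq (M i j) = r i := by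
  have h := congr_fun₂ hM i i
  simp only [mul_apply, conjTranspose_apply, RCLike.star_def, Complex.mul_conj,
    diagonal_apply_eq] at h
  exact_mod_cast h

lemma nonneg_of_mul_conjTranspose_eq_diagonal {r : m → ℝ}
    (hM : M * Mᴴ = diagonal (fun i => (r i : ℂ))) (i : m) : 0 ≤ r i :=
  sum_normSq_eq_of_mul_conjTranspose_eq_diagonal hM i ▸
    Finset.sum_nonneg fun _ _ => Complex.normSq_nonneg _

lemma eq_zero_of_mul_conjTranspose_eq_diagonal {r : m → ℝ}
    (hM : M * Mᴴ = diagonal (fun i => (r i : ℂ))) {i : m} (hi : r i = 0) (j : m) :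
    M i j = 0 := by
  have h := sum_normSq_eq_of_mul_conjTranspose_eq_diagonal hM i
  rw [hi, Finset.sum_eq_zero_iff_of_nonneg fun j _ => Complex.normSq_nonneg _] at h
  exact Complex.normSq_eq_zero.1 (h j (Finset.mem_univ j))

variable (hM : ∀ i j, M i j ≠ 0 → μ i = ν j)
  (hMM : M * Mᴴ = diagonal (fun i => ((1 - μ i ^ 2 : ℝ) : ℂ)))
  (hMM' : Mᴴ * M = diagonal (fun j => ((1 - ν j ^ 2 : ℝ) : ℂ)))
include hM hMM hMM'

/-- `g = (g / (1 - x²)) (1 - x²)` on `[-1, 1]`, and `1 - μᵢ²`, `1 - νⱼ²` are the row and column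
sums of `|Mᵢⱼ|²`. -/
lemma sum_comp_eq_of_intertwines (g : ℝ → ℝ) (hg₁ : g 1 = 0) (hg₂ : g (-1) = 0) :
    ∑ i, g (μ i) = ∑ j, g (ν j) := by
  have hMM'' : Mᴴ * Mᴴᴴ = diagonal (fun j => ((1 - ν j ^ 2 : ℝ) : ℂ)) := by
    rwa [conjTranspose_conjTranspose]
  have hdiv (x : ℝ) : g x / (1 - x ^ 2) * (1 - x ^ 2) = g x := by
    rcases eq_or_ne (1 - x ^ 2) 0 with h | h
    · rcases sq_eq_one_iff.1 (by linarith : x ^ 2 = 1) with rfl | rfl <;> simp [hg₁, hg₂]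
    · exact div_mul_cancel₀ _ h
  set h : ℝ → ℝ := fun x => g x / (1 - x ^ 2)
  calc ∑ i, g (μ i) = ∑ i, h (μ i) * ∑ j, Complex.normSq (M i j) := by
        simp_rw [sum_normSq_eq_of_mul_conjTranspose_eq_diagonal hMM, h, hdiv]
    _ = ∑ i, ∑ j, h (ν j) * Complex.normSq (M i j) := by
        simp_rw [Finset.mul_sum]
        refine Finset.sum_congr rfl fun i _ => Finset.sum_congr rfl fun j _ => ?_
        by_cases hij : M i j = 0
        · simp [hij]
        · rw [hM i j hij]
    _ = ∑ j, h (ν j) * ∑ i, Complex.normSq (Mᴴ j i) := by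
        simp_rw [Finset.mul_sum, conjTranspose_apply, RCLike.star_def, Complex.normSq_conj]
        exact Finset.sum_comm
    _ = ∑ j, g (ν j) := by
        simp_rw [sum_normSq_eq_of_mul_conjTranspose_eq_diagonal hMM'', h, hdiv]

/-- For `c = ±1`, `(1 + c x) / 2` is the indicator of `x = c` plus a function vanishing at `±1`;
its sum over the eigenvalues only depends on `card m` and the trace. -/
lemma card_eq_of_intertwines (hsum : ∑ i, μ i = ∑ j, ν j) {c : ℝ} (hc : c ^ 2 = 1) :
    Fintype.card {i // μ i = c} = Fintype.card {j // ν j = c} := by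
  classical
  set g : ℝ → ℝ := fun x => if x ^ 2 = 1 then 0 else (1 + c * x) / 2
  have hsplit (f : m → ℝ) :
      ∑ i, (1 + c * f i) / 2 = (Fintype.card {i // f i = c} : ℝ) + ∑ i, g (f i) := by
    rw [Fintype.card_subtype, ← Finset.sum_boole, ← Finset.sum_add_distrib]
    refine Finset.sum_congr rfl fun i _ => ?_
    simp only [g]
    split_ifs with h₁ h₂ h₂
    · subst h₁; linarith
    · exact absurd (h₁ ▸ hc) h₂
    · have hneg : f i = -c :=
        (sq_eq_sq_iff_eq_or_eq_neg.1 (h₂.trans hc.symm)).resolve_left h₁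
      rw [hneg]
      linear_combination -hc / 2
    · ring
  have htotal (f : m → ℝ) : ∑ i, (1 + c * f i) / 2 = (Fintype.card m + c * ∑ i, f i) / 2 := by
    rw [← Finset.sum_div, Finset.sum_add_distrib, ← Finset.mul_sum]
    simp
  have hg := sum_comp_eq_of_intertwines hM hMM hMM' g (by simp [g]) (by simp [g])
  have hμ := hsplit μ
  have hν := hsplit ν
  rw [htotal, hsum] at hμ
  rw [htotal] at hν
  exact_mod_cast (by linarith : (Fintype.card {i // μ i = c} : ℝ) = Fintype.card {j // ν j = c})

end intertwiner

omit [DecidableEq m] in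
lemma exists_perm_of_card_eq {μ ν : m → ℝ}
    (h : ∀ c : ℝ, c ^ 2 = 1 → Fintype.card {i // μ i = c} = Fintype.card {j // ν j = c}) :
    ∃ π : Equiv.Perm m, ∀ i, μ i ^ 2 = 1 → ν (π i) = μ i := by
  classical
  have hfiber (c : ℝ) :
      {a : {i // μ i ^ 2 = 1} // μ a = c} ≃ {b : {j // ν j ^ 2 = 1} // ν b = c} := by
    by_cases hc : c ^ 2 = 1
    · exact (Equiv.subtypeSubtypeEquivSubtype fun h => h ▸ hc).trans <|
        (Fintype.equivOfCardEq (h c hc)).trans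
          (Equiv.subtypeSubtypeEquivSubtype fun h => h ▸ hc).symm
    · have : IsEmpty {a : {i // μ i ^ 2 = 1} // μ a = c} := ⟨fun a => hc (a.2 ▸ a.1.2)⟩
      have : IsEmpty {b : {j // ν j ^ 2 = 1} // ν b = c} := ⟨fun b => hc (b.2 ▸ b.1.2)⟩
      exact Equiv.equivOfIsEmpty _ _
  let ψ : {i // μ i ^ 2 = 1} ≃ {j // ν j ^ 2 = 1} := Equiv.ofFiberEquiv hfiber
  refine ⟨ψ.extendSubtype, fun i hi => ?_⟩
  rw [ψ.extendSubtype_apply_of_mem _ hi]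
  exact Equiv.ofFiberEquiv_map hfiber ⟨i, hi⟩

noncomputable def matchingMatrix (μ : m → ℝ) (π : Equiv.Perm m) : Matrix m m ℂ :=
  of fun i j => if μ i ^ 2 = 1 ∧ π i = j then 1 else 0

section matchingMatrix

variable {μ : m → ℝ} {π : Equiv.Perm m}

lemma mul_conjTranspose_matchingMatrix_apply (A : Matrix m m ℂ) (i i' : m) :
    (A * (matchingMatrix μ π)ᴴ) i i' = if μ i' ^ 2 = 1 then A i (π i') else 0 := by
  split_ifs with h <;>
    simp only [mul_apply, conjTranspose_apply, matchingMatrix, of_apply, h, true_and, false_and,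
      if_false, apply_ite star, star_one, star_zero, mul_ite, mul_one, mul_zero,
      Finset.sum_ite_eq, Finset.mem_univ, if_true, Finset.sum_const_zero]

lemma matchingMatrix_mul_conjTranspose :
    matchingMatrix μ π * (matchingMatrix μ π)ᴴ =
      diagonal (fun i => if μ i ^ 2 = 1 then 1 else 0) := by
  ext i i'
  rw [mul_conjTranspose_matchingMatrix_apply]
  by_cases h : i = i'
  · subst h
    by_cases hi : μ i ^ 2 = 1 <;> simp only [matchingMatrix, of_apply, diagonal_apply_eq, hi,
      true_and, if_true, if_false]
  · simp [matchingMatrix, h]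

end matchingMatrix

/-- Completes the partial isometry `(1 - μ²)^{-1/2} M` by the matching of the `±1`-eigenvalues.
The factor vanishes where `μ i ^ 2 = 1`, since `(√0)⁻¹ = 0` in Lean. -/
noncomputable def polarUnitary (μ : m → ℝ) (M : Matrix m m ℂ) (π : Equiv.Perm m) :
    Matrix m m ℂ :=
  diagonal (fun i => (((√(1 - μ i ^ 2))⁻¹ : ℝ) : ℂ)) * M + matchingMatrix μ π

section polarUnitary

variable {μ ν : m → ℝ} {M : Matrix m m ℂ} {π : Equiv.Perm m}
  (hM : ∀ i j, M i j ≠ 0 → μ i = ν j)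
  (hMM : M * Mᴴ = diagonal (fun i => ((1 - μ i ^ 2 : ℝ) : ℂ)))
  (hMM' : Mᴴ * M = diagonal (fun j => ((1 - ν j ^ 2 : ℝ) : ℂ)))
  (hπ : ∀ i, μ i ^ 2 = 1 → ν (π i) = μ i)

include hMM' hπ in
lemma mul_conjTranspose_matchingMatrix_eq_zero : M * (matchingMatrix μ π)ᴴ = 0 := by
  have hMM'' : Mᴴ * Mᴴᴴ = diagonal (fun j => ((1 - ν j ^ 2 : ℝ) : ℂ)) := by
    rwa [conjTranspose_conjTranspose]
  ext i i'
  rw [mul_conjTranspose_matchingMatrix_apply]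
  split_ifs with h
  · simpa using eq_zero_of_mul_conjTranspose_eq_diagonal hMM'' (i := π i')
      (by rw [hπ i' h, h, sub_self]) i
  · rfl

include hMM hMM' hπ in
lemma polarUnitary_mul_conjTranspose : polarUnitary μ M π * (polarUnitary μ M π)ᴴ = 1 := by
  set D : Matrix m m ℂ := diagonal (fun i => (((√(1 - μ i ^ 2))⁻¹ : ℝ) : ℂ))
  set E := matchingMatrix μ π
  have hΩ : polarUnitary μ M π = D * M + E := rfl
  have hD : Dᴴ = D := by simp [D]
  have hME : M * Eᴴ = 0 := mul_conjTranspose_matchingMatrix_eq_zero hMM' hπ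
  have hEM : E * Mᴴ = 0 := by
    rw [← conjTranspose_conjTranspose E, ← conjTranspose_mul, hME, conjTranspose_zero]
  calc polarUnitary μ M π * (polarUnitary μ M π)ᴴ
      = D * (M * Mᴴ) * D + D * (M * Eᴴ) + E * Mᴴ * D + E * Eᴴ := by
        rw [hΩ, conjTranspose_add, conjTranspose_mul, hD]
        clear_value D E
        noncomm_ring
    _ = diagonal (fun i => (((√(1 - μ i ^ 2))⁻¹ * (1 - μ i ^ 2) * (√(1 - μ i ^ 2))⁻¹ +
          if μ i ^ 2 = 1 then 1 else 0 : ℝ) : ℂ)) := by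
        rw [hMM, hME, hEM, matchingMatrix_mul_conjTranspose]
        simp only [D, diagonal_mul_diagonal, Matrix.mul_zero, Matrix.zero_mul, add_zero,
          diagonal_add]
        congr 1
        ext i
        split_ifs <;> push_cast <;> ring
    _ = 1 := by
        rw [← diagonal_one]
        congr 1
        ext i
        have h₀ : 0 ≤ 1 - μ i ^ 2 := nonneg_of_mul_conjTranspose_eq_diagonal hMM i
        split_ifs with h
        · simp [h]
        · rw [add_zero, mul_comm, ← mul_assoc, ← mul_inv, Real.mul_self_sqrt h₀,
            inv_mul_cancel₀ (sub_ne_zero.2 (Ne.symm h)), Complex.ofReal_one]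

include hM hπ in
lemma eq_of_polarUnitary_apply_ne_zero {i j : m} (h : polarUnitary μ M π i j ≠ 0) :
    μ i = ν j := by
  by_cases hij : M i j = 0
  · have hE : matchingMatrix μ π i j ≠ 0 := by
      simpa [polarUnitary, diagonal_mul, hij] using h
    simp only [matchingMatrix, of_apply, ne_eq, ite_eq_right_iff, not_forall] at hE
    obtain ⟨⟨hi, rfl⟩, -⟩ := hE
    exact (hπ i hi).symm
  · exact hM i j hij

include hMM in
lemma diagonal_sqrt_mul_polarUnitary :
    diagonal (fun i => ((√(1 - μ i ^ 2) : ℝ) : ℂ)) * polarUnitary μ M π = M := by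
  ext i j
  rw [polarUnitary, Matrix.mul_add, Matrix.add_apply, ← Matrix.mul_assoc, diagonal_mul_diagonal,
    diagonal_mul, diagonal_mul]
  have h₀ : 0 ≤ 1 - μ i ^ 2 := nonneg_of_mul_conjTranspose_eq_diagonal hMM i
  by_cases hi : μ i ^ 2 = 1
  · have hi' : 1 - μ i ^ 2 = 0 := by rw [hi, sub_self]
    simp [hi', eq_zero_of_mul_conjTranspose_eq_diagonal hMM hi' j]
  · have hs : √(1 - μ i ^ 2) ≠ 0 :=
      (Real.sqrt_pos.2 (lt_of_le_of_ne h₀ (sub_ne_zero.2 (Ne.symm hi)).symm)).ne'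
    have hE : matchingMatrix μ π i j = 0 := by
      simp only [matchingMatrix, of_apply, hi, false_and, if_false]
    simp [hE, hs]

include hM hMM hMM' in
theorem exists_unitary_intertwiner (hsum : ∑ i, μ i = ∑ j, ν j) :
    ∃ Ω ∈ unitary (Matrix m m ℂ), (∀ i j, Ω i j ≠ 0 → μ i = ν j) ∧
      diagonal (fun i => ((√(1 - μ i ^ 2) : ℝ) : ℂ)) * Ω = M := by
  obtain ⟨π, hπ⟩ :=
    exists_perm_of_card_eq fun c hc => card_eq_of_intertwines hM hMM hMM' hsum hc
  have h := polarUnitary_mul_conjTranspose hMM hMM' hπ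
  exact ⟨polarUnitary μ M π, Unitary.mem_iff.2 ⟨mul_eq_one_comm.1 h, h⟩,
    fun i j => eq_of_polarUnitary_apply_ne_zero hM hπ, diagonal_sqrt_mul_polarUnitary hMM⟩

end polarUnitary

/-! ### Symmetries with two-valued diagonal -/

section twoBlocks

variable {a b d v u : Matrix m m ℂ} {μ ν : m → ℝ}

lemma diagonal_mul_conj_eq_conj_mul_diagonal (hv : v ∈ unitary (Matrix m m ℂ))
    (hu : u ∈ unitary (Matrix m m ℂ)) (h : conjDiag v μ * b = b * conjDiag u ν) :
    diagonal (fun i => (μ i : ℂ)) * (vᴴ * b * u) = vᴴ * b * u * diagonal (fun j => (ν j : ℂ)) := by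
  rw [← conjTranspose_mul_conjDiag_mul hv, ← conjTranspose_mul_conjDiag_mul hu]
  calc vᴴ * conjDiag v μ * v * (vᴴ * b * u) = vᴴ * (conjDiag v μ * b) * u := by
        simp only [Matrix.mul_assoc, ← Matrix.mul_assoc v vᴴ,
          mul_conjTranspose_self_of_mem_unitary hv, Matrix.one_mul]
    _ = vᴴ * b * u * (uᴴ * conjDiag u ν * u) := by
        rw [h]
        simp only [Matrix.mul_assoc, ← Matrix.mul_assoc u uᴴ,
          mul_conjTranspose_self_of_mem_unitary hu, Matrix.one_mul]

lemma conj_mul_conjTranspose_eq_diagonal (hv : v ∈ unitary (Matrix m m ℂ))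
    (hu : u ∈ unitary (Matrix m m ℂ)) (h : b * bᴴ = 1 - conjDiag v μ * conjDiag v μ) :
    vᴴ * b * u * (vᴴ * b * u)ᴴ = diagonal (fun i => ((1 - μ i ^ 2 : ℝ) : ℂ)) := by
  rw [← conjTranspose_mul_conjDiag_mul hv, ← one_sub_conjDiag_mul_self hv, ← h]
  simp only [conjTranspose_mul, conjTranspose_conjTranspose, Matrix.mul_assoc,
    ← Matrix.mul_assoc u uᴴ, mul_conjTranspose_self_of_mem_unitary hu, Matrix.one_mul]

theorem exists_polar_form_of_blocks (ha : a.IsHermitian) (hd : d.IsHermitian)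
    (h₁₁ : a * a + b * bᴴ = 1) (h₁₂ : a * b = b * d) (h₂₂ : bᴴ * b + d * d = 1)
    (htr : a.trace = d.trace) :
    ∃ v ∈ unitary (Matrix m m ℂ), ∃ W ∈ unitary (Matrix m m ℂ), ∃ f : m → ℝ,
      (∀ i, f i ^ 2 ≤ 1) ∧ a = conjDiag v f ∧ b = conjDiag v (fun i => √(1 - f i ^ 2)) * W ∧
        d = Wᴴ * a * W := by
  obtain ⟨v, hv, μ, rfl⟩ := exists_eq_conjDiag ha
  obtain ⟨u, hu, ν, rfl⟩ := exists_eq_conjDiag hd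
  have hMM := conj_mul_conjTranspose_eq_diagonal hv hu (b := b)
    (by rw [← h₁₁, add_sub_cancel_left])
  have hMM' : (vᴴ * b * u)ᴴ * (vᴴ * b * u) = diagonal (fun j => ((1 - ν j ^ 2 : ℝ) : ℂ)) := by
    have := conj_mul_conjTranspose_eq_diagonal hu hv (b := bᴴ)
      (by rw [conjTranspose_conjTranspose, ← h₂₂, add_sub_cancel_right])
    simpa only [conjTranspose_mul, conjTranspose_conjTranspose, Matrix.mul_assoc] using this
  have hsum : ∑ i, μ i = ∑ j, ν j := by
    rw [trace_conjDiag hv, trace_conjDiag hu] at htr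
    exact_mod_cast htr
  have hM : ∀ i j, (vᴴ * b * u) i j ≠ 0 → μ i = ν j := fun i j =>
    eq_of_diagonal_mul_eq_mul_diagonal (diagonal_mul_conj_eq_conj_mul_diagonal hv hu h₁₂)
  obtain ⟨Ω, hΩ, hΩμν, hΩM⟩ := exists_unitary_intertwiner hM hMM hMM' hsum
  have hv₁ := conjTranspose_mul_self_of_mem_unitary hv
  refine ⟨v, hv, v * Ω * uᴴ, mul_mem (mul_mem hv hΩ) (Unitary.star_mem hu), μ,
    fun i => by linarith [nonneg_of_mul_conjTranspose_eq_diagonal hMM i], rfl, ?_, ?_⟩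
  · rw [conjDiag, Matrix.mul_assoc _ vᴴ, ← Matrix.mul_assoc vᴴ, ← Matrix.mul_assoc vᴴ, hv₁,
      Matrix.one_mul, ← Matrix.mul_assoc, Matrix.mul_assoc v, hΩM]
    simp only [Matrix.mul_assoc, mul_conjTranspose_self_of_mem_unitary hu, Matrix.mul_one,
      ← Matrix.mul_assoc v vᴴ, mul_conjTranspose_self_of_mem_unitary hv, Matrix.one_mul]
  · calc conjDiag u ν = u * (Ωᴴ * Ω * diagonal (fun j => (ν j : ℂ))) * uᴴ := by
          rw [conjTranspose_mul_self_of_mem_unitary hΩ, Matrix.one_mul, conjDiag]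
      _ = _ := by
          rw [Matrix.mul_assoc Ωᴴ,
            ← diagonal_comp_mul_eq_mul_diagonal_comp hΩμν (fun x => (x : ℂ)), conjDiag]
          simp only [conjTranspose_mul, conjTranspose_conjTranspose, Matrix.mul_assoc,
            ← Matrix.mul_assoc vᴴ v, hv₁, Matrix.one_mul]

end twoBlocks

lemma exists_eq_spectralBlockSymm {γ : ℝ} {x : Matrix (m ⊕ m) (m ⊕ m) ℂ}
    (hx : x ∈ symmetriesWithDiag m γ) :
    ∃ v ∈ unitary (Matrix m m ℂ), ∃ W ∈ unitary (Matrix m m ℂ), ∃ f : m → ℝ,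
      (∀ i, f i ^ 2 ≤ 1) ∧ x = spectralBlockSymm v f W := by
  obtain ⟨hxx, hxh, hdiag₁, hdiag₂⟩ := hx
  obtain ⟨a, b, c, d, rfl⟩ : ∃ a b c d, x = fromBlocks a b c d :=
    ⟨_, _, _, _, (fromBlocks_toBlocks x).symm⟩
  obtain ⟨ha, rfl, -, hd⟩ := isHermitian_fromBlocks_iff.1 hxh
  rw [fromBlocks_multiply, ← fromBlocks_one, fromBlocks_inj] at hxx
  obtain ⟨h₁₁, h₁₂, -, h₂₂⟩ := hxx
  have htr : a.trace = (-d).trace := by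
    refine Finset.sum_congr rfl fun i _ => ?_
    have h₁ : a i i = γ := hdiag₁ i
    have h₂ : d i i = -γ := hdiag₂ i
    rw [diag_apply, diag_apply, h₁, neg_apply, h₂, neg_neg]
  obtain ⟨v, hv, W, hW, f, hf, rfl, rfl, hdW⟩ := exists_polar_form_of_blocks ha hd.neg h₁₁
    (by rw [Matrix.mul_neg]; exact eq_neg_of_add_eq_zero_left h₁₂) (by rwa [neg_mul_neg]) htr
  refine ⟨v, hv, W, hW, f, hf, ?_⟩
  rw [spectralBlockSymm, blockSymm, ← hdW, neg_neg, conjTranspose_mul, conjDiag_conjTranspose]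

theorem isPathConnected_symmetriesWithDiag {γ : ℝ} (hγ : γ ^ 2 ≤ 1) :
    IsPathConnected (symmetriesWithDiag m γ) := by
  refine ⟨spectralBlockSymm 1 (fun _ => γ) 1,
    (joinedIn_spectralBlockSymm_one hγ (one_mem _)).source_mem, fun {x} hx => ?_⟩
  obtain ⟨v, hv, W, hW, f, hf, rfl⟩ := exists_eq_spectralBlockSymm hx
  exact ((joinedIn_spectralBlockSymm_const hγ hv hW hf hx).trans
    (joinedIn_spectralBlockSymm_one hγ hW)).symm

section reindex

variable {ι : Type*} [Fintype ι] [DecidableEq ι]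

lemma half_smul_one_add_mul_self {y : Matrix ι ι ℂ} (hy : y * y = 1) :
    ((2⁻¹ : ℂ) • (1 + y)) * ((2⁻¹ : ℂ) • (1 + y)) = (2⁻¹ : ℂ) • (1 + y) := by
  have : (1 + y) * (1 + y) = (2 : ℂ) • (1 + y) := by
    calc (1 + y) * (1 + y) = 1 + y + y + y * y := by noncomm_ring
      _ = (2 : ℂ) • (1 + y) := by rw [hy, two_smul]; abel
  rw [Matrix.smul_mul, Matrix.mul_smul, this, smul_smul, smul_smul]
  norm_num

lemma two_smul_sub_one_mul_self {p : Matrix ι ι ℂ} (hp : p * p = p) :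
    ((2 : ℂ) • p - 1) * ((2 : ℂ) • p - 1) = 1 := by
  calc ((2 : ℂ) • p - 1) * ((2 : ℂ) • p - 1)
      = (2 * 2 : ℂ) • (p * p) - (2 : ℂ) • p - (2 : ℂ) • p + 1 := by
        simp only [Matrix.sub_mul, Matrix.mul_sub, Matrix.smul_mul, Matrix.mul_smul,
          Matrix.one_mul, Matrix.mul_one]
        module
    _ = 1 := by rw [hp]; module

theorem isPathConnected_projections_of_equiv (σ : ι ≃ m ⊕ m) {γ : ℝ} (hγ : γ ^ 2 ≤ 1)
    {δ : ι → ℂ}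
    (hδ : ∀ i, δ i = (1 + Sum.elim (fun _ => (γ : ℂ)) (fun _ => -(γ : ℂ)) (σ i)) / 2) :
    IsPathConnected {p : Matrix ι ι ℂ | p * p = p ∧ pᴴ = p ∧ ∀ i, p i i = δ i} := by
  have hdiag {x : Matrix (m ⊕ m) (m ⊕ m) ℂ} (hx : x ∈ symmetriesWithDiag m γ) (i : ι) :
      x (σ i) (σ i) = Sum.elim (fun _ => (γ : ℂ)) (fun _ => -(γ : ℂ)) (σ i) := by
    rcases σ i with k | k
    exacts [hx.2.2.1 k, hx.2.2.2 k]
  convert (isPathConnected_symmetriesWithDiag hγ).image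
    (f := fun x => (2⁻¹ : ℂ) • (1 + x.submatrix σ σ)) (by fun_prop)
  ext p
  constructor
  · rintro ⟨hpp, hph, hpd⟩
    refine ⟨((2 : ℂ) • p - 1).submatrix σ.symm σ.symm, ⟨?_, ?_, fun k => ?_, fun k => ?_⟩, ?_⟩
    · rw [submatrix_mul_equiv, two_smul_sub_one_mul_self hpp, submatrix_one_equiv]
    · simp [conjTranspose_submatrix, hph]
    · simp only [submatrix_apply, Matrix.sub_apply, Matrix.smul_apply, hpd, hδ,
        Equiv.apply_symm_apply, Sum.elim_inl, smul_eq_mul, one_apply_eq]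
      ring
    · simp only [submatrix_apply, Matrix.sub_apply, Matrix.smul_apply, hpd, hδ,
        Equiv.apply_symm_apply, Sum.elim_inr, smul_eq_mul, one_apply_eq]
      ring
    · simp only [submatrix_submatrix, Equiv.symm_comp_self, submatrix_id_id]
      module
  · rintro ⟨x, hx, rfl⟩
    refine ⟨half_smul_one_add_mul_self ?_, ?_, fun i => ?_⟩
    · rw [submatrix_mul_equiv, hx.1, submatrix_one_equiv]
    · simp [conjTranspose_submatrix, hx.2.1]
    · simp only [Matrix.smul_apply, Matrix.add_apply, one_apply_eq, submatrix_apply, hdiag hx,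
        smul_eq_mul, hδ]
      ring

lemma exists_equiv_sum_of_isDiag_of_mul_self {n : ℕ} {e : Matrix ι ι ℂ} (he : e.IsDiag)
    (hee : e * e = e) (hr : e.rank = n) (hcard : Fintype.card ι = 2 * n) :
    ∃ σ : ι ≃ Fin n ⊕ Fin n, ∀ i, e i i = Sum.elim (fun _ => 1) (fun _ => 0) (σ i) := by
  classical
  obtain ⟨d, rfl⟩ : ∃ d, e = diagonal d := ⟨_, he.diagonal_diag.symm⟩
  have hd (i : ι) : d i = 0 ∨ d i = 1 := by
    have h := congr_fun₂ hee i i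
    rw [diagonal_mul_diagonal, diagonal_apply_eq, diagonal_apply_eq] at h
    rcases mul_eq_zero.1 (by linear_combination h : d i * (d i - 1) = 0) with h | h
    exacts [Or.inl h, Or.inr (sub_eq_zero.1 h)]
  have hone : Fintype.card {i // d i = 1} = n := by
    rw [rank_diagonal] at hr
    rw [← hr]
    exact Fintype.card_congr (Equiv.subtypeEquivRight fun i => by
      rcases hd i with h | h <;> simp [h])
  have hzero : Fintype.card {i // ¬d i = 1} = n := by
    rw [Fintype.card_subtype_compl, hone, hcard]
    omega
  refine ⟨(Equiv.sumCompl fun i => d i = 1).symm.trans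
    ((Fintype.equivFinOfCardEq hone).sumCongr (Fintype.equivFinOfCardEq hzero)), fun i => ?_⟩
  by_cases h : d i = 1
  · simp [h]
  · simp [(hd i).resolve_right h]

end reindex

end TwoValuedDiagonal

theorem projections_two_valued_diagonal_pathConnected_general (n : ℕ) (θ : ℝ)
    (e : Matrix (Fin (2 * n)) (Fin (2 * n)) ℂ)
    (he : e.IsDiag) (hee : e * e = e) (hr : e.rank = n) :
    IsPathConnected {p : Matrix (Fin (2 * n)) (Fin (2 * n)) ℂ |
      p * p = p ∧ p.conjTranspose = p ∧
      ∀ i, p i i = ((Real.cos θ ^ 2 : ℝ) : ℂ) * e i i +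
        ((Real.sin θ ^ 2 : ℝ) : ℂ) * (1 - e) i i} := by
  obtain ⟨σ, hσ⟩ :=
    TwoValuedDiagonal.exists_equiv_sum_of_isDiag_of_mul_self he hee hr (Fintype.card_fin _)
  refine TwoValuedDiagonal.isPathConnected_projections_of_equiv σ (Real.cos_sq_le_one (2 * θ))
    fun i => ?_
  rw [Matrix.sub_apply, Matrix.one_apply_eq, hσ i, Real.cos_sq, Real.sin_sq_eq_half_sub]
  rcases σ i with k | k <;> simp only [Sum.elim_inl, Sum.elim_inr] <;> push_cast <;> ring

/-- Let `d = cos²θ · e + sin²θ · e^⊥` where `e` is a diagonal rank-`n` orthogonal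
projection in `M_{2n}(ℂ)` and `θ ∈ [0, π/2]`. Then the set of orthogonal projections
with diagonal `d` is path-connected. -/
theorem projections_two_valued_diagonal_pathConnected (n : ℕ) (θ : ℝ)
    (hθ0 : 0 ≤ θ) (hθ1 : θ ≤ Real.pi / 2)
    (e : Matrix (Fin (2 * n)) (Fin (2 * n)) ℂ)
    (he : e.IsDiag) (hee : e * e = e) (hes : e.conjTranspose = e) (hr : e.rank = n) :
    IsPathConnected {p : Matrix (Fin (2 * n)) (Fin (2 * n)) ℂ |
      p * p = p ∧ p.conjTranspose = p ∧
      ∀ i, p i i = ((Real.cos θ ^ 2 : ℝ) : ℂ) * e i i +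
        ((Real.sin θ ^ 2 : ℝ) : ℂ) * (1 - e) i i} :=
  projections_two_valued_diagonal_pathConnected_general n θ e he hee hr
end
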